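/- arXiv:1503.04688 — 9 statements merged into one kernel-verified Lean document; each statement's English description precedes it below -/
import Mathlib

section
/- For every finite simple digraph G on n vertices together with a sign labeling of its arcs (positive, negative, or null), there exists a function f : {0,1,2,3}ⁿ → {0,1,2,3}ⁿ whose interaction graph is exactly G (with the given signs) and such that f² is constant. -/
/-- `f i` depends essentially on coordinate `j`. -/
def depends {n s : ℕ} (f : (Fin n → Fin s) → (Fin n → Fin s)) (j i : Fin n) : Prop :=
  ∃ x y : Fin n → Fin s, (∀ k, k ≠ j → x k = y k) ∧ f x i ≠ f y i

/-- `f i` is nondecreasing in coordinate `j`. -/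
def nondec {n s : ℕ} (f : (Fin n → Fin s) → (Fin n → Fin s)) (j i : Fin n) : Prop :=
  ∀ x y : Fin n → Fin s, (∀ k, k ≠ j → x k = y k) → x j ≤ y j → f x i ≤ f y i

/-- `f i` is nonincreasing in coordinate `j`. -/
def noninc {n s : ℕ} (f : (Fin n → Fin s) → (Fin n → Fin s)) (j i : Fin n) : Prop :=
  ∀ x y : Fin n → Fin s, (∀ k, k ≠ j → x k = y k) → x j ≤ y j → f y i ≤ f x i

/-- The interaction graph of `f` is exactly the signed digraph with positive, negative and
null in-neighborhoods `Gp i`, `Gn i`, `G0 i`. -/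
def isIG {n s : ℕ} (Gp Gn G0 : Fin n → Finset (Fin n))
    (f : (Fin n → Fin s) → (Fin n → Fin s)) : Prop :=
  (∀ i j, j ∈ Gp i ↔ depends f j i ∧ nondec f j i) ∧
  (∀ i j, j ∈ Gn i ↔ depends f j i ∧ noninc f j i) ∧
  (∀ i j, j ∈ G0 i ↔ depends f j i ∧ ¬ nondec f j i ∧ ¬ noninc f j i)

namespace MyIG

variable {n : ℕ} (Gp Gn G0 : Fin n → Finset (Fin n))

def ok (i : Fin n) (x : Fin n → Fin 4) : Prop :=
  (∀ j ∈ Gp i, 2 ≤ x j) ∧ (∀ j ∈ Gn i, x j < 2) ∧ (∀ j ∈ G0 i, x j = 2)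

instance (i : Fin n) (x : Fin n → Fin 4) : Decidable (ok Gp Gn G0 i x) := by
  unfold ok; infer_instance

def F (x : Fin n → Fin 4) (i : Fin n) : Fin 4 :=
  if ok Gp Gn G0 i x then 1 else 0

def w (i : Fin n) : Fin n → Fin 4 := fun k => if k ∈ Gp i ∪ G0 i then 2 else 0

variable {Gp Gn G0}

lemma F_eq_one {i : Fin n} {x : Fin n → Fin 4} (h : ok Gp Gn G0 i x) : F Gp Gn G0 x i = 1 :=
  if_pos h

lemma F_eq_zero {i : Fin n} {x : Fin n → Fin 4} (h : ¬ ok Gp Gn G0 i x) : F Gp Gn G0 x i = 0 :=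
  if_neg h

lemma F_mono {i : Fin n} {x y : Fin n → Fin 4} (h : ok Gp Gn G0 i x → ok Gp Gn G0 i y) :
    F Gp Gn G0 x i ≤ F Gp Gn G0 y i := by
  by_cases hx : ok Gp Gn G0 i x
  · rw [F_eq_one hx, F_eq_one (h hx)]
  · rw [F_eq_zero hx]; exact Fin.zero_le _

lemma ok_w (hdisj : ∀ i, Disjoint (Gp i) (Gn i) ∧ Disjoint (Gp i) (G0 i) ∧ Disjoint (Gn i) (G0 i))
    (i : Fin n) : ok Gp Gn G0 i (w Gp G0 i) := by
  refine ⟨fun j hj => ?_, fun j hj => ?_, fun j hj => ?_⟩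
  · simp [w, Finset.mem_union, hj]
  · have h1 : j ∉ Gp i := fun h => (hdisj i).1.forall_ne_finset h hj rfl
    have h2 : j ∉ G0 i := fun h => (hdisj i).2.2.forall_ne_finset hj h rfl
    simp only [w, Finset.mem_union]
    rw [if_neg (by tauto)]
    decide
  · simp [w, Finset.mem_union, hj]

/-- If x and y agree off j and j is in none of the sets, then ok transfers. -/
lemma ok_indep {i j : Fin n} (hp : j ∉ Gp i) (hn : j ∉ Gn i) (h0 : j ∉ G0 i)
    {x y : Fin n → Fin 4} (hxy : ∀ k, k ≠ j → x k = y k)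
    (h : ok Gp Gn G0 i x) : ok Gp Gn G0 i y := by
  obtain ⟨h1, h2, h3⟩ := h
  refine ⟨fun k hk => ?_, fun k hk => ?_, fun k hk => ?_⟩
  · rw [← hxy k (fun e => hp (e ▸ hk))]; exact h1 k hk
  · rw [← hxy k (fun e => hn (e ▸ hk))]; exact h2 k hk
  · rw [← hxy k (fun e => h0 (e ▸ hk))]; exact h3 k hk

lemma depends_mem {i j : Fin n} (hd : depends (F Gp Gn G0) j i) :
    j ∈ Gp i ∨ j ∈ Gn i ∨ j ∈ G0 i := by
  by_contra hc
  push_neg at hc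
  obtain ⟨hp, hn, h0⟩ := hc
  obtain ⟨x, y, hxy, hne⟩ := hd
  apply hne
  by_cases hx : ok Gp Gn G0 i x
  · rw [F_eq_one hx, F_eq_one (ok_indep hp hn h0 hxy hx)]
  · rw [F_eq_zero hx, F_eq_zero fun hy => hx (ok_indep hp hn h0 (fun k hk => (hxy k hk).symm) hy)]

lemma nondec_of_Gp {i j : Fin n}
    (hdisj : ∀ i, Disjoint (Gp i) (Gn i) ∧ Disjoint (Gp i) (G0 i) ∧ Disjoint (Gn i) (G0 i))
    (hj : j ∈ Gp i) : nondec (F Gp Gn G0) j i := by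
  intro x y hxy hle
  apply F_mono
  rintro ⟨h1, h2, h3⟩
  refine ⟨fun k hk => ?_, fun k hk => ?_, fun k hk => ?_⟩
  · by_cases hkj : k = j
    · subst hkj; exact le_trans (h1 k hk) hle
    · rw [← hxy k hkj]; exact h1 k hk
  · have hkj : k ≠ j := fun e => (hdisj i).1.forall_ne_finset hj (e ▸ hk) rfl
    rw [← hxy k hkj]; exact h2 k hk
  · have hkj : k ≠ j := fun e => (hdisj i).2.1.forall_ne_finset hj (e ▸ hk) rfl
    rw [← hxy k hkj]; exact h3 k hk

lemma noninc_of_Gn {i j : Fin n}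
    (hdisj : ∀ i, Disjoint (Gp i) (Gn i) ∧ Disjoint (Gp i) (G0 i) ∧ Disjoint (Gn i) (G0 i))
    (hj : j ∈ Gn i) : noninc (F Gp Gn G0) j i := by
  intro x y hxy hle
  apply F_mono
  rintro ⟨h1, h2, h3⟩
  refine ⟨fun k hk => ?_, fun k hk => ?_, fun k hk => ?_⟩
  · have hkj : k ≠ j := fun e => (hdisj i).1.forall_ne_finset (e ▸ hk) hj rfl
    rw [hxy k hkj]; exact h1 k hk
  · by_cases hkj : k = j
    · subst hkj; exact lt_of_le_of_lt hle (h2 k hk)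
    · rw [hxy k hkj]; exact h2 k hk
  · have hkj : k ≠ j := fun e => (hdisj i).2.2.forall_ne_finset hj (e ▸ hk) rfl
    rw [hxy k hkj]; exact h3 k hk



variable {n : ℕ} {Gp Gn G0 : Fin n → Finset (Fin n)}

lemma not_ok_update_p {i j : Fin n} (hj : j ∈ Gp i) (x : Fin n → Fin 4) :
    ¬ ok Gp Gn G0 i (Function.update x j 0) := by
  rintro ⟨h1, -, -⟩
  have := h1 j hj
  rw [Function.update_self] at this
  exact absurd this (by decide)

lemma not_ok_update_n {i j : Fin n} (hj : j ∈ Gn i) (x : Fin n → Fin 4) :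
    ¬ ok Gp Gn G0 i (Function.update x j 2) := by
  rintro ⟨-, h2, -⟩
  have := h2 j hj
  rw [Function.update_self] at this
  exact absurd this (by decide)

lemma not_ok_update_03 {i j : Fin n} (hj : j ∈ G0 i) (x : Fin n → Fin 4) :
    ¬ ok Gp Gn G0 i (Function.update x j 3) := by
  rintro ⟨-, -, h3⟩
  have := h3 j hj
  rw [Function.update_self] at this
  exact absurd this (by decide)

lemma not_ok_update_01 {i j : Fin n} (hj : j ∈ G0 i) (x : Fin n → Fin 4) :
    ¬ ok Gp Gn G0 i (Function.update x j 1) := by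
  rintro ⟨-, -, h3⟩
  have := h3 j hj
  rw [Function.update_self] at this
  exact absurd this (by decide)

lemma agree_update (x : Fin n → Fin 4) (j : Fin n) (v : Fin 4) :
    ∀ k, k ≠ j → x k = Function.update x j v k := by
  intro k hk; rw [Function.update_of_ne hk]

lemma w_j_of_Gn
    (hdisj : ∀ i, Disjoint (Gp i) (Gn i) ∧ Disjoint (Gp i) (G0 i) ∧ Disjoint (Gn i) (G0 i))
    {i j : Fin n} (hj : j ∈ Gn i) : w Gp G0 i j = 0 := by
  have h1 : j ∉ Gp i := fun h => (hdisj i).1.forall_ne_finset h hj rfl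
  have h2 : j ∉ G0 i := fun h => (hdisj i).2.2.forall_ne_finset hj h rfl
  simp only [w, Finset.mem_union]
  rw [if_neg (by tauto)]

lemma w_j_of_G0 {i j : Fin n} (hj : j ∈ G0 i) : w Gp G0 i j = 2 := by
  simp [w, Finset.mem_union, hj]

lemma w_j_of_Gp {i j : Fin n} (hj : j ∈ Gp i) : w Gp G0 i j = 2 := by
  simp [w, Finset.mem_union, hj]

theorem main (n : ℕ) (Gp Gn G0 : Fin n → Finset (Fin n))
    (hdisj : ∀ i, Disjoint (Gp i) (Gn i) ∧ Disjoint (Gp i) (G0 i) ∧ Disjoint (Gn i) (G0 i)) :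
    ∃ f : (Fin n → Fin 4) → (Fin n → Fin 4),
      isIG Gp Gn G0 f ∧ ∃ c, f^[2] = Function.const _ c := by
  refine ⟨F Gp Gn G0, ⟨fun i j => ?_, fun i j => ?_, fun i j => ?_⟩, ?_⟩
  · -- Gp iff
    constructor
    · intro hj
      refine ⟨⟨w Gp G0 i, Function.update (w Gp G0 i) j 0, agree_update _ _ _, ?_⟩,
        nondec_of_Gp hdisj hj⟩
      rw [F_eq_one (ok_w hdisj i), F_eq_zero (not_ok_update_p hj _)]
      decide
    · rintro ⟨hd, hnd⟩
      rcases depends_mem hd with h | h | h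
      · exact h
      · exfalso
        have := hnd (w Gp G0 i) (Function.update (w Gp G0 i) j 2) (agree_update _ _ _)
          (by rw [Function.update_self, w_j_of_Gn hdisj h]; exact Fin.zero_le _)
        rw [F_eq_one (ok_w hdisj i), F_eq_zero (not_ok_update_n h _)] at this
        exact absurd this (by decide)
      · exfalso
        have := hnd (w Gp G0 i) (Function.update (w Gp G0 i) j 3) (agree_update _ _ _)
          (by rw [Function.update_self, w_j_of_G0 h]; decide)
        rw [F_eq_one (ok_w hdisj i), F_eq_zero (not_ok_update_03 h _)] at this
        exact absurd this (by decide)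
  · -- Gn iff
    constructor
    · intro hj
      refine ⟨⟨w Gp G0 i, Function.update (w Gp G0 i) j 2, agree_update _ _ _, ?_⟩,
        noninc_of_Gn hdisj hj⟩
      rw [F_eq_one (ok_w hdisj i), F_eq_zero (not_ok_update_n hj _)]
      decide
    · rintro ⟨hd, hni⟩
      rcases depends_mem hd with h | h | h
      · exfalso
        have := hni (Function.update (w Gp G0 i) j 0) (w Gp G0 i)
          (fun k hk => (agree_update _ _ _ k hk).symm)
          (by rw [Function.update_self]; exact Fin.zero_le _)
        rw [F_eq_one (ok_w hdisj i), F_eq_zero (not_ok_update_p h _)] at this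
        exact absurd this (by decide)
      · exact h
      · exfalso
        have := hni (Function.update (w Gp G0 i) j 1) (w Gp G0 i)
          (fun k hk => (agree_update _ _ _ k hk).symm)
          (by rw [Function.update_self, w_j_of_G0 h]; decide)
        rw [F_eq_one (ok_w hdisj i), F_eq_zero (not_ok_update_01 h _)] at this
        exact absurd this (by decide)
  · -- G0 iff
    constructor
    · intro hj
      refine ⟨⟨w Gp G0 i, Function.update (w Gp G0 i) j 3, agree_update _ _ _, ?_⟩, ?_, ?_⟩
      · rw [F_eq_one (ok_w hdisj i), F_eq_zero (not_ok_update_03 hj _)]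
        decide
      · intro hnd
        have := hnd (w Gp G0 i) (Function.update (w Gp G0 i) j 3) (agree_update _ _ _)
          (by rw [Function.update_self, w_j_of_G0 hj]; decide)
        rw [F_eq_one (ok_w hdisj i), F_eq_zero (not_ok_update_03 hj _)] at this
        exact absurd this (by decide)
      · intro hni
        have := hni (Function.update (w Gp G0 i) j 1) (w Gp G0 i)
          (fun k hk => (agree_update _ _ _ k hk).symm)
          (by rw [Function.update_self, w_j_of_G0 hj]; decide)
        rw [F_eq_one (ok_w hdisj i), F_eq_zero (not_ok_update_01 hj _)] at this
        exact absurd this (by decide)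
    · rintro ⟨hd, hnd, hni⟩
      rcases depends_mem hd with h | h | h
      · exact absurd (nondec_of_Gp hdisj h) hnd
      · exact absurd (noninc_of_Gn hdisj h) hni
      · exact h
  · -- constant square
    classical
    refine ⟨fun i => if Gp i = ∅ ∧ G0 i = ∅ then 1 else 0, ?_⟩
    funext x
    show F Gp Gn G0 (F Gp Gn G0 x) = _
    funext i
    have hlt : ∀ (y : Fin n → Fin 4) (k : Fin n), F Gp Gn G0 y k < 2 := by
      intro y k
      unfold F; split <;> decide
    by_cases hc : Gp i = ∅ ∧ G0 i = ∅
    · rw [Function.const_apply, if_pos hc]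
      exact F_eq_one ⟨fun j hj => by simp [hc.1] at hj, fun j _ => hlt x j,
        fun j hj => by simp [hc.2] at hj⟩
    · rw [Function.const_apply, if_neg hc]
      apply F_eq_zero
      rintro ⟨h1, -, h3⟩
      rw [Decidable.not_and_iff_or_not] at hc
      rcases hc with hc | hc
      · obtain ⟨j, hj⟩ := Finset.nonempty_iff_ne_empty.mpr hc
        exact absurd (h1 j hj) (not_le_of_gt (hlt x j))
      · obtain ⟨j, hj⟩ := Finset.nonempty_iff_ne_empty.mpr hc
        exact absurd (h3 j hj) (ne_of_lt (hlt x j))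

end MyIG

/-- every signed digraph admits a function over `{0,1,2,3}` whose square is
constant. -/
theorem stmt1 (n : ℕ) (Gp Gn G0 : Fin n → Finset (Fin n))
    (hdisj : ∀ i, Disjoint (Gp i) (Gn i) ∧ Disjoint (Gp i) (G0 i) ∧ Disjoint (Gn i) (G0 i)) :
    ∃ f : (Fin n → Fin 4) → (Fin n → Fin 4),
      isIG Gp Gn G0 f ∧ ∃ c, f^[2] = Function.const _ c := by
  exact MyIG.main n Gp Gn G0 hdisj
end

section
/- Let G be a signed digraph such that no vertex has exactly one in-neighbor via an unsigned arc (i.e., for every vertex i, |G⁰(i)| ≠ 1). Then G admits a function f : {0,1,2}ⁿ → {0,1,2}ⁿ with interaction graph G such that f² is constant, given by fᵢ(x) = (⋁_{j∈G⁺(i)} 𝟙[xⱼ=2]) ∨ (⋁_{j∈G⁻(i)} 𝟙[xⱼ<2]) ∨ (⊕_{j∈G⁰(i)} 𝟙[xⱼ=2]). -/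
/-- Base point: 2 on the negative in-neighborhood, 0 elsewhere. -/
def Bse {n : ℕ} (Gn : Fin n → Finset (Fin n)) (i : Fin n) : Fin n → Fin 3 :=
  fun k => if k ∈ Gn i then 2 else 0

/-- if no vertex has exactly one unsigned in-arc, the given disjunctive/xor
function over `{0,1,2}` has interaction graph `G` and its square is constant. -/
theorem stmt2 (n : ℕ) (Gp Gn G0 : Fin n → Finset (Fin n))
    (hdisj : ∀ i, Disjoint (Gp i) (Gn i) ∧ Disjoint (Gp i) (G0 i) ∧ Disjoint (Gn i) (G0 i))
    (h0 : ∀ i, (G0 i).card ≠ 1)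
    (f : (Fin n → Fin 3) → (Fin n → Fin 3))
    (hf : ∀ x i, f x i =
      if (∃ j ∈ Gp i, x j = 2) ∨ (∃ j ∈ Gn i, x j < 2) ∨
          Odd (((G0 i).filter (fun j => x j = 2)).card)
      then 1 else 0) :
    isIG Gp Gn G0 f ∧ ∃ c, f^[2] = Function.const _ c := by
  classical
  have h01 : ∀ x i, f x i = 0 ∨ f x i = 1 := by
    intro x i; rw [hf]; split_ifs <;> simp
  have hiff1 : ∀ x i, f x i = 1 ↔
      ((∃ j ∈ Gp i, x j = 2) ∨ (∃ j ∈ Gn i, x j < 2) ∨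
        Odd (((G0 i).filter (fun j => x j = 2)).card)) := by
    intro x i; rw [hf]; split_ifs with h <;> simp [h]
  have hle : ∀ x y i, (f x i = 1 → f y i = 1) → f x i ≤ f y i := by
    intro x y i h
    rcases h01 x i with h1 | h1
    · rcases h01 y i with h2 | h2 <;> rw [h1, h2] <;> decide
    · rw [h1, h h1]
  have f2up : ∀ a b : Fin 3, a ≤ b → a = 2 → b = 2 := by decide
  have f2dn : ∀ a b : Fin 3, a ≤ b → b < 2 → a < 2 := by decide
  -- value at the base point
  have hB0 : ∀ i, f (Bse Gn i) i = 0 := by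
    intro i
    rcases h01 (Bse Gn i) i with h | h
    · exact h
    · exfalso
      rw [hiff1] at h
      rcases h with ⟨k, hk, h2⟩ | ⟨k, hk, h2⟩ | hodd
      · have hkn : k ∉ Gn i := Finset.disjoint_left.mp (hdisj i).1 hk
        simp [Bse, hkn] at h2
      · simp [Bse, hk] at h2
      · have he : (G0 i).filter (fun k => Bse Gn i k = 2) = ∅ := by
          simp only [Finset.filter_eq_empty_iff]
          intro k hk
          have hkn : k ∉ Gn i := Finset.disjoint_right.mp (hdisj i).2.2 hk
          simp [Bse, hkn]
        rw [he] at hodd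
        simp at hodd
  -- value at updated points
  have hBp1 : ∀ i j, j ∈ Gp i → f (Function.update (Bse Gn i) j 2) i = 1 := by
    intro i j hj
    rw [hiff1]
    exact Or.inl ⟨j, hj, Function.update_self _ _ _⟩
  have hBn1 : ∀ i j, j ∈ Gn i → f (Function.update (Bse Gn i) j 0) i = 1 := by
    intro i j hj
    rw [hiff1]
    exact Or.inr (Or.inl ⟨j, hj, by rw [Function.update_self]; decide⟩)
  -- value after flipping one G0 coordinate from the base point
  have hB01 : ∀ i j, j ∈ G0 i → f (Function.update (Bse Gn i) j 2) i = 1 := by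
    intro i j hj
    rw [hiff1]
    refine Or.inr (Or.inr ?_)
    have he : (G0 i).filter (fun k => Function.update (Bse Gn i) j 2 k = 2) = {j} := by
      ext k
      simp only [Finset.mem_filter, Finset.mem_singleton]
      constructor
      · rintro ⟨hk, h2⟩
        by_contra hkj
        rw [Function.update_of_ne hkj] at h2
        have hkn : k ∉ Gn i := Finset.disjoint_right.mp (hdisj i).2.2 hk
        simp [Bse, hkn] at h2
      · rintro rfl
        exact ⟨hj, Function.update_self _ _ _⟩
    rw [he]
    simp
  -- value after flipping two G0 coordinates from the base point
  have hB02 : ∀ i j j', j ∈ G0 i → j' ∈ G0 i → j ≠ j' →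
      f (Function.update (Function.update (Bse Gn i) j' 2) j 2) i = 0 := by
    intro i j j' hj hj' hne
    rcases h01 (Function.update (Function.update (Bse Gn i) j' 2) j 2) i with h | h
    · exact h
    · exfalso
      rw [hiff1] at h
      have hval : ∀ k, Function.update (Function.update (Bse Gn i) j' 2) j 2 k = 2 ↔
          (k = j ∨ k = j' ∨ k ∈ Gn i) := by
        intro k
        by_cases hkj : k = j
        · subst hkj; simp [Function.update_self]
        · by_cases hkj' : k = j'
          · subst hkj'; rw [Function.update_of_ne hkj]; simp [Function.update_self]
          · rw [Function.update_of_ne hkj, Function.update_of_ne hkj']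
            by_cases hkn : k ∈ Gn i <;> simp [Bse, hkn, hkj, hkj']
      rcases h with ⟨k, hk, h2⟩ | ⟨k, hk, h2⟩ | hodd
      · rw [hval k] at h2
        rcases h2 with rfl | rfl | h2
        · exact Finset.disjoint_left.mp (hdisj i).2.1 hk hj
        · exact Finset.disjoint_left.mp (hdisj i).2.1 hk hj'
        · exact Finset.disjoint_left.mp (hdisj i).1 hk h2
      · have : Function.update (Function.update (Bse Gn i) j' 2) j 2 k = 2 :=
          (hval k).mpr (Or.inr (Or.inr hk))
        rw [this] at h2
        exact absurd h2 (by decide)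
      · have he : (G0 i).filter (fun k => Function.update (Function.update (Bse Gn i) j' 2) j 2 k = 2)
            = {j, j'} := by
          ext k
          simp only [Finset.mem_filter, Finset.mem_insert, Finset.mem_singleton, hval k]
          constructor
          · rintro ⟨hk, rfl | rfl | h2⟩
            · exact Or.inl rfl
            · exact Or.inr rfl
            · exact absurd h2 (Finset.disjoint_right.mp (hdisj i).2.2 hk)
          · rintro (rfl | rfl)
            · exact ⟨hj, Or.inl rfl⟩
            · exact ⟨hj', Or.inr (Or.inl rfl)⟩
        rw [he, Finset.card_insert_of_notMem (by simpa using hne), Finset.card_singleton] at hodd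
        exact absurd hodd (by decide)
  -- monotonicity: if j is not a negative or null in-neighbor, f i is nondecreasing in j
  have hmono : ∀ i j, j ∉ Gn i → j ∉ G0 i → nondec f j i := by
    intro i j hjn hj0 x y hxy hxyj
    apply hle
    intro h1
    rw [hiff1] at h1 ⊢
    rcases h1 with ⟨k, hk, h2⟩ | ⟨k, hk, h2⟩ | hodd
    · by_cases hkj : k = j
      · subst hkj
        exact Or.inl ⟨k, hk, f2up _ _ hxyj h2⟩
      · exact Or.inl ⟨k, hk, (hxy k hkj) ▸ h2⟩
    · have hkj : k ≠ j := fun e => hjn (e ▸ hk)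
      exact Or.inr (Or.inl ⟨k, hk, (hxy k hkj) ▸ h2⟩)
    · refine Or.inr (Or.inr ?_)
      have he : (G0 i).filter (fun k => y k = 2) = (G0 i).filter (fun k => x k = 2) := by
        apply Finset.filter_congr
        intro k hk
        have hkj : k ≠ j := fun e => hj0 (e ▸ hk)
        rw [hxy k hkj]
      rw [he]; exact hodd
  -- antitonicity: if j is not a positive or null in-neighbor, f i is nonincreasing in j
  have hanti : ∀ i j, j ∉ Gp i → j ∉ G0 i → noninc f j i := by
    intro i j hjp hj0 x y hxy hxyj
    apply hle
    intro h1
    rw [hiff1] at h1 ⊢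
    rcases h1 with ⟨k, hk, h2⟩ | ⟨k, hk, h2⟩ | hodd
    · have hkj : k ≠ j := fun e => hjp (e ▸ hk)
      exact Or.inl ⟨k, hk, (hxy k hkj).symm ▸ h2⟩
    · by_cases hkj : k = j
      · subst hkj
        exact Or.inr (Or.inl ⟨k, hk, f2dn _ _ hxyj h2⟩)
      · exact Or.inr (Or.inl ⟨k, hk, (hxy k hkj).symm ▸ h2⟩)
    · refine Or.inr (Or.inr ?_)
      have he : (G0 i).filter (fun k => x k = 2) = (G0 i).filter (fun k => y k = 2) := by
        apply Finset.filter_congr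
        intro k hk
        have hkj : k ≠ j := fun e => hj0 (e ▸ hk)
        rw [hxy k hkj]
      rw [he]; exact hodd
  -- independence: if j is in none of the three sets, f i does not depend on j
  have hindep : ∀ i j, j ∉ Gp i → j ∉ Gn i → j ∉ G0 i → ¬ depends f j i := by
    intro i j hjp hjn hj0
    rintro ⟨x, y, hxy, hne⟩
    have hxyj : x j ≤ y j ∨ y j ≤ x j := le_total _ _
    have h1 := hmono i j hjn hj0
    have h2 := hanti i j hjp hj0
    rcases hxyj with h | h
    · exact hne (le_antisymm (h1 x y hxy h) (h2 x y hxy h))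
    · have hxy' : ∀ k, k ≠ j → y k = x k := fun k hk => (hxy k hk).symm
      exact hne (le_antisymm (h2 y x hxy' h) (h1 y x hxy' h))
  -- negative results for Gp
  have hdep_p : ∀ i j, j ∈ Gp i → depends f j i := by
    intro i j hj
    refine ⟨Bse Gn i, Function.update (Bse Gn i) j 2, fun k hk => (Function.update_of_ne hk _ _).symm, ?_⟩
    rw [hB0 i, hBp1 i j hj]; decide
  have hjp_base : ∀ i j, j ∈ Gp i → Bse Gn i j = 0 := by
    intro i j hj
    have hjn : j ∉ Gn i := Finset.disjoint_left.mp (hdisj i).1 hj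
    simp [Bse, hjn]
  have hnn_p : ∀ i j, j ∈ Gp i → ¬ noninc f j i := by
    intro i j hj hni
    have := hni (Bse Gn i) (Function.update (Bse Gn i) j 2)
      (fun k hk => (Function.update_of_ne hk _ _).symm)
      (by rw [hjp_base i j hj, Function.update_self]; decide)
    rw [hB0 i, hBp1 i j hj] at this
    exact absurd this (by decide)
  -- negative results for Gn
  have hdep_n : ∀ i j, j ∈ Gn i → depends f j i := by
    intro i j hj
    refine ⟨Bse Gn i, Function.update (Bse Gn i) j 0, fun k hk => (Function.update_of_ne hk _ _).symm, ?_⟩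
    rw [hB0 i, hBn1 i j hj]; decide
  have hnd_n : ∀ i j, j ∈ Gn i → ¬ nondec f j i := by
    intro i j hj hnd
    have := hnd (Function.update (Bse Gn i) j 0) (Bse Gn i)
      (fun k hk => Function.update_of_ne hk _ _)
      (by rw [Function.update_self]; simp [Bse, hj])
    rw [hB0 i, hBn1 i j hj] at this
    exact absurd this (by decide)
  -- negative results for G0
  have hj0_base : ∀ i j, j ∈ G0 i → Bse Gn i j = 0 := by
    intro i j hj
    have hjn : j ∉ Gn i := Finset.disjoint_right.mp (hdisj i).2.2 hj
    simp [Bse, hjn]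
  have hdep_0 : ∀ i j, j ∈ G0 i → depends f j i := by
    intro i j hj
    refine ⟨Bse Gn i, Function.update (Bse Gn i) j 2, fun k hk => (Function.update_of_ne hk _ _).symm, ?_⟩
    rw [hB0 i, hB01 i j hj]; decide
  have hnn_0 : ∀ i j, j ∈ G0 i → ¬ noninc f j i := by
    intro i j hj hni
    have := hni (Bse Gn i) (Function.update (Bse Gn i) j 2)
      (fun k hk => (Function.update_of_ne hk _ _).symm)
      (by rw [hj0_base i j hj, Function.update_self]; decide)
    rw [hB0 i, hB01 i j hj] at this
    exact absurd this (by decide)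
  have hnd_0 : ∀ i j, j ∈ G0 i → ¬ nondec f j i := by
    intro i j hj hnd
    have hcard : 1 < (G0 i).card := by
      have h1 : 0 < (G0 i).card := Finset.card_pos.mpr ⟨j, hj⟩
      have h2 := h0 i
      omega
    obtain ⟨j', hj', hne⟩ := Finset.exists_mem_ne hcard j
    have := hnd (Function.update (Bse Gn i) j' 2)
      (Function.update (Function.update (Bse Gn i) j' 2) j 2)
      (fun k hk => (Function.update_of_ne hk _ _).symm)
      (by rw [Function.update_self, Function.update_of_ne (Ne.symm hne), hj0_base i j hj]; decide)
    rw [hB01 i j' hj', hB02 i j j' hj hj' (Ne.symm hne)] at this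
    exact absurd this (by decide)
  constructor
  · refine ⟨fun i j => ?_, fun i j => ?_, fun i j => ?_⟩
    · constructor
      · intro hj
        exact ⟨hdep_p i j hj,
          hmono i j (Finset.disjoint_left.mp (hdisj i).1 hj) (Finset.disjoint_left.mp (hdisj i).2.1 hj)⟩
      · rintro ⟨hd, hm⟩
        by_cases hjp : j ∈ Gp i
        · exact hjp
        by_cases hjn : j ∈ Gn i
        · exact absurd hm (hnd_n i j hjn)
        by_cases hj0 : j ∈ G0 i
        · exact absurd hm (hnd_0 i j hj0)
        · exact absurd hd (hindep i j hjp hjn hj0)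
    · constructor
      · intro hj
        exact ⟨hdep_n i j hj,
          hanti i j (Finset.disjoint_right.mp (hdisj i).1 hj) (Finset.disjoint_left.mp (hdisj i).2.2 hj)⟩
      · rintro ⟨hd, hm⟩
        by_cases hjn : j ∈ Gn i
        · exact hjn
        by_cases hjp : j ∈ Gp i
        · exact absurd hm (hnn_p i j hjp)
        by_cases hj0 : j ∈ G0 i
        · exact absurd hm (hnn_0 i j hj0)
        · exact absurd hd (hindep i j hjp hjn hj0)
    · constructor
      · intro hj
        exact ⟨hdep_0 i j hj, hnd_0 i j hj, hnn_0 i j hj⟩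
      · rintro ⟨hd, hm1, hm2⟩
        by_cases hj0 : j ∈ G0 i
        · exact hj0
        by_cases hjp : j ∈ Gp i
        · exact absurd (hmono i j (Finset.disjoint_left.mp (hdisj i).1 hjp) hj0) hm1
        by_cases hjn : j ∈ Gn i
        · exact absurd (hanti i j hjp hj0) hm2
        · exact absurd hd (hindep i j hjp hjn hj0)
  · refine ⟨fun i => if (Gn i).Nonempty then 1 else 0, ?_⟩
    funext x
    funext i
    have hfx : f^[2] x i = f (f x) i := by
      rw [Function.iterate_succ, Function.iterate_one, Function.comp_apply]
    rw [hfx]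
    have hlt : ∀ j, f x j < 2 := by
      intro j
      rcases h01 x j with h | h <;> rw [h] <;> decide
    by_cases hne : (Gn i).Nonempty
    · obtain ⟨j, hj⟩ := hne
      have : f (f x) i = 1 := by
        rw [hiff1]
        exact Or.inr (Or.inl ⟨j, hj, hlt j⟩)
      rw [this, Function.const_apply, if_pos ⟨j, hj⟩]
    · have h2 : f (f x) i = 0 := by
        rcases h01 (f x) i with h | h
        · exact h
        · exfalso
          rw [hiff1] at h
          rcases h with ⟨k, hk, h2⟩ | ⟨k, hk, h2⟩ | hodd
          · exact absurd h2 (ne_of_lt (hlt k))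
          · exact hne ⟨k, hk⟩
          · have he : (G0 i).filter (fun k => f x k = 2) = ∅ := by
              simp only [Finset.filter_eq_empty_iff]
              intro k _
              exact ne_of_lt (hlt k)
            rw [he] at hodd
            simp at hodd
      rw [h2, Function.const_apply, if_neg hne]
end

section
/- Let G be a signed digraph in which every vertex has at least one in-neighbor via an unsigned (null) arc. Then the function f : {0,1,2}ⁿ → {0,1,2}ⁿ defined by fᵢ(x) = 2·[(⋀_{j∈G⁺(i)} 𝟙[xⱼ=2]) ∧ (⋀_{j∈G⁻(i)} 𝟙[xⱼ<2]) ∧ (⋀_{j∈G⁰(i)} 𝟙[xⱼ=1])] has interaction graph G and satisfies f² = constant 0. -/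
/-- if every vertex has an unsigned in-arc, the given conjunctive function over
`{0,1,2}` has interaction graph `G` and `f² = 0`. -/
theorem stmt3 (n : ℕ) (Gp Gn G0 : Fin n → Finset (Fin n))
    (hdisj : ∀ i, Disjoint (Gp i) (Gn i) ∧ Disjoint (Gp i) (G0 i) ∧ Disjoint (Gn i) (G0 i))
    (h0 : ∀ i, (G0 i).Nonempty)
    (f : (Fin n → Fin 3) → (Fin n → Fin 3))
    (hf : ∀ x i, f x i =
      if (∀ j ∈ Gp i, x j = 2) ∧ (∀ j ∈ Gn i, x j < 2) ∧ (∀ j ∈ G0 i, x j = 1)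
      then 2 else 0) :
    isIG Gp Gn G0 f ∧ f^[2] = Function.const _ (fun _ => (0 : Fin 3)) := by
  classical
  have h2max : ∀ a : Fin 3, (2 : Fin 3) ≤ a → a = 2 := by decide
  have hle2 : ∀ a : Fin 3, a ≤ 2 := by decide
  have hlt2 : ∀ a : Fin 3, a < 2 ↔ a ≠ 2 := by decide
  have hval : ∀ x i, f x i = 0 ∨ f x i = 2 := by
    intro x i; rw [hf]; split
    · exact Or.inr rfl
    · exact Or.inl rfl
  have hf2 : ∀ x i, f x i = 2 ↔
      ((∀ j ∈ Gp i, x j = 2) ∧ (∀ j ∈ Gn i, x j < 2) ∧ (∀ j ∈ G0 i, x j = 1)) := by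
    intro x i; rw [hf]; split
    case isTrue h => simpa using h
    case isFalse h => exact iff_of_false (by decide) h
  have hfne2 : ∀ x i, f x i ≠ 2 → f x i = 0 := by
    intro x i h; rcases hval x i with h0' | h2'
    · exact h0'
    · exact absurd h2' h
  have dPN : ∀ i j, j ∈ Gp i → j ∉ Gn i := fun i j hj =>
    Finset.disjoint_left.mp (hdisj i).1 hj
  have dP0 : ∀ i j, j ∈ Gp i → j ∉ G0 i := fun i j hj =>
    Finset.disjoint_left.mp (hdisj i).2.1 hj
  have dN0 : ∀ i j, j ∈ Gn i → j ∉ G0 i := fun i j hj =>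
    Finset.disjoint_left.mp (hdisj i).2.2 hj
  have dNP : ∀ i j, j ∈ Gn i → j ∉ Gp i := fun i j hj h => dPN i j h hj
  have d0P : ∀ i j, j ∈ G0 i → j ∉ Gp i := fun i j hj h => dP0 i j h hj
  have d0N : ∀ i j, j ∈ G0 i → j ∉ Gn i := fun i j hj h => dN0 i j h hj
  -- base point
  set b : Fin n → Fin n → Fin 3 :=
    (fun i k => if k ∈ Gp i then 2 else if k ∈ G0 i then 1 else 0) with hbdef
  have hbP : ∀ i k, k ∈ Gp i → b i k = 2 := by
    intro i k hk; simp [hbdef, hk]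
  have hbN : ∀ i k, k ∈ Gn i → b i k = 0 := by
    intro i k hk; simp [hbdef, dNP i k hk, dN0 i k hk]
  have hb0 : ∀ i k, k ∈ G0 i → b i k = 1 := by
    intro i k hk; simp [hbdef, d0P i k hk, hk]
  have hbval : ∀ i, f (b i) i = 2 := by
    intro i
    refine (hf2 (b i) i).mpr ⟨fun k hk => hbP i k hk, fun k hk => ?_, fun k hk => hb0 i k hk⟩
    rw [hbN i k hk]; decide
  -- monotonicity
  have hnondecP : ∀ i j, j ∈ Gp i → nondec f j i := by
    intro i j hj x y hxy hle
    rcases hval x i with hx0 | hx2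
    · rw [hx0]; exact Fin.zero_le _
    · obtain ⟨c1, c2, c3⟩ := (hf2 x i).mp hx2
      have : f y i = 2 := by
        refine (hf2 y i).mpr ⟨fun k hk => ?_, fun k hk => ?_, fun k hk => ?_⟩
        · by_cases hkj : k = j
          · subst hkj; exact h2max _ ((c1 k hk) ▸ hle)
          · rw [← hxy k hkj]; exact c1 k hk
        · have hkj : k ≠ j := fun e => dPN i j hj (e ▸ hk)
          rw [← hxy k hkj]; exact c2 k hk
        · have hkj : k ≠ j := fun e => dP0 i j hj (e ▸ hk)
          rw [← hxy k hkj]; exact c3 k hk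
      rw [this, hx2]
  have hnonincN : ∀ i j, j ∈ Gn i → noninc f j i := by
    intro i j hj x y hxy hle
    rcases hval y i with hy0 | hy2
    · rw [hy0]; exact Fin.zero_le _
    · obtain ⟨c1, c2, c3⟩ := (hf2 y i).mp hy2
      have : f x i = 2 := by
        refine (hf2 x i).mpr ⟨fun k hk => ?_, fun k hk => ?_, fun k hk => ?_⟩
        · have hkj : k ≠ j := fun e => dNP i j hj (e ▸ hk)
          rw [hxy k hkj]; exact c1 k hk
        · by_cases hkj : k = j
          · subst hkj; exact lt_of_le_of_lt hle (c2 k hk)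
          · rw [hxy k hkj]; exact c2 k hk
        · have hkj : k ≠ j := fun e => dN0 i j hj (e ▸ hk)
          rw [hxy k hkj]; exact c3 k hk
      rw [this, hy2]
  -- agreements with updates
  have hagree : ∀ i j (v : Fin 3), (∀ k, k ≠ j → b i k = Function.update (b i) j v k) :=
    fun i j v k hk => (Function.update_of_ne hk v (b i)).symm
  -- f at updated base is 0 when clause for j is broken
  have hupP : ∀ i j, j ∈ Gp i → f (Function.update (b i) j 0) i = 0 := by
    intro i j hj
    refine hfne2 _ _ (fun h2 => ?_)
    have := ((hf2 _ i).mp h2).1 j hj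
    rw [Function.update_self] at this
    exact absurd this (by decide)
  have hupN : ∀ i j, j ∈ Gn i → f (Function.update (b i) j 2) i = 0 := by
    intro i j hj
    refine hfne2 _ _ (fun h2 => ?_)
    have := ((hf2 _ i).mp h2).2.1 j hj
    rw [Function.update_self] at this
    exact absurd this (by decide)
  have hup0lo : ∀ i j, j ∈ G0 i → f (Function.update (b i) j 0) i = 0 := by
    intro i j hj
    refine hfne2 _ _ (fun h2 => ?_)
    have := ((hf2 _ i).mp h2).2.2 j hj
    rw [Function.update_self] at this
    exact absurd this (by decide)
  have hup0hi : ∀ i j, j ∈ G0 i → f (Function.update (b i) j 2) i = 0 := by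
    intro i j hj
    refine hfne2 _ _ (fun h2 => ?_)
    have := ((hf2 _ i).mp h2).2.2 j hj
    rw [Function.update_self] at this
    exact absurd this (by decide)
  -- dependencies
  have hdepP : ∀ i j, j ∈ Gp i → depends f j i := by
    intro i j hj
    exact ⟨b i, Function.update (b i) j 0, hagree i j 0, by
      rw [hbval i, hupP i j hj]; decide⟩
  have hdepN : ∀ i j, j ∈ Gn i → depends f j i := by
    intro i j hj
    exact ⟨b i, Function.update (b i) j 2, hagree i j 2, by
      rw [hbval i, hupN i j hj]; decide⟩
  have hdep0 : ∀ i j, j ∈ G0 i → depends f j i := by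
    intro i j hj
    exact ⟨b i, Function.update (b i) j 0, hagree i j 0, by
      rw [hbval i, hup0lo i j hj]; decide⟩
  -- non-monotonicity witnesses
  have hnotnondec : ∀ i j, f (Function.update (b i) j 2) i = 0 → ¬ nondec f j i := by
    intro i j hup hmono
    have := hmono (b i) (Function.update (b i) j 2) (hagree i j 2)
      (by rw [Function.update_self]; exact hle2 _)
    rw [hbval i, hup] at this
    exact absurd this (by decide)
  have hnotnoninc : ∀ i j, f (Function.update (b i) j 0) i = 0 → ¬ noninc f j i := by
    intro i j hup hmono
    have := hmono (Function.update (b i) j 0) (b i)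
      (fun k hk => (hagree i j 0 k hk).symm)
      (by rw [Function.update_self]; exact Fin.zero_le _)
    rw [hbval i, hup] at this
    exact absurd this (by decide)
  -- nondec and noninc together kill dependence
  have hmonoconst : ∀ j i, nondec f j i → noninc f j i → ¬ depends f j i := by
    rintro j i hn hni ⟨x, y, hxy, hne⟩
    rcases le_total (x j) (y j) with h | h
    · exact hne (le_antisymm (hn x y hxy h) (hni x y hxy h))
    · have hyx : ∀ k, k ≠ j → y k = x k := fun k hk => (hxy k hk).symm
      exact hne (le_antisymm (hni y x hyx h) (hn y x hyx h))
  -- no arc means no dependence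
  have hnodep : ∀ i j, j ∉ Gp i → j ∉ Gn i → j ∉ G0 i → ¬ depends f j i := by
    rintro i j hp hn h0' ⟨x, y, hxy, hne⟩
    apply hne
    rw [hf, hf]
    refine if_congr (and_congr ?_ (and_congr ?_ ?_)) rfl rfl
    all_goals
      refine forall_congr' fun k => forall_congr' fun hk => ?_
      have hkj : k ≠ j := fun e => by subst e; first | exact hp hk | exact hn hk | exact h0' hk
      rw [hxy k hkj]
  constructor
  · refine ⟨fun i j => ?_, fun i j => ?_, fun i j => ?_⟩
    · constructor
      · intro hj; exact ⟨hdepP i j hj, hnondecP i j hj⟩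
      · rintro ⟨hdep, hmono⟩
        by_contra hp
        by_cases hn : j ∈ Gn i
        · exact hmonoconst j i hmono (hnonincN i j hn) hdep
        · by_cases hz : j ∈ G0 i
          · exact hnotnondec i j (hup0hi i j hz) hmono
          · exact hnodep i j hp hn hz hdep
    · constructor
      · intro hj; exact ⟨hdepN i j hj, hnonincN i j hj⟩
      · rintro ⟨hdep, hmono⟩
        by_contra hn
        by_cases hp : j ∈ Gp i
        · exact hmonoconst j i (hnondecP i j hp) hmono hdep
        · by_cases hz : j ∈ G0 i
          · exact hnotnoninc i j (hup0lo i j hz) hmono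
          · exact hnodep i j hp hn hz hdep
    · constructor
      · intro hj
        exact ⟨hdep0 i j hj, hnotnondec i j (hup0hi i j hj),
          hnotnoninc i j (hup0lo i j hj)⟩
      · rintro ⟨hdep, hnd, hni⟩
        by_contra hz
        by_cases hp : j ∈ Gp i
        · exact hnd (hnondecP i j hp)
        · by_cases hn : j ∈ Gn i
          · exact hni (hnonincN i j hn)
          · exact hnodep i j hp hn hz hdep
  · funext x
    have : f^[2] x = f (f x) := by
      simp [Function.iterate_succ, Function.iterate_zero, Function.comp]
    rw [this]
    funext i
    obtain ⟨j, hj⟩ := h0 i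
    rw [hf]
    rw [if_neg]
    · rfl
    · rintro ⟨-, -, c3⟩
      have h1 := c3 j hj
      rcases hval x j with h | h <;> rw [h] at h1 <;> exact absurd h1 (by decide)
end

section
/- A signed digraph G admits a boolean function (a function f : {0,1}ⁿ → {0,1}ⁿ with interaction graph exactly G) if and only if for every vertex i with exactly one null (unsigned) in-arc, the number of signed (positive or negative) in-arcs of i is at least 2. -/
open Classical

section
variable {n : ℕ}

-- exclusivity
lemma not_both {n s : ℕ} {f : (Fin n → Fin s) → (Fin n → Fin s)} {j i : Fin n}
    (hd : depends f j i) (h1 : nondec f j i) (h2 : noninc f j i) : False := by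
  obtain ⟨x, y, hxy, hne⟩ := hd
  rcases le_total (x j) (y j) with h | h
  · exact hne (le_antisymm (h1 x y hxy h) (h2 x y hxy h))
  · have hyx : ∀ k, k ≠ j → y k = x k := fun k hk => (hxy k hk).symm
    exact hne (le_antisymm (h1 y x hyx h) (h2 y x hyx h)).symm

lemma isIG_of {n s : ℕ} {Gp Gn G0 : Fin n → Finset (Fin n)}
    {f : (Fin n → Fin s) → (Fin n → Fin s)}
    (h0 : ∀ i j, depends f j i → j ∈ Gp i ∪ Gn i ∪ G0 i)
    (hp : ∀ i j, j ∈ Gp i → depends f j i ∧ nondec f j i)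
    (hn : ∀ i j, j ∈ Gn i → depends f j i ∧ noninc f j i)
    (h00 : ∀ i j, j ∈ G0 i → depends f j i ∧ ¬ nondec f j i ∧ ¬ noninc f j i) :
    isIG Gp Gn G0 f := by
  refine ⟨fun i j => ⟨hp i j, ?_⟩, fun i j => ⟨hn i j, ?_⟩, fun i j => ⟨h00 i j, ?_⟩⟩
  · rintro ⟨hd, hm⟩
    rcases Finset.mem_union.1 (h0 i j hd) with h | h
    · rcases Finset.mem_union.1 h with h | h
      · exact h
      · exact absurd (not_both hd hm (hn i j h).2) not_false
    · exact absurd hm (h00 i j h).2.1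
  · rintro ⟨hd, hm⟩
    rcases Finset.mem_union.1 (h0 i j hd) with h | h
    · rcases Finset.mem_union.1 h with h | h
      · exact absurd (not_both hd (hp i j h).2 hm) not_false
      · exact h
    · exact absurd hm (h00 i j h).2.2
  · rintro ⟨hd, hm1, hm2⟩
    rcases Finset.mem_union.1 (h0 i j hd) with h | h
    · rcases Finset.mem_union.1 h with h | h
      · exact absurd (hp i j h).2 hm1
      · exact absurd (hn i j h).2 hm2
    · exact h

lemma agree_off (g : (Fin n → Fin s) → Fin s) (T : Finset (Fin n))
    (hT : ∀ k ∈ T, ∀ u v : Fin n → Fin s, (∀ l, l ≠ k → u l = v l) → g u = g v) :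
    ∀ x y : Fin n → Fin s, (∀ k, k ∉ T → x k = y k) → g x = g y := by
  classical
  induction T using Finset.induction with
  | empty =>
    intro x y h
    have : x = y := funext fun k => h k (Finset.notMem_empty k)
    rw [this]
  | @insert k T hk ih =>
    intro x y h
    set z := Function.update x k (y k) with hz
    have h1 : g x = g z := by
      refine hT k (Finset.mem_insert_self k T) x z (fun l hl => ?_)
      simp [hz, Function.update_of_ne hl]
    rw [h1]
    refine ih (fun k' hk' => hT k' (Finset.mem_insert_of_mem hk')) z y (fun k' hk' => ?_)
    by_cases hkk : k' = k
    · subst hkk; simp [hz]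
    · have : k' ∉ insert k T := by simp [hkk, hk']
      simp [hz, Function.update_of_ne hkk, h k' this]

-- key 2-variable decidable fact
lemma key2 : ∀ h : Fin 2 → Fin 2 → Fin 2,
    ((∀ u, h u 0 ≤ h u 1) ∨ (∀ u, h u 1 ≤ h u 0)) →
    (∃ v, h 1 v < h 0 v) → (∃ v, h 0 v < h 1 v) → False := by decide
lemma fwd (Gp Gn G0 : Fin n → Finset (Fin n))
    (hdisj : ∀ i, Disjoint (Gp i) (Gn i) ∧ Disjoint (Gp i) (G0 i) ∧ Disjoint (Gn i) (G0 i))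
    (f : (Fin n → Fin 2) → (Fin n → Fin 2))
    (h1f : ∀ i j, j ∈ Gp i ↔ depends f j i ∧ nondec f j i)
    (h2f : ∀ i j, j ∈ Gn i ↔ depends f j i ∧ noninc f j i)
    (h3f : ∀ i j, j ∈ G0 i ↔ depends f j i ∧ ¬ nondec f j i ∧ ¬ noninc f j i)
    (i : Fin n) (hc : (G0 i).card = 1) : 2 ≤ (Gp i).card + (Gn i).card := by
  classical
  by_contra hlt
  push_neg at hlt
  set g : (Fin n → Fin 2) → Fin 2 := fun x => f x i with hg
  obtain ⟨a, ha⟩ := Finset.card_eq_one.1 hc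
  have haG0 : a ∈ G0 i := by rw [ha]; exact Finset.mem_singleton_self a
  obtain ⟨hdep, hnnd, hnni⟩ := (h3f i a).1 haG0
  -- non-dependence outside Gp ∪ Gn ∪ G0
  have hind : ∀ k, k ∉ Gp i → k ∉ Gn i → k ∉ G0 i →
      ∀ u v : Fin n → Fin 2, (∀ l, l ≠ k → u l = v l) → g u = g v := by
    intro k hk1 hk2 hk3 u v huv
    by_contra hne
    have hd : depends f k i := ⟨u, v, huv, hne⟩
    have e1 : ¬ nondec f k i := fun h => hk1 ((h1f i k).2 ⟨hd, h⟩)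
    have e2 : ¬ noninc f k i := fun h => hk2 ((h2f i k).2 ⟨hd, h⟩)
    exact hk3 ((h3f i k).2 ⟨hd, e1, e2⟩)
  -- extract failures of monotonicity at a, as pairs with x a = 0, y a = 1
  have hpair : ∀ (P : Fin 2 → Fin 2 → Prop),
      (∃ x y : Fin n → Fin 2, (∀ l, l ≠ a → x l = y l) ∧ x a ≤ y a ∧ P (g x) (g y)) →
      (∀ c : Fin 2, ¬ P c c) →
      ∃ x y : Fin n → Fin 2, (∀ l, l ≠ a → x l = y l) ∧ x a = 0 ∧ y a = 1 ∧ P (g x) (g y) := by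
    intro P ⟨x, y, hxy, hle, hP⟩ hirr
    have hne : x a ≠ y a := by
      intro he
      have : x = y := funext fun l => by
        by_cases hl : l = a
        · rw [hl]; exact he
        · exact hxy l hl
      rw [this] at hP; exact hirr _ hP
    have h0 : x a = 0 ∧ y a = 1 := by omega
    exact ⟨x, y, hxy, h0.1, h0.2, hP⟩
  have hnd' : ∃ x y : Fin n → Fin 2, (∀ l, l ≠ a → x l = y l) ∧ x a = 0 ∧ y a = 1 ∧ g y < g x := by
    refine hpair (fun c d => d < c) ?_ (fun c => lt_irrefl c)
    unfold nondec at hnnd; push_neg at hnnd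
    obtain ⟨x, y, hxy, hle, hlt'⟩ := hnnd
    exact ⟨x, y, hxy, hle, hlt'⟩
  have hni' : ∃ x y : Fin n → Fin 2, (∀ l, l ≠ a → x l = y l) ∧ x a = 0 ∧ y a = 1 ∧ g x < g y := by
    refine hpair (fun c d => c < d) ?_ (fun c => lt_irrefl c)
    unfold noninc at hnni; push_neg at hnni
    obtain ⟨x, y, hxy, hle, hlt'⟩ := hnni
    exact ⟨x, y, hxy, hle, hlt'⟩
  by_cases hS : Gp i ∪ Gn i = ∅
  · -- only essential variable is a
    set h1 : Fin 2 → Fin 2 := fun u => g (fun k => if k = a then u else 0) with hh1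
    have hrep : ∀ x : Fin n → Fin 2, g x = h1 (x a) := by
      intro x
      refine agree_off g (Finset.univ \ {a}) ?_ x _ (fun k hk => ?_)
      · intro k hk
        simp only [Finset.mem_sdiff, Finset.mem_singleton] at hk
        have hk0 : k ∉ G0 i := by rw [ha]; simp [hk.2]
        have hk1 : k ∉ Gp i := fun h => by
          have : k ∈ Gp i ∪ Gn i := Finset.mem_union_left _ h
          rw [hS] at this; exact absurd this (Finset.notMem_empty k)
        have hk2 : k ∉ Gn i := fun h => by
          have : k ∈ Gp i ∪ Gn i := Finset.mem_union_right _ h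
          rw [hS] at this; exact absurd this (Finset.notMem_empty k)
        exact hind k hk1 hk2 hk0
      · simp only [Finset.mem_sdiff, Finset.mem_univ, true_and, not_not,
          Finset.mem_singleton] at hk
        rw [hk]; simp
    obtain ⟨x, y, _, hx0, hy1, hlt1⟩ := hnd'
    obtain ⟨x', y', _, hx0', hy1', hlt2⟩ := hni'
    rw [hrep x, hrep y, hx0, hy1] at hlt1
    rw [hrep x', hrep y', hx0', hy1'] at hlt2
    exact lt_asymm hlt1 hlt2
  · -- exactly one signed variable b
    obtain ⟨b, hbmem⟩ := Finset.nonempty_iff_ne_empty.2 hS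
    have hcard1 : (Gp i ∪ Gn i).card ≤ 1 := by
      rw [Finset.card_union_of_disjoint (hdisj i).1]; omega
    have hsub : Gp i ∪ Gn i ⊆ {b} := by
      intro c hcmem
      have := Finset.card_le_one.1 hcard1 c hcmem b hbmem
      simp [this]
    have hba : b ≠ a := by
      intro he
      rcases Finset.mem_union.1 hbmem with h | h
      · exact absurd haG0 (Finset.disjoint_left.1 (hdisj i).2.1 (he ▸ h))
      · exact absurd haG0 (Finset.disjoint_left.1 (hdisj i).2.2 (he ▸ h))
    set base : Fin 2 → Fin 2 → Fin n → Fin 2 :=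
      fun u v k => if k = a then u else if k = b then v else 0 with hbase
    set h2 : Fin 2 → Fin 2 → Fin 2 := fun u v => g (base u v) with hh2
    have hrep : ∀ x : Fin n → Fin 2, g x = h2 (x a) (x b) := by
      intro x
      refine agree_off g (Finset.univ \ {a, b}) ?_ x _ (fun k hk => ?_)
      · intro k hk
        simp only [Finset.mem_sdiff, Finset.mem_insert, Finset.mem_singleton, not_or] at hk
        have hk0 : k ∉ G0 i := by rw [ha]; simp [hk.2.1]
        have hk1 : k ∉ Gp i := fun h => hk.2.2 (Finset.mem_singleton.1 (hsub (Finset.mem_union_left _ h)))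
        have hk2 : k ∉ Gn i := fun h => hk.2.2 (Finset.mem_singleton.1 (hsub (Finset.mem_union_right _ h)))
        exact hind k hk1 hk2 hk0
      · simp only [Finset.mem_sdiff, Finset.mem_univ, true_and, not_not,
          Finset.mem_insert, Finset.mem_singleton] at hk
        rcases hk with hk | hk <;> rw [hk] <;> simp [hbase, hba]
    -- monotonicity of h2 in second coordinate
    have hmono : (∀ u, h2 u 0 ≤ h2 u 1) ∨ (∀ u, h2 u 1 ≤ h2 u 0) := by
      have hagree : ∀ u v v' : Fin 2, ∀ l, l ≠ b → base u v l = base u v' l := by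
        intro u v v' l hl
        simp [hbase, hl]
      rcases Finset.mem_union.1 hbmem with h | h
      · left
        intro u
        have hm := ((h1f i b).1 h).2
        refine hm (base u 0) (base u 1) (hagree u 0 1) ?_
        simp [hbase, hba]
      · right
        intro u
        have hm := ((h2f i b).1 h).2
        refine hm (base u 0) (base u 1) (hagree u 0 1) ?_
        simp [hbase, hba]
    obtain ⟨x, y, hxy, hx0, hy1, hlt1⟩ := hnd'
    obtain ⟨x', y', hxy', hx0', hy1', hlt2⟩ := hni'
    rw [hrep x, hrep y, hx0, hy1, hxy b hba] at hlt1
    rw [hrep x', hrep y', hx0', hy1', hxy' b hba] at hlt2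
    exact key2 h2 hmono ⟨y b, hlt1⟩ ⟨y' b, hlt2⟩
def act (Gn : Fin n → Finset (Fin n)) (i j : Fin n) : Fin 2 := if j ∈ Gn i then 0 else 1
def inact (Gn : Fin n → Finset (Fin n)) (i : Fin n) : Fin n → Fin 2 :=
  fun j => if j ∈ Gn i then 1 else 0
def lit (Gn : Fin n → Finset (Fin n)) (i : Fin n) (x : Fin n → Fin 2) (j : Fin n) : Prop :=
  x j = act Gn i j
lemma lit_inact (Gn : Fin n → Finset (Fin n)) (i j : Fin n) : ¬ lit Gn i (inact Gn i) j := by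
  unfold lit inact act; by_cases h : j ∈ Gn i <;> simp [h]
lemma lit_congr (Gn : Fin n → Finset (Fin n)) (i : Fin n) {x y : Fin n → Fin 2} {j k : Fin n}
    (hxy : ∀ l, l ≠ k → x l = y l) (hjk : j ≠ k) : lit Gn i x j ↔ lit Gn i y j := by
  unfold lit; rw [hxy j hjk]
lemma lit_mono_p (Gn : Fin n → Finset (Fin n)) {i k : Fin n} (hk : k ∉ Gn i)
    {x y : Fin n → Fin 2} (hxy : ∀ l, l ≠ k → x l = y l) (hle : x k ≤ y k)
    {j : Fin n} (h : lit Gn i x j) : lit Gn i y j := by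
  by_cases hjk : j = k
  · subst hjk; unfold lit act at *; rw [if_neg hk] at *; omega
  · exact (lit_congr Gn i hxy hjk).1 h
lemma lit_mono_n (Gn : Fin n → Finset (Fin n)) {i k : Fin n} (hk : k ∈ Gn i)
    {x y : Fin n → Fin 2} (hxy : ∀ l, l ≠ k → x l = y l) (hle : x k ≤ y k)
    {j : Fin n} (h : lit Gn i y j) : lit Gn i x j := by
  by_cases hjk : j = k
  · subst hjk; unfold lit act at *; rw [if_pos hk] at *; omega
  · exact (lit_congr Gn i hxy hjk).2 h
lemma filter_eq (T D : Finset (Fin n)) (x : Fin n → Fin 2)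
    (h : ∀ j ∈ T, (x j = 1 ↔ j ∈ D)) (hD : D ⊆ T) :
    T.filter (fun j => x j = 1) = D := by
  ext j
  simp only [Finset.mem_filter]
  exact ⟨fun ⟨hj, hx⟩ => (h j hj).1 hx, fun hj => ⟨hD hj, (h j (hD hj)).2 hj⟩⟩
lemma filter_congr' (T : Finset (Fin n)) {x y : Fin n → Fin 2} {k : Fin n}
    (hxy : ∀ l, l ≠ k → x l = y l) (hk : k ∉ T) :
    T.filter (fun j => x j = 1) = T.filter (fun j => y j = 1) := by
  apply Finset.filter_congr
  intro j hj
  rw [hxy j (fun h => hk (h ▸ hj))]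
def Phi2 (Gp Gn G0 : Fin n → Finset (Fin n)) (i : Fin n) (x : Fin n → Fin 2) : Prop :=
  Odd ((G0 i).filter (fun j => x j = 1)).card ∨ ∃ j ∈ Gp i ∪ Gn i, lit Gn i x j
lemma ite10_le {p q : Prop} [Decidable p] [Decidable q] (h : p → q) :
    (if p then (1 : Fin 2) else 0) ≤ (if q then 1 else 0) := by
  by_cases hp : p
  · rw [if_pos hp, if_pos (h hp)]
  · rw [if_neg hp]; exact Fin.zero_le _
lemma ite10_congr {p q : Prop} [Decidable p] [Decidable q] (h : p ↔ q) :
    (if p then (1 : Fin 2) else 0) = (if q then 1 else 0) := by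
  by_cases hp : p
  · rw [if_pos hp, if_pos (h.1 hp)]
  · rw [if_neg hp, if_neg (fun hq => hp (h.2 hq))]
lemma ite10_ne {p q : Prop} [Decidable p] [Decidable q] (hp : ¬ p) (hq : q) :
    (if p then (1 : Fin 2) else 0) ≠ (if q then 1 else 0) := by
  rw [if_neg hp, if_pos hq]; decide
lemma ite10_not_le {p q : Prop} [Decidable p] [Decidable q] (hp : ¬ p) (hq : q) :
    ¬ ((if q then (1 : Fin 2) else 0) ≤ (if p then 1 else 0)) := by
  rw [if_neg hp, if_pos hq]; decide

lemma branch2 (Gp Gn G0 : Fin n → Finset (Fin n)) (i : Fin n)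
    (hd1 : Disjoint (Gp i) (Gn i)) (hd2 : Disjoint (Gp i) (G0 i)) (hd3 : Disjoint (Gn i) (G0 i))
    (hc : (G0 i).card ≠ 1)
    (f : (Fin n → Fin 2) → Fin n → Fin 2)
    (hf : ∀ x, f x i = if Phi2 Gp Gn G0 i x then 1 else 0) :
    (∀ j, j ∉ Gp i ∪ Gn i ∪ G0 i → ¬ depends f j i) ∧
    (∀ j ∈ Gp i, depends f j i ∧ nondec f j i) ∧
    (∀ j ∈ Gn i, depends f j i ∧ noninc f j i) ∧
    (∀ j ∈ G0 i, depends f j i ∧ ¬ nondec f j i ∧ ¬ noninc f j i) := by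
  have hG0n : ∀ j ∈ G0 i, j ∉ Gn i := fun j hj h => Finset.disjoint_left.1 hd3 h hj
  have hG0p : ∀ j ∈ G0 i, j ∉ Gp i := fun j hj h => Finset.disjoint_left.1 hd2 h hj
  have hinact0 : ∀ j ∈ G0 i, inact Gn i j = 0 := by
    intro j hj; unfold inact; rw [if_neg (hG0n j hj)]
  -- base point evaluates to false
  have E0 : ¬ Phi2 Gp Gn G0 i (inact Gn i) := by
    rintro (h | ⟨j, _, hlit⟩)
    · rw [filter_eq (G0 i) ∅ _ (fun j hj => by simp [hinact0 j hj]) (Finset.empty_subset _)] at h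
      simp at h
    · exact lit_inact Gn i j hlit
  -- congruence for untouched coordinates
  have Hcongr : ∀ k, k ∉ Gp i ∪ Gn i ∪ G0 i → ∀ x y : Fin n → Fin 2,
      (∀ l, l ≠ k → x l = y l) → (Phi2 Gp Gn G0 i x ↔ Phi2 Gp Gn G0 i y) := by
    intro k hk x y hxy
    simp only [Finset.mem_union, not_or] at hk
    unfold Phi2
    rw [filter_congr' (G0 i) hxy hk.2]
    have : ∀ j ∈ Gp i ∪ Gn i, (lit Gn i x j ↔ lit Gn i y j) := by
      intro j hj
      refine lit_congr Gn i hxy (fun h => ?_)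
      subst h
      rcases Finset.mem_union.1 hj with h | h
      · exact hk.1.1 h
      · exact hk.1.2 h
    constructor
    · rintro (h | ⟨j, hj, hl⟩)
      · exact Or.inl h
      · exact Or.inr ⟨j, hj, (this j hj).1 hl⟩
    · rintro (h | ⟨j, hj, hl⟩)
      · exact Or.inl h
      · exact Or.inr ⟨j, hj, (this j hj).2 hl⟩
  refine ⟨?_, ?_, ?_, ?_⟩
  · rintro j hj ⟨x, y, hxy, hne⟩
    exact hne (by rw [hf, hf]; exact ite10_congr (Hcongr j hj x y hxy))
  · -- positive arcs
    intro j hj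
    have hjn : j ∉ Gn i := Finset.disjoint_left.1 hd1 hj
    have hj0 : j ∉ G0 i := Finset.disjoint_left.1 hd2 hj
    constructor
    · refine ⟨inact Gn i, Function.update (inact Gn i) j (act Gn i j), ?_, ?_⟩
      · intro k hk; rw [Function.update_of_ne hk]
      · rw [hf, hf]
        refine ite10_ne E0 (Or.inr ⟨j, Finset.mem_union_left _ hj, ?_⟩)
        unfold lit; rw [Function.update_self]
    · intro x y hxy hle
      rw [hf, hf]
      refine ite10_le ?_
      rintro (h | ⟨l, hl, hlit⟩)
      · exact Or.inl (by rwa [filter_congr' (G0 i) hxy hj0] at h)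
      · exact Or.inr ⟨l, hl, lit_mono_p Gn hjn hxy hle hlit⟩
  · -- negative arcs
    intro j hj
    have hj0 : j ∉ G0 i := Finset.disjoint_left.1 hd3 hj
    constructor
    · refine ⟨inact Gn i, Function.update (inact Gn i) j (act Gn i j), ?_, ?_⟩
      · intro k hk; rw [Function.update_of_ne hk]
      · rw [hf, hf]
        refine ite10_ne E0 (Or.inr ⟨j, Finset.mem_union_right _ hj, ?_⟩)
        unfold lit; rw [Function.update_self]
    · intro x y hxy hle
      rw [hf, hf]
      refine ite10_le ?_
      rintro (h | ⟨l, hl, hlit⟩)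
      · exact Or.inl (by rwa [filter_congr' (G0 i) (fun l hl => (hxy l hl).symm) hj0] at h)
      · exact Or.inr ⟨l, hl, lit_mono_n Gn hj hxy hle hlit⟩
  · -- null arcs
    intro j hj
    have h2 : 2 ≤ (G0 i).card := by
      have : 0 < (G0 i).card := Finset.card_pos.2 ⟨j, hj⟩
      omega
    obtain ⟨j', hj', hjj'⟩ := Finset.exists_mem_ne (s := G0 i) (by omega) j
    -- point with exactly j set to 1 on G0
    have Ej : Phi2 Gp Gn G0 i (Function.update (inact Gn i) j 1) := by
      refine Or.inl ?_
      rw [filter_eq (G0 i) {j} _ ?_ (Finset.singleton_subset_iff.2 hj)]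
      · simp
      · intro l hl
        by_cases hlj : l = j
        · subst hlj; simp
        · rw [Function.update_of_ne hlj]
          simp [hinact0 l hl, hlj]
    have Ej' : Phi2 Gp Gn G0 i (Function.update (inact Gn i) j' 1) := by
      refine Or.inl ?_
      rw [filter_eq (G0 i) {j'} _ ?_ (Finset.singleton_subset_iff.2 hj')]
      · simp
      · intro l hl
        by_cases hlj : l = j'
        · subst hlj; simp
        · rw [Function.update_of_ne hlj]
          simp [hinact0 l hl, hlj]
    -- point with j and j' set to 1 : even parity, no literals
    have Ejj' : ¬ Phi2 Gp Gn G0 i (Function.update (Function.update (inact Gn i) j' 1) j 1) := by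
      rintro (h | ⟨l, hl, hlit⟩)
      · rw [filter_eq (G0 i) {j, j'} _ ?_ ?_] at h
        · rw [Finset.card_insert_of_notMem (by simp [Ne.symm hjj']), Finset.card_singleton] at h
          simp [Nat.odd_iff] at h
        · intro l hl
          by_cases hlj : l = j
          · subst hlj; simp
          · by_cases hlj' : l = j'
            · subst hlj'; rw [Function.update_of_ne hlj, Function.update_self]; simp
            · rw [Function.update_of_ne hlj, Function.update_of_ne hlj']
              simp [hinact0 l hl, hlj, hlj']
        · intro l hl
          simp only [Finset.mem_insert, Finset.mem_singleton] at hl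
          rcases hl with h | h
          · exact h ▸ hj
          · exact h ▸ hj'
      · have hlj : l ≠ j := by
          rintro rfl
          rcases Finset.mem_union.1 hl with h | h
          · exact hG0p l hj h
          · exact hG0n l hj h
        have hlj' : l ≠ j' := by
          rintro rfl
          rcases Finset.mem_union.1 hl with h | h
          · exact hG0p l hj' h
          · exact hG0n l hj' h
        rw [lit_congr Gn i (x := Function.update (Function.update (inact Gn i) j' 1) j 1)
          (y := Function.update (inact Gn i) j' 1) (fun m hm => Function.update_of_ne hm _ _) hlj] at hlit
        rw [lit_congr Gn i (x := Function.update (inact Gn i) j' 1)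
          (y := inact Gn i) (fun m hm => Function.update_of_ne hm _ _) hlj'] at hlit
        exact lit_inact Gn i l hlit
    have hij0 : inact Gn i j = 0 := hinact0 j hj
    refine ⟨?_, ?_, ?_⟩
    · refine ⟨inact Gn i, Function.update (inact Gn i) j 1, ?_, ?_⟩
      · intro k hk; rw [Function.update_of_ne hk]
      · rw [hf, hf]; exact ite10_ne E0 Ej
    · intro h
      have := h (Function.update (inact Gn i) j' 1)
        (Function.update (Function.update (inact Gn i) j' 1) j 1)
        (fun k hk => (Function.update_of_ne hk _ _).symm) ?_
      · rw [hf, hf] at this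
        exact ite10_not_le Ejj' Ej' this
      · rw [Function.update_of_ne hjj'.symm, Function.update_self, hij0]
        decide
    · intro h
      have := h (inact Gn i) (Function.update (inact Gn i) j 1)
        (fun k hk => (Function.update_of_ne hk _ _).symm) ?_
      · rw [hf, hf] at this
        exact ite10_not_le E0 Ej this
      · rw [Function.update_self, hij0]
        decide
def Phi1 (Gp Gn : Fin n → Finset (Fin n)) (i a b c : Fin n) (x : Fin n → Fin 2) : Prop :=
  (x a = 1 ∧ lit Gn i x b) ∨ (x a = 0 ∧ lit Gn i x c) ∨
    ∃ j ∈ (Gp i ∪ Gn i) \ {b, c}, lit Gn i x j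

lemma branch1 (Gp Gn G0 : Fin n → Finset (Fin n)) (i a b c : Fin n)
    (hd1 : Disjoint (Gp i) (Gn i)) (hd2 : Disjoint (Gp i) (G0 i)) (hd3 : Disjoint (Gn i) (G0 i))
    (ha : G0 i = {a}) (hbS : b ∈ Gp i ∪ Gn i) (hcS : c ∈ Gp i ∪ Gn i) (hbc : b ≠ c)
    (f : (Fin n → Fin 2) → Fin n → Fin 2)
    (hf : ∀ x, f x i = if Phi1 Gp Gn i a b c x then 1 else 0) :
    (∀ j, j ∉ Gp i ∪ Gn i ∪ G0 i → ¬ depends f j i) ∧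
    (∀ j ∈ Gp i, depends f j i ∧ nondec f j i) ∧
    (∀ j ∈ Gn i, depends f j i ∧ noninc f j i) ∧
    (∀ j ∈ G0 i, depends f j i ∧ ¬ nondec f j i ∧ ¬ noninc f j i) := by
  have haS : a ∉ Gp i ∪ Gn i := by
    intro h
    have haG0 : a ∈ G0 i := ha ▸ Finset.mem_singleton_self a
    rcases Finset.mem_union.1 h with h | h
    · exact Finset.disjoint_left.1 hd2 h haG0
    · exact Finset.disjoint_left.1 hd3 h haG0
  have hba : b ≠ a := fun h => haS (h ▸ hbS)
  have hca : c ≠ a := fun h => haS (h ▸ hcS)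
  have hia : inact Gn i a = 0 := by
    unfold inact
    rw [if_neg (fun h => haS (Finset.mem_union_right _ h))]
  -- congruence lemma
  have Hcongr : ∀ k, k ∉ Gp i ∪ Gn i ∪ G0 i → ∀ x y : Fin n → Fin 2,
      (∀ l, l ≠ k → x l = y l) → (Phi1 Gp Gn i a b c x ↔ Phi1 Gp Gn i a b c y) := by
    intro k hk x y hxy
    simp only [Finset.mem_union, not_or] at hk
    have hak : a ≠ k := fun h => hk.2 (h ▸ ha ▸ Finset.mem_singleton_self a)
    have hSk : ∀ j ∈ Gp i ∪ Gn i, j ≠ k := by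
      intro j hj h
      rcases Finset.mem_union.1 hj with h' | h'
      · exact hk.1.1 (h ▸ h')
      · exact hk.1.2 (h ▸ h')
    unfold Phi1
    rw [hxy a hak]
    constructor
    · rintro (⟨h1, h2⟩ | ⟨h1, h2⟩ | ⟨j, hj, hl⟩)
      · exact Or.inl ⟨h1, (lit_congr Gn i hxy (hSk b hbS)).1 h2⟩
      · exact Or.inr (Or.inl ⟨h1, (lit_congr Gn i hxy (hSk c hcS)).1 h2⟩)
      · exact Or.inr (Or.inr ⟨j, hj, (lit_congr Gn i hxy (hSk j (Finset.mem_sdiff.1 hj).1)).1 hl⟩)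
    · rintro (⟨h1, h2⟩ | ⟨h1, h2⟩ | ⟨j, hj, hl⟩)
      · exact Or.inl ⟨h1, (lit_congr Gn i hxy (hSk b hbS)).2 h2⟩
      · exact Or.inr (Or.inl ⟨h1, (lit_congr Gn i hxy (hSk c hcS)).2 h2⟩)
      · exact Or.inr (Or.inr ⟨j, hj, (lit_congr Gn i hxy (hSk j (Finset.mem_sdiff.1 hj).1)).2 hl⟩)
  -- base point is false
  have E0 : ¬ Phi1 Gp Gn i a b c (inact Gn i) := by
    rintro (⟨h1, _⟩ | ⟨_, h2⟩ | ⟨j, _, hl⟩)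
    · rw [hia] at h1; exact absurd h1 (by decide)
    · exact lit_inact Gn i c h2
    · exact lit_inact Gn i j hl
  -- dependence for all signed variables
  have hdepS : ∀ k ∈ Gp i ∪ Gn i, depends f k i := by
    intro k hk
    have hka : k ≠ a := fun h => haS (h ▸ hk)
    by_cases hkb : k = b
    · subst hkb
      refine ⟨Function.update (inact Gn i) a 1,
        Function.update (Function.update (inact Gn i) a 1) k (act Gn i k),
        fun l hl => (Function.update_of_ne hl _ _).symm, ?_⟩
      rw [hf, hf]
      refine ite10_ne ?_ ?_
      · rintro (⟨_, h2⟩ | ⟨h1, _⟩ | ⟨j, hj, hl⟩)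
        · rw [lit_congr Gn i (y := inact Gn i)
            (fun l hl => Function.update_of_ne hl _ _) hka] at h2
          exact lit_inact Gn i k h2
        · rw [Function.update_self] at h1; exact absurd h1 (by decide)
        · have hja : j ≠ a := fun h => haS (h ▸ (Finset.mem_sdiff.1 hj).1)
          rw [lit_congr Gn i (y := inact Gn i)
            (fun l hl => Function.update_of_ne hl _ _) hja] at hl
          exact lit_inact Gn i j hl
      · refine Or.inl ⟨?_, ?_⟩
        · rw [Function.update_of_ne hka.symm, Function.update_self]
        · unfold lit; rw [Function.update_self]
    · by_cases hkc : k = c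
      · subst hkc
        refine ⟨inact Gn i, Function.update (inact Gn i) k (act Gn i k),
          fun l hl => (Function.update_of_ne hl _ _).symm, ?_⟩
        rw [hf, hf]
        refine ite10_ne E0 ?_
        refine Or.inr (Or.inl ⟨?_, ?_⟩)
        · rw [Function.update_of_ne hka.symm, hia]
        · unfold lit; rw [Function.update_self]
      · have hkd : k ∈ (Gp i ∪ Gn i) \ {b, c} := by
          simp [Finset.mem_sdiff, hk, hkb, hkc]
        refine ⟨inact Gn i, Function.update (inact Gn i) k (act Gn i k),
          fun l hl => (Function.update_of_ne hl _ _).symm, ?_⟩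
        rw [hf, hf]
        refine ite10_ne E0 ?_
        refine Or.inr (Or.inr ⟨k, hkd, ?_⟩)
        unfold lit; rw [Function.update_self]
  refine ⟨?_, ?_, ?_, ?_⟩
  · rintro j hj ⟨x, y, hxy, hne⟩
    exact hne (by rw [hf, hf]; exact ite10_congr (Hcongr j hj x y hxy))
  · intro k hk
    have hkn : k ∉ Gn i := Finset.disjoint_left.1 hd1 hk
    have hka : k ≠ a := fun h => haS (h ▸ Finset.mem_union_left _ hk)
    refine ⟨hdepS k (Finset.mem_union_left _ hk), ?_⟩
    intro x y hxy hle
    rw [hf, hf]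
    refine ite10_le ?_
    rintro (⟨h1, h2⟩ | ⟨h1, h2⟩ | ⟨j, hj, hl⟩)
    · exact Or.inl ⟨by rw [← hxy a hka.symm]; exact h1, lit_mono_p Gn hkn hxy hle h2⟩
    · exact Or.inr (Or.inl ⟨by rw [← hxy a hka.symm]; exact h1, lit_mono_p Gn hkn hxy hle h2⟩)
    · exact Or.inr (Or.inr ⟨j, hj, lit_mono_p Gn hkn hxy hle hl⟩)
  · intro k hk
    have hka : k ≠ a := fun h => haS (h ▸ Finset.mem_union_right _ hk)
    refine ⟨hdepS k (Finset.mem_union_right _ hk), ?_⟩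
    intro x y hxy hle
    rw [hf, hf]
    refine ite10_le ?_
    rintro (⟨h1, h2⟩ | ⟨h1, h2⟩ | ⟨j, hj, hl⟩)
    · exact Or.inl ⟨by rw [hxy a hka.symm]; exact h1, lit_mono_n Gn hk hxy hle h2⟩
    · exact Or.inr (Or.inl ⟨by rw [hxy a hka.symm]; exact h1, lit_mono_n Gn hk hxy hle h2⟩)
    · exact Or.inr (Or.inr ⟨j, hj, lit_mono_n Gn hk hxy hle hl⟩)
  · intro j hj
    have hja : j = a := Finset.mem_singleton.1 (ha ▸ hj)
    subst hja
    -- pair 1 : b active, flip a from 0 to 1 goes from 0 to 1 (kills noninc)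
    set x1 := Function.update (inact Gn i) b (act Gn i b) with hx1
    set y1 := Function.update x1 j 1 with hy1
    have hx1a : x1 j = 0 := by rw [hx1, Function.update_of_ne hba.symm, hia]
    have Ex1 : ¬ Phi1 Gp Gn i j b c x1 := by
      rintro (⟨h1, _⟩ | ⟨_, h2⟩ | ⟨l, hl, hll⟩)
      · rw [hx1a] at h1; exact absurd h1 (by decide)
      · rw [hx1, lit_congr Gn i (y := inact Gn i)
          (fun m hm => Function.update_of_ne hm _ _) hbc.symm] at h2
        exact lit_inact Gn i c h2
      · have hlb : l ≠ b := by
          have := Finset.mem_sdiff.1 hl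
          simp only [Finset.mem_insert, Finset.mem_singleton, not_or] at this
          exact this.2.1
        rw [hx1, lit_congr Gn i (y := inact Gn i)
          (fun m hm => Function.update_of_ne hm _ _) hlb] at hll
        exact lit_inact Gn i l hll
    have Ey1 : Phi1 Gp Gn i j b c y1 := by
      refine Or.inl ⟨by rw [hy1, Function.update_self], ?_⟩
      rw [hy1, lit_congr Gn i (y := x1) (fun m hm => Function.update_of_ne hm _ _) hba]
      unfold lit; rw [hx1, Function.update_self]
    -- pair 2 : c active, flip a from 0 to 1 goes from 1 to 0 (kills nondec)
    set x2 := Function.update (inact Gn i) c (act Gn i c) with hx2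
    set y2 := Function.update x2 j 1 with hy2
    have hx2a : x2 j = 0 := by rw [hx2, Function.update_of_ne hca.symm, hia]
    have Ex2 : Phi1 Gp Gn i j b c x2 := by
      refine Or.inr (Or.inl ⟨hx2a, ?_⟩)
      unfold lit; rw [hx2, Function.update_self]
    have Ey2 : ¬ Phi1 Gp Gn i j b c y2 := by
      rintro (⟨_, h2⟩ | ⟨h1, _⟩ | ⟨l, hl, hll⟩)
      · rw [hy2, lit_congr Gn i (y := x2) (fun m hm => Function.update_of_ne hm _ _) hba,
          hx2, lit_congr Gn i (y := inact Gn i)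
          (fun m hm => Function.update_of_ne hm _ _) hbc] at h2
        exact lit_inact Gn i b h2
      · rw [hy2, Function.update_self] at h1; exact absurd h1 (by decide)
      · have hlc : l ≠ c := by
          have := Finset.mem_sdiff.1 hl
          simp only [Finset.mem_insert, Finset.mem_singleton, not_or] at this
          exact this.2.2
        have hla : l ≠ j := fun h => haS (h ▸ (Finset.mem_sdiff.1 hl).1)
        rw [hy2, lit_congr Gn i (y := x2) (fun m hm => Function.update_of_ne hm _ _) hla,
          hx2, lit_congr Gn i (y := inact Gn i)
          (fun m hm => Function.update_of_ne hm _ _) hlc] at hll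
        exact lit_inact Gn i l hll
    refine ⟨?_, ?_, ?_⟩
    · refine ⟨x1, y1, fun l hl => (Function.update_of_ne hl _ _).symm, ?_⟩
      rw [hf, hf]
      exact ite10_ne Ex1 Ey1
    · intro h
      have := h x2 y2 (fun l hl => (Function.update_of_ne hl _ _).symm)
        (by rw [hx2a, hy2, Function.update_self]; decide)
      rw [hf, hf] at this
      exact ite10_not_le Ey2 Ex2 this
    · intro h
      have := h x1 y1 (fun l hl => (Function.update_of_ne hl _ _).symm)
        (by rw [hx1a, hy1, Function.update_self]; decide)
      rw [hf, hf] at this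
      exact ite10_not_le Ex1 Ey1 this
noncomputable def F (Gp Gn G0 : Fin n → Finset (Fin n)) (x : Fin n → Fin 2) (i : Fin n) :
    Fin 2 :=
  if h : (G0 i).card = 1 ∧ 1 < (Gp i ∪ Gn i).card then
    (if Phi1 Gp Gn i ((G0 i).min' (Finset.card_pos.mp (by omega)))
        ((Gp i ∪ Gn i).min' (Finset.card_pos.mp (by omega)))
        (((Gp i ∪ Gn i).erase ((Gp i ∪ Gn i).min' (Finset.card_pos.mp (by omega)))).min'
          (Finset.card_pos.mp
            (by rw [Finset.card_erase_of_mem (Finset.min'_mem _ _)]; omega))) x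
     then 1 else 0)
  else
    (if Phi2 Gp Gn G0 i x then 1 else 0)

lemma F_spec_ne (Gp Gn G0 : Fin n → Finset (Fin n)) (i : Fin n) (h1 : (G0 i).card ≠ 1) :
    ∀ x, F Gp Gn G0 x i = if Phi2 Gp Gn G0 i x then 1 else 0 := by
  intro x
  unfold F
  rw [dif_neg (fun h => h1 h.1)]

lemma F_spec_one (Gp Gn G0 : Fin n → Finset (Fin n)) (i : Fin n)
    (h1 : (G0 i).card = 1) (h2 : 1 < (Gp i ∪ Gn i).card) :
    ∃ a b c : Fin n, G0 i = {a} ∧ b ∈ Gp i ∪ Gn i ∧ c ∈ Gp i ∪ Gn i ∧ b ≠ c ∧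
      ∀ x, F Gp Gn G0 x i = if Phi1 Gp Gn i a b c x then 1 else 0 := by
  have hN : (G0 i).Nonempty := Finset.card_pos.mp (by omega)
  have hS : (Gp i ∪ Gn i).Nonempty := Finset.card_pos.mp (by omega)
  have hE : ((Gp i ∪ Gn i).erase ((Gp i ∪ Gn i).min' hS)).Nonempty :=
    Finset.card_pos.mp (by rw [Finset.card_erase_of_mem (Finset.min'_mem _ _)]; omega)
  obtain ⟨a0, ha0⟩ := Finset.card_eq_one.1 h1
  have hmin : (G0 i).min' hN = a0 := Finset.mem_singleton.1 (ha0 ▸ Finset.min'_mem _ hN)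
  refine ⟨(G0 i).min' hN, (Gp i ∪ Gn i).min' hS,
    ((Gp i ∪ Gn i).erase ((Gp i ∪ Gn i).min' hS)).min' hE, ?_, Finset.min'_mem _ _,
    Finset.mem_of_mem_erase (Finset.min'_mem _ _),
    (Finset.ne_of_mem_erase (Finset.min'_mem _ _)).symm, ?_⟩
  · rw [hmin, ha0]
  · intro x
    unfold F
    rw [dif_pos ⟨h1, h2⟩]

end

/-- a signed digraph admits a boolean function iff every vertex with exactly one
null in-arc has at least two signed in-arcs. -/
theorem stmt4 (n : ℕ) (Gp Gn G0 : Fin n → Finset (Fin n))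
    (hdisj : ∀ i, Disjoint (Gp i) (Gn i) ∧ Disjoint (Gp i) (G0 i) ∧ Disjoint (Gn i) (G0 i)) :
    (∃ f : (Fin n → Fin 2) → (Fin n → Fin 2), isIG Gp Gn G0 f) ↔
      ∀ i, (G0 i).card = 1 → 2 ≤ (Gp i).card + (Gn i).card := by
  constructor
  · rintro ⟨f, h1f, h2f, h3f⟩ i hc
    exact fwd Gp Gn G0 hdisj f h1f h2f h3f i hc
  · intro H
    have key : ∀ i, (∀ j, j ∉ Gp i ∪ Gn i ∪ G0 i → ¬ depends (F Gp Gn G0) j i) ∧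
        (∀ j ∈ Gp i, depends (F Gp Gn G0) j i ∧ nondec (F Gp Gn G0) j i) ∧
        (∀ j ∈ Gn i, depends (F Gp Gn G0) j i ∧ noninc (F Gp Gn G0) j i) ∧
        (∀ j ∈ G0 i, depends (F Gp Gn G0) j i ∧ ¬ nondec (F Gp Gn G0) j i ∧
          ¬ noninc (F Gp Gn G0) j i) := by
      intro i
      by_cases hc1 : (G0 i).card = 1
      · have h2 : 1 < (Gp i ∪ Gn i).card := by
          rw [Finset.card_union_of_disjoint (hdisj i).1]
          have := H i hc1
          omega
        obtain ⟨a, b, c, ha, hb, hc', hbc, hrw⟩ := F_spec_one Gp Gn G0 i hc1 h2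
        exact branch1 Gp Gn G0 i a b c (hdisj i).1 (hdisj i).2.1 (hdisj i).2.2 ha hb hc' hbc
          (F Gp Gn G0) hrw
      · exact branch2 Gp Gn G0 i (hdisj i).1 (hdisj i).2.1 (hdisj i).2.2 hc1
          (F Gp Gn G0) (F_spec_ne Gp Gn G0 i hc1)
    refine ⟨F Gp Gn G0, isIG_of ?_ (fun i j => (key i).2.1 j) (fun i j => (key i).2.2.1 j)
      (fun i j => (key i).2.2.2 j)⟩
    intro i j hd
    by_contra h
    exact (key i).1 j h hd
end

section
/- Let G be a digraph on n vertices that has a primitive spanning strict subgraph H (H strongly connected, gcd of its cycle lengths equal to 1, same vertex set as G, but H ≠ G). Define f : {0,1}ⁿ → {0,1}ⁿ by fᵢ(x) = (⋀_{j∈H(i)} xⱼ) ∧ (⋀_{j∈G(i)\H(i)} ¬xⱼ). Then f^{n²−2n+3} is the constant function 0. -/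
/-- `hasWalk adj p u v`: there is a walk of length `p` from `u` to `v` following arcs of `adj`
(`adj u w` meaning there is an arc from `u` to `w`). -/
def hasWalk {n : ℕ} (adj : Fin n → Fin n → Prop) : ℕ → Fin n → Fin n → Prop
  | 0, u, v => u = v
  | p + 1, u, v => ∃ w, adj u w ∧ hasWalk adj p w v

/-- A digraph is primitive if it is strongly connected and the gcd of the lengths of its
(closed) cycles is 1, i.e. every common divisor of all closed walk lengths divides 1. -/
def IsPrimitive {n : ℕ} (adj : Fin n → Fin n → Prop) : Prop :=
  (∀ u v, ∃ p, hasWalk adj p u v) ∧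
  ∀ d : ℕ, (∀ p, 0 < p → (∃ u, hasWalk adj p u u) → d ∣ p) → d ∣ 1

namespace Aux


theorem walk_trans {n : ℕ} {adj : Fin n → Fin n → Prop} :
    ∀ {p : ℕ} {u v : Fin n} {q : ℕ} {w : Fin n},
      hasWalk adj p u v → hasWalk adj q v w → hasWalk adj (p + q) u w := by
  intro p
  induction p with
  | zero =>
    intro u v q w h1 h2
    have : u = v := h1
    subst this
    simpa using h2
  | succ p ih =>
    intro u v q w h1 h2
    obtain ⟨x, hx, hw⟩ := h1
    rw [show p + 1 + q = (p + q) + 1 from by omega]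
    exact ⟨x, hx, ih hw h2⟩

theorem walk_split {n : ℕ} {adj : Fin n → Fin n → Prop} :
    ∀ (p : ℕ) {q : ℕ} {u w : Fin n}, hasWalk adj (p + q) u w →
      ∃ v, hasWalk adj p u v ∧ hasWalk adj q v w := by
  intro p
  induction p with
  | zero => intro q u w h; exact ⟨u, rfl, by simpa using h⟩
  | succ p ih =>
    intro q u w h
    rw [show p + 1 + q = (p + q) + 1 from by omega] at h
    obtain ⟨x, hx, hw⟩ := h
    obtain ⟨v, h1, h2⟩ := ih hw
    exact ⟨v, ⟨x, hx, h1⟩, h2⟩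

theorem walk_reverse {n : ℕ} {adj : Fin n → Fin n → Prop} :
    ∀ {p : ℕ} {u v : Fin n}, hasWalk adj p u v → hasWalk (fun a b => adj b a) p v u := by
  intro p
  induction p with
  | zero => intro u v h; exact (h : u = v).symm
  | succ p ih =>
    intro u v h
    obtain ⟨w, hw, h1⟩ := h
    exact walk_trans (ih h1) ⟨u, hw, rfl⟩

theorem walk_of_fun {n : ℕ} {adj : Fin n → Fin n → Prop} (c : ℕ → Fin n) :
    ∀ (d i : ℕ), (∀ k, i ≤ k → k < i + d → adj (c k) (c (k + 1))) →
      hasWalk adj d (c i) (c (i + d)) := by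
  intro d
  induction d with
  | zero => intro i _; show c i = c (i + 0); rw [Nat.add_zero]
  | succ d ih =>
    intro i h
    refine ⟨c (i + 1), h i le_rfl (by omega), ?_⟩
    have := ih (i + 1) (fun k hk1 hk2 => h k (by omega) (by omega))
    rwa [show i + 1 + d = i + (d + 1) from by omega] at this

theorem exists_fun_of_walk {n : ℕ} {adj : Fin n → Fin n → Prop} :
    ∀ {p : ℕ} {u v : Fin n}, hasWalk adj p u v →
      ∃ c : ℕ → Fin n, c 0 = u ∧ c p = v ∧ ∀ k < p, adj (c k) (c (k + 1)) := by
  intro p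
  induction p with
  | zero => intro u v h; exact ⟨fun _ => u, rfl, (h : u = v) ▸ rfl, by omega⟩
  | succ p ih =>
    intro u v h
    obtain ⟨w, hw, h1⟩ := h
    obtain ⟨c, hc0, hcp, hcadj⟩ := ih h1
    refine ⟨fun k => if k = 0 then u else c (k - 1), rfl, by simp [hcp], ?_⟩
    intro k hk
    rcases Nat.eq_zero_or_pos k with rfl | hkpos
    · simpa [hc0] using hw
    · have h2 : ¬ (k = 0) := by omega
      have h3 : ¬ (k + 1 = 0) := by omega
      simp only [h2, h3, if_false]
      have : k - 1 + 1 = k := by omega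
      have h4 := hcadj (k - 1) (by omega)
      rwa [this] at h4

theorem reach_univ {n : ℕ} (adj2 : Fin n → Fin n → Prop) (A : Finset (Fin n))
    (hA : A.Nonempty)
    (hpred : ∀ a ∈ A, ∃ a' ∈ A, adj2 a' a)
    (hconn : ∀ u v : Fin n, ∃ p, hasWalk adj2 p u v) :
    ∀ k, n - A.card ≤ k → ∀ v, ∃ a ∈ A, hasWalk adj2 k a v := by
  classical
  set T : ℕ → Finset (Fin n) :=
    fun k => Finset.univ.filter (fun v => ∃ a ∈ A, hasWalk adj2 k a v) with hT
  have hmem : ∀ k v, v ∈ T k ↔ ∃ a ∈ A, hasWalk adj2 k a v := by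
    intro k v; simp [hT]
  have hmono : ∀ k, T k ⊆ T (k + 1) := by
    intro k v hv
    rw [hmem] at hv ⊢
    obtain ⟨a, ha, hw⟩ := hv
    obtain ⟨a', ha', harc⟩ := hpred a ha
    exact ⟨a', ha', a, harc, hw⟩
  have hAT : ∀ k, A ⊆ T k := by
    intro k
    induction k with
    | zero => intro a ha; rw [hmem]; exact ⟨a, ha, rfl⟩
    | succ k ih => exact ih.trans (hmono k)
  have hstab : ∀ k, T k = T (k + 1) → T k = Finset.univ := by
    intro k he
    have hcl : ∀ (p : ℕ) (u v : Fin n), u ∈ T k → hasWalk adj2 p u v → v ∈ T k := by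
      intro p
      induction p with
      | zero => intro u v hu hw; exact (hw : u = v) ▸ hu
      | succ p ih =>
        intro u v hu hw
        obtain ⟨w, harc, hw'⟩ := hw
        have hwT : w ∈ T k := by
          have hw1 : w ∈ T (k + 1) := by
            rw [hmem] at hu ⊢
            obtain ⟨a, ha, hwa⟩ := hu
            exact ⟨a, ha, walk_trans hwa ⟨w, harc, rfl⟩⟩
          rw [he]; exact hw1
        exact ih w v hwT hw'
    obtain ⟨a0, ha0⟩ := hA
    apply Finset.eq_univ_iff_forall.mpr
    intro v
    obtain ⟨p, hw⟩ := hconn a0 v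
    exact hcl p a0 v (hAT k ha0) hw
  have hcard : ∀ k, A.card + k ≤ (T k).card ∨ T k = Finset.univ := by
    intro k
    induction k with
    | zero => left; simpa using Finset.card_le_card (hAT 0)
    | succ k ih =>
      rcases ih with h | h
      · by_cases he : T k = T (k + 1)
        · right; rw [← he]; exact hstab k he
        · left
          have hlt : (T k).card < (T (k + 1)).card :=
            Finset.card_lt_card (lt_of_le_of_ne (hmono k) he)
          omega
      · right
        exact Finset.univ_subset_iff.mp (h ▸ hmono k)
  have h0 : T (n - A.card) = Finset.univ := by
    rcases hcard (n - A.card) with h | h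
    · apply Finset.eq_univ_of_card
      have hle : (T (n - A.card)).card ≤ n := by
        simpa using Finset.card_le_univ (T (n - A.card))
      have hAn : A.card ≤ n := by simpa using Finset.card_le_univ A
      have hApos : 0 < A.card := Finset.card_pos.mpr hA
      simp only [Fintype.card_fin]
      omega
    · exact h
  have hstep : ∀ j, T (n - A.card + j) = Finset.univ := by
    intro j
    induction j with
    | zero => simpa using h0
    | succ j ih =>
      apply Finset.univ_subset_iff.mp
      calc Finset.univ = T (n - A.card + j) := ih.symm
        _ ⊆ T (n - A.card + j + 1) := hmono _
  intro k hk v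
  obtain ⟨j, rfl⟩ := Nat.exists_eq_add_of_le hk
  have hv : v ∈ T (n - A.card + j) := (hstep j) ▸ Finset.mem_univ v
  rwa [hmem] at hv



theorem coarse {n : ℕ} (hn : 1 ≤ n) (adj : Fin n → Fin n → Prop)
    (hc : ∀ u v, ∃ p, hasWalk adj p u v)
    (hg : ∀ d : ℕ, (∀ p, 0 < p → (∃ u, hasWalk adj p u u) → d ∣ p) → d ∣ 1)
    (hpos : ∃ p, 0 < p ∧ ∃ u, hasWalk adj p u u) :
    ∃ B, ∀ p, B ≤ p → ∀ u v : Fin n, hasWalk adj p u v := by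
  classical
  set z0 : Fin n := ⟨0, by omega⟩ with hz0
  set S : ℕ → Prop := fun p => hasWalk adj p z0 z0 with hS
  have hS0 : S 0 := rfl
  have hSadd : ∀ {a b}, S a → S b → S (a + b) := fun ha hb => walk_trans ha hb
  have hSsmul : ∀ (k) {a}, S a → S (k * a) := by
    intro k a ha
    induction k with
    | zero => simpa using hS0
    | succ k ih =>
      have := hSadd ih ha
      rwa [show k * a + a = (k + 1) * a from by ring] at this
  -- a positive element of S
  have hSpos : ∃ a, 0 < a ∧ S a := by
    obtain ⟨p1, hp1, u1, hw1⟩ := hpos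
    obtain ⟨α, hα⟩ := hc z0 u1
    obtain ⟨β, hβ⟩ := hc u1 z0
    have : S (α + p1 + β) := walk_trans (walk_trans hα hw1) hβ
    exact ⟨α + p1 + β, by omega, this⟩
  -- the subgroup of differences
  let D : AddSubgroup ℤ :=
    { carrier := {z | ∃ a b : ℕ, S a ∧ S b ∧ z = (a : ℤ) - b}
      add_mem' := by
        rintro x y ⟨a1, b1, ha1, hb1, rfl⟩ ⟨a2, b2, ha2, hb2, rfl⟩
        exact ⟨a1 + a2, b1 + b2, hSadd ha1 ha2, hSadd hb1 hb2, by push_cast; ring⟩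
      zero_mem' := ⟨0, 0, hS0, hS0, by simp⟩
      neg_mem' := by
        rintro x ⟨a, b, ha, hb, rfl⟩
        exact ⟨b, a, hb, ha, by ring⟩ }
  obtain ⟨g, hgD⟩ := Int.subgroup_cyclic D
  have hmemD : ∀ z : ℤ, z ∈ D ↔ ∃ k : ℤ, z = k * g := by
    intro z
    rw [hgD, AddSubgroup.mem_closure_singleton]
    constructor
    · rintro ⟨k, hk⟩; exact ⟨k, by rw [← hk]; simp [smul_eq_mul]⟩
    · rintro ⟨k, hk⟩; exact ⟨k, by rw [hk]; simp [smul_eq_mul]⟩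
  have hdvdS : ∀ a : ℕ, S a → (g.natAbs : ℤ) ∣ (a : ℤ) := by
    intro a ha
    have : ((a : ℤ)) ∈ D := ⟨a, 0, ha, hS0, by simp⟩
    obtain ⟨k, hk⟩ := (hmemD _).mp this
    exact (Int.natAbs_dvd).mpr ⟨k, by rw [hk]; ring⟩
  have hdvd : ∀ p, 0 < p → (∃ u, hasWalk adj p u u) → g.natAbs ∣ p := by
    intro p hp ⟨u, hw⟩
    obtain ⟨α, hα⟩ := hc z0 u
    obtain ⟨β, hβ⟩ := hc u z0
    have h1 : S (α + β) := walk_trans hα hβ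
    have h2 : S (α + (p + β)) := walk_trans hα (walk_trans hw hβ)
    have d1 : g.natAbs ∣ (α + β) := by exact_mod_cast hdvdS _ h1
    have d2 : g.natAbs ∣ (α + (p + β)) := by exact_mod_cast hdvdS _ h2
    have := Nat.dvd_sub d2 d1
    rwa [show α + (p + β) - (α + β) = p from by omega] at this
  have hone : g.natAbs = 1 := Nat.dvd_one.mp (hg _ hdvd)
  -- 1 ∈ D
  have h1D : (1 : ℤ) ∈ D := by
    have hgmem : g ∈ D := by rw [hgD]; exact AddSubgroup.subset_closure rfl
    rcases Int.natAbs_eq g with h | h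
    · have hg1 : g = 1 := by rw [h, hone]; simp
      rwa [hg1] at hgmem
    · have hg1 : g = -1 := by rw [h, hone]; simp
      have := D.neg_mem hgmem
      rwa [hg1, neg_neg] at this
  obtain ⟨a, b, hSa, hSb, hab⟩ := h1D
  have hab' : a = b + 1 := by omega
  -- all m ≥ b*b are in S
  have hlarge : ∀ m, b * b ≤ m → S m := by
    intro m hm
    rcases Nat.eq_zero_or_pos b with rfl | hb
    · have h1 : S 1 := by rwa [hab'] at hSa
      have := hSsmul m h1
      rwa [Nat.mul_one] at this
    · have hrb : m % b < b := Nat.mod_lt _ hb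
      have hbq : b ≤ m / b := (Nat.le_div_iff_mul_le hb).mpr hm
      have hrq : m % b ≤ m / b := by omega
      obtain ⟨t, ht⟩ := Nat.exists_eq_add_of_le hrq
      have hdm := Nat.div_add_mod m b
      have h3 : (m % b) * (b + 1) + t * b = b * (m % b + t) + m % b := by ring
      have h4 : b * (m % b + t) = b * (m / b) := by rw [← ht]
      have hm2 : m = (m % b) * (b + 1) + t * b := by omega
      rw [hm2]
      exact hSadd (hSsmul _ (hab' ▸ hSa)) (hSsmul t hSb)
  -- per-pair bound
  have hpair : ∀ u v : Fin n, ∃ B, ∀ p, B ≤ p → hasWalk adj p u v := by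
    intro u v
    obtain ⟨α, hα⟩ := hc u z0
    obtain ⟨β, hβ⟩ := hc z0 v
    refine ⟨α + β + b * b, fun p hp => ?_⟩
    have h1 : S (p - α - β) := hlarge _ (by omega)
    have h2 := walk_trans hα (walk_trans h1 hβ)
    rwa [show α + (p - α - β + β) = p from by omega] at h2
  choose Bf hBf using hpair
  refine ⟨Finset.univ.sup (fun uv : Fin n × Fin n => Bf uv.1 uv.2), fun p hp u v => ?_⟩
  have hle := Finset.le_sup (f := fun uv : Fin n × Fin n => Bf uv.1 uv.2) (Finset.mem_univ (u, v))
  exact hBf u v p (le_trans hle hp)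



theorem wielandt {n : ℕ} (hn : 2 ≤ n) (adj : Fin n → Fin n → Prop)
    (hc : ∀ u v, ∃ p, hasWalk adj p u v)
    (hg : ∀ d : ℕ, (∀ p, 0 < p → (∃ u, hasWalk adj p u u) → d ∣ p) → d ∣ 1) :
    ∀ p, n * n - 2 * n + 2 ≤ p → ∀ u v : Fin n, hasWalk adj p u v := by
  classical
  -- existence of a positive closed walk
  have hex : ∃ p, 0 < p ∧ ∃ u, hasWalk adj p u u := by
    obtain ⟨p, hp⟩ := hc ⟨0, by omega⟩ ⟨1, by omega⟩
    obtain ⟨q, hq⟩ := hc ⟨1, by omega⟩ ⟨0, by omega⟩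
    have hppos : 0 < p := by
      rcases Nat.eq_zero_or_pos p with rfl | h
      · have h0 : (0 : ℕ) = 1 := congrArg Fin.val (hp : (⟨0, by omega⟩ : Fin n) = (⟨1, by omega⟩ : Fin n))
        omega
      · exact h
    exact ⟨p + q, by omega, ⟨0, by omega⟩, walk_trans hp hq⟩
  set s := Nat.find hex with hsdef
  obtain ⟨hs_pos, u0, hu0⟩ := Nat.find_spec hex
  have hmin : ∀ m, 0 < m → m < s → ∀ u : Fin n, ¬ hasWalk adj m u u := by
    intro m h1 h2 u hw
    exact Nat.find_min hex h2 ⟨h1, u, hw⟩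
  obtain ⟨c, hc0, hcs, hcadj⟩ := exists_fun_of_walk hu0
  set cc : ℕ → Fin n := fun k => c (k % s) with hccdef
  have hccadj : ∀ k, adj (cc k) (cc (k + 1)) := by
    intro k
    have h1 : k % s < s := Nat.mod_lt _ hs_pos
    have heq : (k + 1) % s = (k % s + 1) % s := (Nat.mod_add_mod k s 1).symm
    by_cases h2 : k % s + 1 < s
    · have : (k % s + 1) % s = k % s + 1 := Nat.mod_eq_of_lt h2
      show adj (c (k % s)) (c ((k + 1) % s))
      rw [heq, this]
      exact hcadj _ h1
    · have h3 : k % s + 1 = s := by omega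
      have e : c ((k + 1) % s) = c (k % s + 1) := by
        rw [heq, h3, Nat.mod_self, hc0, hcs]
      show adj (c (k % s)) (c ((k + 1) % s))
      rw [e]
      exact hcadj _ h1
  have hccwalk : ∀ (i d : ℕ), hasWalk adj d (cc i) (cc (i + d)) :=
    fun i d => walk_of_fun cc d i (fun k _ _ => hccadj k)
  have hccper : ∀ k, cc (k + s) = cc k := by
    intro k; show c ((k + s) % s) = c (k % s); rw [Nat.add_mod_right]
  have hloops : ∀ k, hasWalk adj s (cc k) (cc k) := by
    intro k
    have := hccwalk k s
    rwa [hccper k] at this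
  -- injectivity of c on [0, s)
  have hinj : ∀ i j, i < j → j < s → c i ≠ c j := by
    intro i j hij hjs heq
    have hw := walk_of_fun c (j - i) i (fun k hk1 hk2 => hcadj k (by omega))
    rw [show i + (j - i) = j from by omega] at hw
    rw [← heq] at hw
    exact hmin (j - i) (by omega) (by omega) (c i) hw
  set C : Finset (Fin n) := (Finset.range s).image c with hCdef
  have hCcard : C.card = s := by
    rw [hCdef, Finset.card_image_of_injOn, Finset.card_range]
    intro i hi j hj hij
    simp only [Finset.coe_range, Set.mem_Iio] at hi hj
    rcases Nat.lt_trichotomy i j with h | h | h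
    · exact (hinj i j h hj hij).elim
    · exact h
    · exact (hinj j i h hi hij.symm).elim
  have hCmem : ∀ k, cc k ∈ C := by
    intro k
    rw [hCdef]
    exact Finset.mem_image.mpr ⟨k % s, Finset.mem_range.mpr (Nat.mod_lt _ hs_pos), rfl⟩
  have hCmem' : ∀ v ∈ C, ∃ k, cc k = v := by
    intro v hv
    rw [hCdef] at hv
    obtain ⟨k, hk, hkv⟩ := Finset.mem_image.mp hv
    refine ⟨k, ?_⟩
    show c (k % s) = v
    rw [Nat.mod_eq_of_lt (Finset.mem_range.mp hk)]
    exact hkv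
  have hsn : s ≤ n := by
    have := Finset.card_le_univ C
    simpa [hCcard] using this
  -- s ≤ n - 1
  have hsn1 : s ≤ n - 1 := by
    by_contra hcon
    have hseq : s = n := by omega
    have hCuniv : C = Finset.univ := by
      apply Finset.eq_univ_of_card
      simp [hCcard, hseq]
    have hpos' : ∀ v : Fin n, ∃ k, k < s ∧ c k = v := by
      intro v
      obtain ⟨k, hkv⟩ := hCmem' v (hCuniv ▸ Finset.mem_univ v)
      exact ⟨k % s, Nat.mod_lt _ hs_pos, hkv⟩
    choose pos hposlt hposc using hpos'
    -- every arc increments position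
    have harc : ∀ a b : Fin n, adj a b → pos b = (pos a + 1) % s := by
      intro a b hab
      -- walk from b back to a along the cycle
      have hpa := hposlt a
      have hpb := hposlt b
      rcases le_or_gt (pos b) (pos a) with hle | hlt
      · -- m = pos a - pos b
        have hw : hasWalk adj (pos a - pos b) b a := by
          have := hccwalk (pos b) (pos a - pos b)
          rw [show pos b + (pos a - pos b) = pos a from by omega] at this
          have e1 : cc (pos b) = b := by
            show c (pos b % s) = b
            rw [Nat.mod_eq_of_lt (hposlt b)]; exact hposc b
          have e2 : cc (pos a) = a := by
            show c (pos a % s) = a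
            rw [Nat.mod_eq_of_lt (hposlt a)]; exact hposc a
          rwa [e1, e2] at this
        have hclosed : hasWalk adj (1 + (pos a - pos b)) a a :=
          walk_trans (⟨b, hab, rfl⟩ : hasWalk adj 1 a b) hw
        have hge : ¬ (1 + (pos a - pos b) < s) := fun h =>
          hmin _ (by omega) h a hclosed
        have h6 : pos a = s - 1 ∧ pos b = 0 := by omega
        rw [h6.2, h6.1]
        rw [show s - 1 + 1 = s from by omega, Nat.mod_self]
      · -- m = pos a + s - pos b
        have hw : hasWalk adj (pos a + s - pos b) b a := by
          have := hccwalk (pos b) (pos a + s - pos b)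
          rw [show pos b + (pos a + s - pos b) = pos a + s from by omega] at this
          have e1 : cc (pos b) = b := by
            show c (pos b % s) = b
            rw [Nat.mod_eq_of_lt (hposlt b)]; exact hposc b
          have e2 : cc (pos a + s) = a := by
            rw [hccper]
            show c (pos a % s) = a
            rw [Nat.mod_eq_of_lt (hposlt a)]; exact hposc a
          rwa [e1, e2] at this
        have hclosed : hasWalk adj (1 + (pos a + s - pos b)) a a :=
          walk_trans (⟨b, hab, rfl⟩ : hasWalk adj 1 a b) hw
        have hge : ¬ (1 + (pos a + s - pos b) < s) := fun h =>
          hmin _ (by omega) h a hclosed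
        have h5 : pos b = pos a + 1 := by omega
        rw [h5, Nat.mod_eq_of_lt (by omega : pos a + 1 < s)]
    -- walks shift positions
    have hhom : ∀ (p : ℕ) (u v : Fin n), hasWalk adj p u v → pos v % s = (pos u + p) % s := by
      intro p
      induction p with
      | zero =>
        intro u v hw
        rw [(hw : u = v)]
        simp
      | succ p ih =>
        intro u v hw
        obtain ⟨w, hw1, hw2⟩ := hw
        have h1 := ih w v hw2
        have h2 := harc u w hw1
        rw [h1, h2, Nat.mod_add_mod]
        congr 1
        omega
    have hdvds : ∀ p, 0 < p → (∃ u, hasWalk adj p u u) → s ∣ p := by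
      rintro p hp ⟨u, hw⟩
      have := hhom p u u hw
      have h2 : (pos u + p) % s = pos u % s := this.symm
      have h3 : (pos u : ℕ) ≡ pos u + p [MOD s] := h2.symm
      have h4 := (Nat.modEq_iff_dvd' (by omega)).mp h3
      rwa [show pos u + p - pos u = p from by omega] at h4
    have := hg s hdvds
    have : s ≤ 1 := Nat.le_of_dvd (by omega) this
    omega
  -- coarse bound
  obtain ⟨B, hB⟩ := coarse (by omega) adj hc hg hex
  -- the s-step graph
  set adj' : Fin n → Fin n → Prop := fun u v => hasWalk adj s u v with hadj'
  have hmul : ∀ (m : ℕ) (u v : Fin n), hasWalk adj' m u v → hasWalk adj (s * m) u v := by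
    intro m
    induction m with
    | zero => intro u v h; exact (h : u = v) ▸ (by rw [Nat.mul_zero]; rfl)
    | succ m ih =>
      intro u v h
      obtain ⟨w, hw1, hw2⟩ := h
      have := walk_trans (hw1 : hasWalk adj s u w) (ih w v hw2)
      rwa [show s + s * m = s * (m + 1) from by ring] at this
  have hdiv : ∀ (m : ℕ) (u v : Fin n), hasWalk adj (s * m) u v → hasWalk adj' m u v := by
    intro m
    induction m with
    | zero => intro u v h; rw [Nat.mul_zero] at h; exact h
    | succ m ih =>
      intro u v h
      rw [show s * (m + 1) = s + s * m from by ring] at h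
      obtain ⟨w, h1, h2⟩ := walk_split s h
      exact ⟨w, h1, ih w v h2⟩
  have hconn' : ∀ u v : Fin n, ∃ m, hasWalk adj' m u v := by
    intro u v
    refine ⟨B + 1, hdiv _ u v (hB _ ?_ u v)⟩
    calc B ≤ B + 1 := by omega
      _ ≤ s * (B + 1) := Nat.le_mul_of_pos_left _ hs_pos
  -- main construction
  intro p hp u v
  have hs1 : 1 ≤ s := hs_pos
  have hnn : n - 1 ≤ n := by omega
  have hkey : s * (n - 1) + (n - s) ≤ n * n - 2 * n + 2 := by
    have h1 : s * (n - 2) ≤ (n - 1) * (n - 2) := Nat.mul_le_mul_right _ hsn1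
    have h1' : s * (n - 1) = s * (n - 2) + s := by
      rw [show n - 1 = (n - 2) + 1 from by omega, Nat.mul_add, Nat.mul_one]
    have h2 : (n - 1) * (n - 2) + n = n * n - 2 * n + 2 := by
      obtain ⟨t, rfl⟩ := Nat.exists_eq_add_of_le hn
      have e1 : (2 + t) * (2 + t) = t * t + 4 * t + 4 := by ring
      have e2 : (2 + t - 1) * (2 + t - 2) = (1 + t) * t := by congr 1 <;> omega
      have e3 : (1 + t) * t = t * t + t := by ring
      omega
    omega
  set ℓ := p - s * (n - 1) with hℓ
  have hℓge : n - s ≤ ℓ := by omega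
  have hℓeq : ℓ + s * (n - 1) = p := by omega
  -- walk from u into the cycle of length exactly ℓ
  have hCne : C.Nonempty := ⟨cc 0, hCmem 0⟩
  have hreach1 := reach_univ (fun a b => adj b a) C hCne
    (by
      intro a ha
      obtain ⟨k, hk⟩ := hCmem' a ha
      exact ⟨cc (k + 1), hCmem (k + 1), hk ▸ hccadj k⟩)
    (fun a b => (hc b a).imp (fun p hp => walk_reverse hp))
    ℓ (by rw [hCcard]; exact hℓge) u
  obtain ⟨cγ, hcγC, hwrev⟩ := hreach1
  have hwalk1 : hasWalk adj ℓ u cγ := walk_reverse hwrev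
  -- walk from cγ to v of length exactly s * (n - 1)
  obtain ⟨k0, hk0⟩ := hCmem' cγ hcγC
  have hloopγ : adj' cγ cγ := by rw [← hk0]; exact hloops k0
  have hreach2 := reach_univ adj' {cγ} ⟨cγ, Finset.mem_singleton_self cγ⟩
    (by
      intro a ha
      rw [Finset.mem_singleton] at ha
      exact ⟨cγ, Finset.mem_singleton_self cγ, ha ▸ hloopγ⟩)
    hconn'
    (n - 1) (by simp) v
  obtain ⟨a, ha, hwa⟩ := hreach2
  rw [Finset.mem_singleton] at ha
  subst ha
  have hwalk2 : hasWalk adj (s * (n - 1)) a v := hmul _ _ _ hwa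
  have := walk_trans hwalk1 hwalk2
  rwa [hℓeq] at this


end Aux

/-- if `G` has a primitive spanning strict subgraph `H`, the and-net negating the
arcs of `G∖H` reaches the constant `0` after `n² − 2n + 3` steps. (`G i`, `H i` are the
in-neighborhoods of vertex `i`.) -/
theorem stmt6 (n : ℕ) (G H : Fin n → Finset (Fin n))
    (hsub : ∀ i, H i ⊆ G i) (hne : H ≠ G)
    (hprim : IsPrimitive (fun j i => j ∈ H i))
    (f : (Fin n → Bool) → (Fin n → Bool))
    (hf : ∀ x i, f x i =
      decide ((∀ j ∈ H i, x j = true) ∧ ∀ j ∈ G i \ H i, x j = false)) :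
    f^[n ^ 2 + 3 - 2 * n] = Function.const _ (fun _ => false) := by
  classical
  -- the strict-subgraph witness
  obtain ⟨i0, hi0⟩ : ∃ i0, H i0 ≠ G i0 := Function.ne_iff.mp hne
  obtain ⟨j0, hj0G, hj0H⟩ : ∃ j0 ∈ G i0, j0 ∉ H i0 :=
    Finset.exists_of_ssubset (lt_of_le_of_ne (hsub i0) hi0)
  -- propagation lemma
  have hprop : ∀ (p : ℕ) (x : Fin n → Bool) (u v : Fin n),
      hasWalk (fun j i => j ∈ H i) p u v → f^[p] x v = true → x u = true := by
    intro p
    induction p with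
    | zero =>
      intro x u v hw h
      rw [(hw : u = v)]
      simpa using h
    | succ p ih =>
      intro x u v hw h
      obtain ⟨w, hx, hw'⟩ := hw
      rw [Function.iterate_succ_apply] at h
      have h3 : f x w = true := ih (f x) w v hw' h
      rw [hf] at h3
      rw [decide_eq_true_iff] at h3
      exact h3.1 u hx
  rcases Nat.lt_or_ge n 2 with hn | hn
  · -- degenerate cases n = 0, 1
    interval_cases n
    · funext x i
      exact absurd i.2 (by omega)
    · -- n = 1 : the hypotheses are contradictory
      exfalso
      have hall : ∀ j i : Fin 1, j ∉ H i := by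
        intro j i hj
        have hi : i = i0 := Subsingleton.elim _ _
        have hjj : j = j0 := Subsingleton.elim _ _
        rw [hi, hjj] at hj
        exact hj0H hj
      have h2 := hprim.2 2 (by
        rintro p hp ⟨u, hw⟩
        rcases p with _ | p
        · omega
        · obtain ⟨w, hw1, _⟩ := hw
          exact absurd hw1 (hall u w))
      omega
  · -- main case
    have hW := Aux.wielandt hn _ hprim.1 hprim.2
    have hnn : 2 * n ≤ n * n := Nat.mul_le_mul_right n hn
    have hpow : n ^ 2 = n * n := sq n
    set N := n ^ 2 + 3 - 2 * n with hN
    have hN1 : n * n - 2 * n + 2 ≤ N - 1 := by omega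
    have hN2 : n * n - 2 * n + 2 ≤ N := by omega
    have hN3 : N - 1 + 1 = N := by omega
    funext x i
    show f^[N] x i = false
    by_contra hcon
    have htrue : f^[N] x i = true := by
      cases h : f^[N] x i
      · exact absurd h hcon
      · rfl
    -- x is all ones
    have hxall : ∀ u, x u = true := fun u => hprop N x u i (hW N hN2 u i) htrue
    -- f x is all ones
    have hfall : ∀ u, f x u = true := by
      intro u
      have h1 : f^[N - 1] (f x) i = true := by
        rw [← Function.iterate_succ_apply, Nat.succ_eq_add_one, hN3]
        exact htrue
      exact hprop (N - 1) (f x) u i (hW (N - 1) hN1 u i) h1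
    have h3 := hfall i0
    rw [hf, decide_eq_true_iff] at h3
    have h4 : x j0 = false := h3.2 j0 (Finset.mem_sdiff.mpr ⟨hj0G, hj0H⟩)
    rw [hxall j0] at h4
    exact absurd h4 (by simp)
end

section
/- In a primitive digraph G on n vertices (strongly connected, gcd of cycle lengths equal to 1), for every pair of vertices u, v and every integer p ≥ n² − 2n + 2, there exists a walk from u to v of length exactly p. -/
namespace Stmt7

variable {n : ℕ} {adj : Fin n → Fin n → Prop}

lemma walk_trans : ∀ {p q : ℕ} {u w v : Fin n},
    hasWalk adj p u w → hasWalk adj q w v → hasWalk adj (p + q) u v := by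
  intro p
  induction p with
  | zero =>
    intro q u w v h1 h2
    rw [Nat.zero_add]
    exact (show u = w from h1) ▸ h2
  | succ p ih =>
    intro q u w v h1 h2
    obtain ⟨x, hx, hw⟩ := h1
    rw [Nat.add_right_comm]
    exact ⟨x, hx, ih hw h2⟩

lemma walk_split : ∀ {a : ℕ} {b : ℕ} {u v : Fin n},
    hasWalk adj (a + b) u v → ∃ w, hasWalk adj a u w ∧ hasWalk adj b w v := by
  intro a
  induction a with
  | zero => intro b u v h; exact ⟨u, rfl, by rwa [Nat.zero_add] at h⟩
  | succ a ih =>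
    intro b u v h
    rw [Nat.add_right_comm] at h
    obtain ⟨x, hx, hw⟩ := h
    obtain ⟨w, h1, h2⟩ := ih hw
    exact ⟨w, ⟨x, hx, h1⟩, h2⟩

/-- Walk along a sequence of vertices with arcs on `[a, a+b)`. -/
lemma walk_of_seq (f : ℕ → Fin n) : ∀ (b a : ℕ),
    (∀ i, a ≤ i → i < a + b → adj (f i) (f (i + 1))) → hasWalk adj b (f a) (f (a + b)) := by
  intro b
  induction b with
  | zero => intro a _; rfl
  | succ b ih =>
    intro a h
    refine ⟨f (a + 1), h a le_rfl (by omega), ?_⟩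
    have := ih (a + 1) (fun i h1 h2 => h i (by omega) (by omega))
    rwa [show a + 1 + b = a + (b + 1) by omega] at this

/-- Extract a vertex sequence from a walk. -/
lemma seq_of_walk : ∀ {p : ℕ} {u v : Fin n}, hasWalk adj p u v →
    ∃ f : ℕ → Fin n, f 0 = u ∧ f p = v ∧ ∀ i < p, adj (f i) (f (i + 1)) := by
  intro p
  induction p with
  | zero => intro u v h; exact ⟨fun _ => u, rfl, (show u = v from h) ▸ rfl, by omega⟩
  | succ p ih =>
    intro u v h
    obtain ⟨w, hw, hww⟩ := h
    obtain ⟨f, h0, hp, harc⟩ := ih hww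
    refine ⟨fun t => match t with | 0 => u | t + 1 => f t, rfl, hp, ?_⟩
    intro i hi
    match i with
    | 0 => simpa [h0] using hw
    | i + 1 => exact harc i (by omega)

/-- Cut a repeated segment out of a walk sequence. -/
lemma cut_seq (f : ℕ → Fin n) (p i j : ℕ) (hij : i < j) (hjp : j ≤ p) (heq : f i = f j)
    (harc : ∀ t < p, adj (f t) (f (t + 1))) :
    ∃ g : ℕ → Fin n, g 0 = f 0 ∧ g (p - (j - i)) = f p ∧
      ∀ t < p - (j - i), adj (g t) (g (t + 1)) := by
  refine ⟨fun t => if t ≤ i then f t else f (t + (j - i)), by simp, ?_, ?_⟩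
  · by_cases h : p - (j - i) ≤ i
    · have hpj : p = j := by omega
      simp only [if_pos h]
      have : p - (j - i) = i := by omega
      rw [this, heq, hpj]
    · simp only [if_neg h]
      congr 1
      omega
  · intro t ht
    by_cases h1 : t + 1 ≤ i
    · simp only [if_pos h1, if_pos (by omega : t ≤ i)]
      exact harc t (by omega)
    · by_cases h2 : t ≤ i
      · have hti : t = i := by omega
        simp only [if_pos h2, if_neg h1]
        rw [hti, heq, show i + 1 + (j - i) = j + 1 by omega]
        exact harc j (by omega)
      · simp only [if_neg h2, if_neg h1]
        rw [show t + 1 + (j - i) = t + (j - i) + 1 by omega]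
        exact harc (t + (j - i)) (by omega)

lemma reach_bound (T : Finset (Fin n)) (u : Fin n)
    (h : ∃ p w, w ∈ T ∧ hasWalk adj p u w) :
    ∃ q w, q ≤ n - T.card ∧ w ∈ T ∧ hasWalk adj q u w := by
  obtain ⟨p, w, hw, hwalk⟩ := h
  induction p using Nat.strong_induction_on generalizing w with
  | _ p ih =>
  by_cases hle : p ≤ n - T.card
  · exact ⟨p, w, hle, hw, hwalk⟩
  · obtain ⟨f, h0, hpv, harc⟩ := seq_of_walk hwalk
    by_cases hmid : ∃ i, i < p ∧ f i ∈ T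
    · obtain ⟨i, hi, hfi⟩ := hmid
      have hwalki : hasWalk adj i u (f i) := by
        have := walk_of_seq f i 0 (fun t h1 h2 => harc t (by omega))
        rwa [h0, Nat.zero_add] at this
      exact ih i hi (f i) hfi hwalki
    · push_neg at hmid
      obtain ⟨x, hx, y, hy, hxy, hfeq⟩ :=
        Finset.exists_ne_map_eq_of_card_lt_of_maps_to
          (s := Finset.range p) (t := Tᶜ)
          (by
            rw [Finset.card_range, Finset.card_compl, Fintype.card_fin]
            omega)
          (fun i hi => Finset.mem_compl.mpr (hmid i (Finset.mem_range.mp hi)))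
      rw [Finset.mem_range] at hx hy
      obtain ⟨i, j, hij, hjp', hfij⟩ : ∃ i j, i < j ∧ j < p ∧ f i = f j := by
        rcases Nat.lt_or_ge x y with h | h
        · exact ⟨x, y, h, hy, hfeq⟩
        · exact ⟨y, x, by omega, hx, hfeq.symm⟩
      obtain ⟨g, hg0, hgp, hgarc⟩ := cut_seq f p i j hij (by omega) hfij harc
      have hwalk' : hasWalk adj (p - (j - i)) u w := by
        have := walk_of_seq g (p - (j - i)) 0 (fun t h1 h2 => hgarc t (by omega))
        rwa [hg0, h0, Nat.zero_add, hgp, hpv] at this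
      exact ih (p - (j - i)) (by omega) w hw hwalk'

/-- Walking around a periodic cycle: single step. -/
lemma cyc_step (f : ℕ → Fin n) (s : ℕ) (hs : 0 < s)
    (harc : ∀ i < s, adj (f i) (f (i + 1))) (hclose : f s = f 0) (t : ℕ) :
    adj (f (t % s)) (f ((t + 1) % s)) := by
  have h1 : (t + 1) % s = (t % s + 1) % s := by
    conv_lhs => rw [← Nat.mod_add_mod]
  have h2 : t % s < s := Nat.mod_lt t hs
  by_cases h3 : t % s + 1 < s
  · rw [h1, Nat.mod_eq_of_lt h3]
    exact harc _ h2
  · have h4 : t % s + 1 = s := by omega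
    rw [h1, h4, Nat.mod_self, ← hclose]
    have h5 := harc _ h2
    rwa [h4] at h5

/-- Walking around a periodic cycle. -/
lemma cyc_walk (f : ℕ → Fin n) (s : ℕ) (hs : 0 < s)
    (harc : ∀ i < s, adj (f i) (f (i + 1))) (hclose : f s = f 0) :
    ∀ (b a : ℕ), hasWalk adj b (f (a % s)) (f ((a + b) % s)) := by
  intro b
  induction b with
  | zero => intro a; rfl
  | succ b ih =>
    intro a
    refine ⟨f ((a + 1) % s), cyc_step f s hs harc hclose a, ?_⟩
    have := ih (a + 1)
    rwa [show a + 1 + b = a + (b + 1) by omega] at this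

lemma loop_mul {x : Fin n} {c : ℕ} (hx : hasWalk adj c x x) :
    ∀ m, hasWalk adj (m * c) x x := by
  intro m
  induction m with
  | zero => rw [Nat.zero_mul]; rfl
  | succ m ih => rw [Nat.succ_mul]; exact walk_trans ih hx

/-- Closed walks at a fixed vertex realize every residue class mod `s`. -/
lemma residue (hprim : IsPrimitive adj) (s : ℕ) (hs : 0 < s) (v : Fin n) (ρ : ℕ) :
    ∃ c, hasWalk adj c v v ∧ c ≡ ρ [MOD s] := by
  set D : ℕ → Prop := fun k => ∃ c, hasWalk adj c v v ∧ c ≡ k [MOD s] with hD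
  have hDs : D s := ⟨0, rfl, by unfold Nat.ModEq; simp⟩
  have hsub : ∀ k1 k2, k1 ≤ k2 → D k1 → D k2 → D (k2 - k1) := by
    rintro k1 k2 hle ⟨c1, w1, m1⟩ ⟨c2, w2, m2⟩
    refine ⟨c2 + (s - 1) * c1, walk_trans w2 (loop_mul w1 (s - 1)), ?_⟩
    have e : k2 + (s - 1) * k1 = (k2 - k1) + k1 * s := by
      have hs1 : 1 ≤ s := hs
      zify [hle, hs1]
      ring
    calc c2 + (s - 1) * c1 ≡ k2 + (s - 1) * k1 [MOD s] := m2.add (m1.mul_left _)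
      _ = (k2 - k1) + k1 * s := e
      _ ≡ (k2 - k1) [MOD s] := Nat.add_mul_mod_self_right _ _ _
  have hne : {k | 0 < k ∧ D k}.Nonempty := ⟨s, hs, hDs⟩
  set d := sInf {k | 0 < k ∧ D k} with hdd
  have hd := Nat.sInf_mem hne
  have hdpos : 0 < d := hd.1
  have hdD : D d := hd.2
  have hdmin : ∀ k, 0 < k → D k → d ≤ k := fun k h1 h2 => Nat.sInf_le ⟨h1, h2⟩
  have hddvd : ∀ k, D k → d ∣ k := by
    intro k
    induction k using Nat.strong_induction_on with | _ k ih =>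
    intro hk
    rcases Nat.eq_zero_or_pos k with h | h
    · simp [h]
    · have h1 : d ≤ k := hdmin k h hk
      have h2 : D (k - d) := hsub d k h1 hdD hk
      have h3 := ih (k - d) (by omega) h2
      have h4 : d ∣ (k - d) + d := Nat.dvd_add h3 dvd_rfl
      rwa [Nat.sub_add_cancel h1] at h4
  have hall : ∀ q, 0 < q → (∃ x, hasWalk adj q x x) → d ∣ q := by
    rintro q hq ⟨x, hx⟩
    obtain ⟨a, ha⟩ := hprim.1 v x
    obtain ⟨b, hb⟩ := hprim.1 x v
    have d1 : d ∣ a + b := hddvd _ ⟨_, walk_trans ha hb, Nat.ModEq.refl _⟩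
    have d2 : d ∣ a + (q + b) :=
      hddvd _ ⟨_, walk_trans ha (walk_trans hx hb), Nat.ModEq.refl _⟩
    have h5 := Nat.dvd_sub d2 d1
    rwa [show a + (q + b) - (a + b) = q by omega] at h5
  have hd1 : d = 1 := Nat.dvd_one.mp (hprim.2 d hall)
  obtain ⟨c1, wc1, mc1⟩ := hdD
  rw [hd1] at mc1
  refine ⟨ρ * c1, loop_mul wc1 ρ, ?_⟩
  calc ρ * c1 ≡ ρ * 1 [MOD s] := mc1.mul_left ρ
    _ = ρ := Nat.mul_one ρ

lemma walk_G_of_H {s : ℕ} : ∀ {k : ℕ} {x y : Fin n},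
    hasWalk (fun a b => hasWalk adj s a b) k x y → hasWalk adj (k * s) x y := by
  intro k
  induction k with
  | zero => intro x y h; rw [Nat.zero_mul]; exact h
  | succ k ih =>
    rintro x y ⟨w, hw, hr⟩
    rw [Nat.succ_mul, Nat.add_comm]
    exact walk_trans hw (ih hr)

lemma walk_H_of_G {s : ℕ} : ∀ {k : ℕ} {x y : Fin n},
    hasWalk adj (k * s) x y → hasWalk (fun a b => hasWalk adj s a b) k x y := by
  intro k
  induction k with
  | zero => intro x y h; rw [Nat.zero_mul] at h; exact h
  | succ k ih =>
    intro x y h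
    rw [Nat.succ_mul, Nat.add_comm] at h
    obtain ⟨w, h1, h2⟩ := walk_split h
    exact ⟨w, h1, ih h2⟩

/-- The `s`-th power digraph is strongly connected. -/
lemma Hconn (hprim : IsPrimitive adj) (s : ℕ) (hs : 0 < s) (x y : Fin n) :
    ∃ k, hasWalk adj (k * s) x y := by
  obtain ⟨l, hl⟩ := hprim.1 x y
  obtain ⟨c, hc, hmod⟩ := residue hprim s hs y ((s - 1) * l)
  have hdvd : s ∣ l + c := by
    have h1 : l + c ≡ l + (s - 1) * l [MOD s] := Nat.ModEq.add_left l hmod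
    have h2 : l + (s - 1) * l = l * s := by
      have hs1 : 1 ≤ s := hs
      zify [hs1]; ring
    rw [h2] at h1
    have h3 : l + c ≡ 0 [MOD s] := h1.trans (Nat.modEq_zero_iff_dvd.mpr ⟨l, mul_comm l s⟩)
    exact Nat.modEq_zero_iff_dvd.mp h3
  obtain ⟨k, hk⟩ := hdvd
  exact ⟨k, by rw [mul_comm, ← hk]; exact walk_trans hl hc⟩

/-- The shortest cycle length in a primitive digraph on `n ≥ 2` vertices is at most `n - 1`. -/
lemma min_cycle_le (hprim : IsPrimitive adj) (h2 : 2 ≤ n) (s : ℕ) (hs : 0 < s)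
    (w : Fin n) (hw : hasWalk adj s w w)
    (hmin : ∀ q, 0 < q → (∃ x, hasWalk adj q x x) → s ≤ q) :
    s + 1 ≤ n := by
  obtain ⟨f, h0, hclose', harc⟩ := seq_of_walk hw
  have hclose : f s = f 0 := by rw [h0, hclose']
  have hseg : ∀ i j, i < j → j ≤ s → f i = f j → s ≤ j - i := by
    intro i j hij hjs heq
    have hwalk := walk_of_seq f (j - i) i (fun t h1 h2 => harc t (by omega))
    rw [show i + (j - i) = j by omega, ← heq] at hwalk
    exact hmin (j - i) (by omega) ⟨f i, hwalk⟩
  have hsn : s ≤ n := by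
    by_contra hc
    push_neg at hc
    obtain ⟨x, hx, y, hy, hxy, hfeq⟩ :=
      Finset.exists_ne_map_eq_of_card_lt_of_maps_to
        (s := Finset.range (n + 1)) (t := Finset.univ)
        (by rw [Finset.card_range, Finset.card_univ, Fintype.card_fin]; omega)
        (fun i _ => Finset.mem_univ (f i))
    rw [Finset.mem_range] at hx hy
    obtain ⟨i, j, hij, hjn, heq⟩ : ∃ i j, i < j ∧ j ≤ n ∧ f i = f j := by
      rcases Nat.lt_or_ge x y with h | h
      · exact ⟨x, y, h, by omega, hfeq⟩
      · exact ⟨y, x, by omega, by omega, hfeq.symm⟩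
    have := hseg i j hij (by omega) heq
    omega
  have hinj : ∀ i j, i < s → j < s → f i = f j → i = j := by
    intro i j hi hj heq
    by_contra hne
    rcases Nat.lt_or_ge i j with h | h
    · have := hseg i j h (by omega) heq; omega
    · have := hseg j i (by omega) (by omega) heq.symm; omega
  rcases Nat.lt_or_ge s n with h | h
  · omega
  exfalso
  have hsn' : s = n := by omega
  subst hsn'
  have hsurj : ∀ y : Fin s, ∃ j, j < s ∧ f j = y := by
    have hcard : ((Finset.range s).image f).card = s := by
      rw [Finset.card_image_of_injOn, Finset.card_range]
      intro a ha b hb hab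
      exact hinj a b (Finset.mem_range.mp ha) (Finset.mem_range.mp hb) hab
    have huniv : (Finset.range s).image f = Finset.univ :=
      Finset.eq_univ_of_card _ (by rw [hcard, Fintype.card_fin])
    intro y
    have hmem : y ∈ (Finset.range s).image f := huniv ▸ Finset.mem_univ y
    obtain ⟨j, hj, hfj⟩ := Finset.mem_image.mp hmem
    exact ⟨j, Finset.mem_range.mp hj, hfj⟩
  set g : ℕ → Fin s := fun t => f (t % s) with hg
  have hstep : ∀ t (y : Fin s), adj (g t) y → y = g (t + 1) := by
    intro t y hadj
    have hi : t % s < s := Nat.mod_lt t hs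
    obtain ⟨j, hj, hfj⟩ := hsurj y
    have hmodsucc : (t + 1) % s = (t % s + 1) % s := by
      conv_lhs => rw [← Nat.mod_add_mod]
    have harc1 : hasWalk adj 1 (g t) y := ⟨y, hadj, rfl⟩
    rcases Nat.lt_or_ge (t % s) j with hcase | hcase
    · have w1 : hasWalk adj (s - j) (f j) (f s) := by
        have := walk_of_seq f (s - j) j (fun i h1 h2 => harc i (by omega))
        rwa [show j + (s - j) = s by omega] at this
      rw [hclose, hfj] at w1
      have w2 : hasWalk adj (t % s) (f 0) (f (t % s)) := by
        have := walk_of_seq f (t % s) 0 (fun i h1 h2 => harc i (by omega))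
        rwa [Nat.zero_add] at this
      have wc : hasWalk adj (1 + (s - j + t % s)) (g t) (g t) :=
        walk_trans harc1 (walk_trans w1 w2)
      have hmin' := hmin _ (by omega) ⟨g t, wc⟩
      have hj' : j = t % s + 1 := by omega
      show y = f ((t + 1) % s)
      rw [hmodsucc, ← hj', Nat.mod_eq_of_lt hj]
      exact hfj.symm
    · have w1 : hasWalk adj (t % s - j) (f j) (f (t % s)) := by
        have := walk_of_seq f (t % s - j) j (fun i h1 h2 => harc i (by omega))
        rwa [show j + (t % s - j) = t % s by omega] at this
      rw [hfj] at w1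
      have wc : hasWalk adj (t % s - j + 1) y y := walk_trans w1 harc1
      have hmin' := hmin _ (by omega) ⟨y, wc⟩
      have hkey : t % s = s - 1 ∧ j = 0 := by omega
      show y = f ((t + 1) % s)
      rw [hmodsucc, hkey.1, show s - 1 + 1 = s by omega, Nat.mod_self, ← hkey.2]
      exact hfj.symm
  have hdet : ∀ p t (y : Fin s), hasWalk adj p (g t) y → y = g (t + p) := by
    intro p
    induction p with
    | zero => intro t y h; exact (show g t = y from h).symm
    | succ p ih =>
      rintro t y ⟨x, hx, hr⟩
      rw [hstep t x hx] at hr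
      have := ih (t + 1) y hr
      rwa [show t + 1 + p = t + (p + 1) by omega] at this
  have hdvd : ∀ q, 0 < q → (∃ x, hasWalk adj q x x) → s ∣ q := by
    rintro q hq ⟨x, hx⟩
    obtain ⟨i, hi, hfi⟩ := hsurj x
    have hgi : g i = x := by show f (i % s) = x; rw [Nat.mod_eq_of_lt hi]; exact hfi
    have hwx : hasWalk adj q (g i) x := by rw [hgi]; exact hx
    have hx2 : x = g (i + q) := hdet q i x hwx
    have heq2 : i % s = (i + q) % s :=
      hinj _ _ (Nat.mod_lt _ hs) (Nat.mod_lt _ hs) (hgi.trans hx2)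
    have hmod : (i : ℕ) ≡ i + q [MOD s] := heq2
    have := (Nat.modEq_iff_dvd' (by omega)).mp hmod
    rwa [show i + q - i = q by omega] at this
  have hdiv1 := hprim.2 s hdvd
  have := Nat.le_of_dvd Nat.one_pos hdiv1
  omega

lemma exists_closed (hprim : IsPrimitive adj) : ∃ q, 0 < q ∧ ∃ x, hasWalk adj q x x := by
  by_contra h
  push_neg at h
  have h2 := hprim.2 2 (fun q hq hx => by
    obtain ⟨x, hx'⟩ := hx
    exact absurd hx' (h q hq x))
  have := Nat.le_of_dvd Nat.one_pos h2
  omega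

lemma loop_all {x : Fin n} (hx : adj x x) : ∀ p, hasWalk adj p x x := by
  intro p
  induction p with
  | zero => rfl
  | succ p ih => exact ⟨x, hx, ih⟩

end Stmt7

/-- Holladay–Varga/Wielandt: in a primitive digraph on `n` vertices, any two
vertices are joined by walks of every length `p ≥ n² − 2n + 2`. -/
theorem stmt7 (n : ℕ) (adj : Fin n → Fin n → Prop) (hprim : IsPrimitive adj)
    (u v : Fin n) (p : ℕ) (hp : n ^ 2 + 2 - 2 * n ≤ p) :
    hasWalk adj p u v := by
  open Stmt7 in
  -- trivial small cases
  match n, adj, hprim, u, v, hp with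
  | 0, adj, hprim, u, v, hp => exact u.elim0
  | 1, adj, hprim, u, v, hp =>
    obtain ⟨q, hq, x, hx⟩ := Stmt7.exists_closed hprim
    match q, hx with
    | q' + 1, hx =>
      obtain ⟨y, hxy, _⟩ := hx
      have hloop : adj u u := by
        have h1 : x = u := Subsingleton.elim x u
        have h2 : y = u := Subsingleton.elim y u
        rwa [h1, h2] at hxy
      have hv : v = u := Subsingleton.elim v u
      rw [hv]
      exact Stmt7.loop_all hloop p
  | (m + 2), adj, hprim, u, v, hp =>
    obtain ⟨q0, hq0, x0, hx0⟩ := Stmt7.exists_closed hprim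
    have hne : {q | 0 < q ∧ ∃ x, hasWalk adj q x x}.Nonempty := ⟨q0, hq0, x0, hx0⟩
    set s := sInf {q | 0 < q ∧ ∃ x, hasWalk adj q x x} with hsdef
    have hmem := Nat.sInf_mem hne
    have hs : 0 < s := hmem.1
    obtain ⟨w, hw⟩ := hmem.2
    have hmin : ∀ q, 0 < q → (∃ x, hasWalk adj q x x) → s ≤ q :=
      fun q h1 h2 => Nat.sInf_le ⟨h1, h2⟩
    have hsle : s + 1 ≤ m + 2 := Stmt7.min_cycle_le hprim (by omega) s hs w hw hmin
    have hsle' : s ≤ m + 1 := by omega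
    obtain ⟨f, h0, hcl', harc⟩ := Stmt7.seq_of_walk hw
    have hclose : f s = f 0 := by rw [h0, hcl']
    have hseg : ∀ i j, i < j → j ≤ s → f i = f j → s ≤ j - i := by
      intro i j hij hjs heq
      have hwalk := Stmt7.walk_of_seq f (j - i) i (fun t h1 h2 => harc t (by omega))
      rw [show i + (j - i) = j by omega, ← heq] at hwalk
      exact hmin (j - i) (by omega) ⟨f i, hwalk⟩
    have hinj : ∀ i j, i < s → j < s → f i = f j → i = j := by
      intro i j hi hj heq
      by_contra hne'
      rcases Nat.lt_or_ge i j with h | h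
      · have := hseg i j h (by omega) heq; omega
      · have := hseg j i (by omega) (by omega) heq.symm; omega
    set C := (Finset.range s).image f with hC
    have hcard : C.card = s := by
      rw [hC, Finset.card_image_of_injOn, Finset.card_range]
      intro a ha b hb hab
      exact hinj a b (Finset.mem_range.mp ha) (Finset.mem_range.mp hb) hab
    have hz : ∃ p' w', w' ∈ C ∧ hasWalk adj p' u w' := by
      obtain ⟨l, hl⟩ := hprim.1 u (f 0)
      exact ⟨l, f 0, Finset.mem_image.mpr ⟨0, Finset.mem_range.mpr hs, rfl⟩, hl⟩
    obtain ⟨a, w1, ha, hw1C, hwa⟩ := Stmt7.reach_bound C u hz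
    rw [hcard] at ha
    obtain ⟨t1, ht1r, ht1⟩ := Finset.mem_image.mp hw1C
    rw [Finset.mem_range] at ht1r
    have key : s * (m + 1) + a ≤ p := by
      have e1 : (m + 2) ^ 2 = m * m + 4 * m + 4 := by ring
      rw [e1] at hp
      have h2 : s * m ≤ m * m + m := by
        calc s * m ≤ (m + 1) * m := Nat.mul_le_mul_right m hsle'
          _ = m * m + m := by ring
      have e2 : s * (m + 1) = s * m + s := by ring
      rw [e2]
      generalize hA : s * m = A at h2 ⊢
      generalize hB : m * m = B at h2 hp
      omega
    have hap : a ≤ p := le_trans (Nat.le_add_left a _) key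
    set ρ := (p - a) % s with hρdef
    set m' := (p - a) / s with hm'def
    have hdm : s * m' + ρ = p - a := Nat.div_add_mod (p - a) s
    have hρ : ρ < s := Nat.mod_lt _ hs
    have hm' : m + 1 ≤ m' := by
      by_contra hc
      push_neg at hc
      have h3 : s * m' ≤ s * m := Nat.mul_le_mul_left s (by omega)
      have e2 : s * (m + 1) = s * m + s := by ring
      rw [e2] at key
      generalize hA : s * m' = A at h3 hdm
      generalize hB : s * m = B at h3 key
      omega
    have walkρ : hasWalk adj ρ w1 (f ((t1 + ρ) % s)) := by
      have := Stmt7.cyc_walk f s hs harc hclose ρ t1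
      rwa [Nat.mod_eq_of_lt ht1r, ht1] at this
    set w2 := f ((t1 + ρ) % s) with hw2
    obtain ⟨k0, hk0⟩ := Stmt7.Hconn hprim s hs w2 v
    have hH0 : hasWalk (fun a b => hasWalk adj s a b) k0 w2 v := Stmt7.walk_H_of_G hk0
    obtain ⟨k, w3, hk, hw3, hkH⟩ :=
      Stmt7.reach_bound (adj := fun a b => hasWalk adj s a b) {v} w2
        ⟨k0, v, Finset.mem_singleton_self v, hH0⟩
    rw [Finset.card_singleton] at hk
    rw [Finset.mem_singleton] at hw3
    subst hw3
    have hkm : k ≤ m' := by omega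
    have hGk : hasWalk adj (k * s) w2 w3 := Stmt7.walk_G_of_H hkH
    have hloops : hasWalk adj ((m' - k) * s) w2 w2 := by
      have := Stmt7.cyc_walk f s hs harc hclose ((m' - k) * s) (t1 + ρ)
      rwa [Nat.add_mul_mod_self_right] at this
    have total := Stmt7.walk_trans hwa
      (Stmt7.walk_trans walkρ (Stmt7.walk_trans hloops hGk))
    have efinal : a + (ρ + ((m' - k) * s + k * s)) = p := by
      have e3 : (m' - k) * s + k * s = m' * s := by
        rw [← Nat.add_mul, Nat.sub_add_cancel hkm]
      rw [e3, mul_comm m' s]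
      generalize hA : s * m' = A at hdm ⊢
      omega
    rwa [efinal] at total
end

section
/- Let C_{ℓ,r} be the double-cycle digraph obtained from two directed cycles of lengths ℓ and r sharing exactly one vertex. If min(ℓ,r) does not divide max(ℓ,r), then C_{ℓ,r} admits no nilpotent boolean function: every f : {0,1}ⁿ → {0,1}ⁿ (n = ℓ + r − 1) whose interaction digraph is C_{ℓ,r} fails to have a constant iterate. -/
/-- `f i` depends essentially on coordinate `j` (boolean states). -/
def dependsB {n : ℕ} (f : (Fin n → Bool) → (Fin n → Bool)) (j i : Fin n) : Prop :=
  ∃ x y : Fin n → Bool, (∀ k, k ≠ j → x k = y k) ∧ f x i ≠ f y i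

/-- Arc relation (on `ℕ`-coded vertices) of the double cycle `C_{ℓ,r}` on `ℓ + r - 1` vertices:
the `ℓ`-cycle is `0 → 1 → ⋯ → ℓ-1 → 0` and the `r`-cycle is `0 → ℓ → ℓ+1 → ⋯ → ℓ+r-2 → 0`
(a loop on `0` when `r = 1`). -/
def dcArc (ℓ r : ℕ) (j i : ℕ) : Prop :=
  (j + 1 < ℓ ∧ i = j + 1) ∨
  (j = ℓ - 1 ∧ i = 0) ∨
  (j = 0 ∧ i = ℓ ∧ ℓ < ℓ + r - 1) ∨
  (ℓ ≤ j ∧ j + 1 < ℓ + r - 1 ∧ i = j + 1) ∨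
  (ℓ ≤ j ∧ j = ℓ + r - 2 ∧ i = 0) ∨
  (r = 1 ∧ j = 0 ∧ i = 0)

/-! ### Auxiliary lemmas -/

/-- A coordinate of `f` only depends on the coordinates it depends essentially on. -/
lemma dep_only {n : ℕ} (f : (Fin n → Bool) → (Fin n → Bool)) (i : Fin n) :
    ∀ (k : ℕ) (x y : Fin n → Bool),
      (Finset.univ.filter (fun j => x j ≠ y j)).card ≤ k →
      (∀ j, dependsB f j i → x j = y j) → f x i = f y i := by
  intro k
  induction k with
  | zero =>
    intro x y hcard _
    have hxy : x = y := by
      funext j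
      by_contra hj
      have hm : j ∈ Finset.univ.filter (fun j => x j ≠ y j) := by simp [hj]
      have := Finset.card_pos.mpr ⟨j, hm⟩
      omega
    rw [hxy]
  | succ k ih =>
    intro x y hcard hagree
    by_cases hxy : x = y
    · rw [hxy]
    · obtain ⟨j0, hj0⟩ := Function.ne_iff.mp hxy
      have hnd : ¬ dependsB f j0 i := fun hd => hj0 (hagree j0 hd)
      have h1 : f x i = f (Function.update x j0 (y j0)) i := by
        by_contra hne'
        exact hnd ⟨x, Function.update x j0 (y j0),
          fun m hm => (Function.update_of_ne hm _ _).symm, hne'⟩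
      rw [h1]
      apply ih
      · have hsub : (Finset.univ.filter (fun j => Function.update x j0 (y j0) j ≠ y j)) ⊆
            (Finset.univ.filter (fun j => x j ≠ y j)).erase j0 := by
          intro j hj
          simp only [Finset.mem_filter, Finset.mem_univ, true_and, Finset.mem_erase] at *
          by_cases hjj : j = j0
          · subst hjj; rw [Function.update_self] at hj; exact absurd rfl hj
          · rw [Function.update_of_ne hjj] at hj; exact ⟨hjj, hj⟩
        have hmem : j0 ∈ Finset.univ.filter (fun j => x j ≠ y j) := by simp [hj0]
        have hcc := Finset.card_le_card hsub
        rw [Finset.card_erase_of_mem hmem] at hcc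
        omega
      · intro j hdj
        by_cases hjj : j = j0
        · subst hjj; exact Function.update_self _ _ _
        · rw [Function.update_of_ne hjj]; exact hagree j hdj

lemma dep_only' {n : ℕ} (f : (Fin n → Bool) → (Fin n → Bool)) (i : Fin n)
    (x y : Fin n → Bool) (h : ∀ j, dependsB f j i → x j = y j) : f x i = f y i :=
  dep_only f i _ x y le_rfl h

/-- Classification of boolean functions of two essential variables. -/
lemma classifyG : ∀ G : Bool → Bool → Bool,
    (∃ w, G false w ≠ G true w) → (∃ w, G w false ≠ G w true) →
    (∀ a b, G a b = Bool.xor (Bool.xor a b) (G false false)) ∨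
    (∃ p q s, ∀ a b, G a b = Bool.xor ((Bool.xor a p) && (Bool.xor b q)) s) := by decide

lemma bool_xor_const : ∀ c0 Eu Ev s0 : Bool,
    (c0 = Bool.xor (Bool.xor (Bool.xor c0 Eu) (Bool.xor c0 Ev)) s0) →
    c0 = Bool.xor (Bool.xor Eu Ev) s0 := by decide

lemma bool_xor_rec : ∀ h1 h2 Eu Ev s0 : Bool,
    Bool.xor (Bool.xor h1 h2) (Bool.xor (Bool.xor Eu Ev) s0) =
      Bool.xor (Bool.xor (Bool.xor (Bool.xor h1 (Bool.xor (Bool.xor Eu Ev) s0)) Eu)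
        (Bool.xor (Bool.xor h2 (Bool.xor (Bool.xor Eu Ev) s0)) Ev)) s0 := by decide

lemma bool_and_same : ∀ c0 Eu Ev p q s : Bool, Bool.xor Eu p = Bool.xor Ev q →
    c0 = Bool.xor ((Bool.xor (Bool.xor c0 Eu) p) && (Bool.xor (Bool.xor c0 Ev) q)) s →
    (!c0) = Bool.xor ((Bool.xor (Bool.xor (!c0) Eu) p) && (Bool.xor (Bool.xor (!c0) Ev) q)) s := by
  decide

lemma bool_and_c0 : ∀ c0 Eu Ev p q s : Bool, Bool.xor Eu p ≠ Bool.xor Ev q →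
    c0 = Bool.xor ((Bool.xor (Bool.xor c0 Eu) p) && (Bool.xor (Bool.xor c0 Ev) q)) s →
    c0 = s := by decide

lemma bool_and_recL : ∀ d2 d3 s Eu Ev p q : Bool, Bool.xor (Bool.xor Eu p) s = false →
    Bool.xor Eu p ≠ Bool.xor Ev q →
    Bool.xor (d2 && !d3) s =
      Bool.xor ((Bool.xor (Bool.xor (Bool.xor d2 s) Eu) p) &&
        (Bool.xor (Bool.xor (Bool.xor d3 s) Ev) q)) s := by decide

lemma bool_and_recR : ∀ d2 d3 s Eu Ev p q : Bool, Bool.xor (Bool.xor Eu p) s = true →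
    Bool.xor Eu p ≠ Bool.xor Ev q →
    Bool.xor (d2 && !d3) s =
      Bool.xor ((Bool.xor (Bool.xor (Bool.xor d3 s) Eu) p) &&
        (Bool.xor (Bool.xor (Bool.xor d2 s) Ev) q)) s := by decide

/-- One step of the "AND-type" recurrence for the indicator of multiples of `α`. -/
lemma and_step (α β t : ℕ) (hβ : β ≤ t) (hαt : α ≤ t) (hnd : ¬ α ∣ β) :
    decide (α ∣ t) = (decide (α ∣ (t - α)) && !decide (α ∣ (t - β))) := by
  by_cases h : α ∣ t
  · have h1 : α ∣ t - α := Nat.dvd_sub h dvd_rfl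
    have h2 : ¬ α ∣ t - β := fun hc => hnd (by
      have := Nat.dvd_sub h hc
      rwa [Nat.sub_sub_self hβ] at this)
    simp [h, h1, h2]
  · have h1 : ¬ α ∣ t - α := fun hc => h (by
      have := Nat.dvd_add hc (dvd_refl α)
      rwa [Nat.sub_add_cancel hαt] at this)
    simp [h, h1]

/-- The XOR-recurrence sequence with seed `1,0,0,…`. -/
def hseq (ℓ r : ℕ) (t : ℕ) : Bool :=
  if h : 0 < ℓ ∧ 0 < r ∧ max ℓ r ≤ t then
    Bool.xor (hseq ℓ r (t - ℓ)) (hseq ℓ r (t - r))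
  else decide (t = 0)
termination_by t
decreasing_by all_goals omega

lemma hseq_rec (ℓ r : ℕ) (h1 : 0 < ℓ) (h2 : 0 < r) {t : ℕ} (h3 : max ℓ r ≤ t) :
    hseq ℓ r t = Bool.xor (hseq ℓ r (t - ℓ)) (hseq ℓ r (t - r)) := by
  conv_lhs => rw [hseq]
  rw [dif_pos ⟨h1, h2, h3⟩]

lemma hseq_zero (ℓ r : ℕ) (h1 : 0 < ℓ) : hseq ℓ r 0 = true := by
  conv_lhs => rw [hseq]
  rw [dif_neg (by omega)]
  simp

/-- The XOR-recurrence sequence takes the value `true` at arbitrarily large times. -/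
lemma hseq_inf (ℓ r : ℕ) (hl : 0 < ℓ) (hr : 0 < r) (hne : ℓ ≠ r) :
    ∀ T, ∃ t, T ≤ t ∧ hseq ℓ r t = true := by
  by_contra h
  push_neg at h
  obtain ⟨T, hT⟩ := h
  have hT' : ∀ t, T ≤ t → hseq ℓ r t = false := by
    intro t ht
    exact Bool.eq_false_iff.mpr (hT t ht)
  have key : ∀ j t, T - j ≤ t → hseq ℓ r t = false := by
    intro j
    induction j with
    | zero => intro t ht; exact hT' t (by omega)
    | succ j ih =>
      intro t ht
      rcases le_or_gt (T - j) t with h' | h'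
      · exact ih t h'
      · have hrec := hseq_rec ℓ r hl hr (t := t + max ℓ r) (by omega)
        have h1 : hseq ℓ r (t + max ℓ r) = false := ih _ (by omega)
        rcases le_total ℓ r with hlr | hlr
        · have e1 : t + max ℓ r - r = t := by omega
          have h2 : hseq ℓ r (t + max ℓ r - ℓ) = false := ih _ (by omega)
          rw [e1, h2, h1] at hrec
          simp only [Bool.false_xor] at hrec
          exact hrec.symm
        · have e1 : t + max ℓ r - ℓ = t := by omega
          have h2 : hseq ℓ r (t + max ℓ r - r) = false := ih _ (by omega)
          rw [e1, h2, h1] at hrec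
          simp only [Bool.xor_false] at hrec
          exact hrec.symm
  have h0 := key T 0 (by omega)
  rw [hseq_zero ℓ r hl] at h0
  exact absurd h0 (by decide)

/-- Predecessor function on the double cycle. -/
def pdFun (ℓ : ℕ) {n : ℕ} (hn : 0 < n) (i : Fin n) : Fin n :=
  if (i : ℕ) = ℓ then ⟨0, hn⟩ else ⟨(i : ℕ) - 1, lt_of_le_of_lt (Nat.sub_le _ _) i.2⟩

lemma pdFun_val (ℓ : ℕ) {n : ℕ} (hn : 0 < n) (i : Fin n) :
    ((pdFun ℓ hn i : Fin n) : ℕ) = if (i : ℕ) = ℓ then 0 else (i : ℕ) - 1 := by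
  by_cases h : (i : ℕ) = ℓ <;> simp [pdFun, h]

/-- Distance from vertex `0` along the cycles. -/
def ddFun (ℓ : ℕ) {n : ℕ} (i : Fin n) : ℕ :=
  if (i : ℕ) < ℓ then (i : ℕ) else (i : ℕ) - ℓ + 1

/-- The state loaded with the trace sequence `a` at time `T`. -/
def Xstate {n : ℕ} (pd : Fin n → Fin n)
    (hpd : ∀ i : Fin n, (i : ℕ) ≠ 0 → ((pd i : Fin n) : ℕ) < (i : ℕ))
    (a : ℕ → Bool) (e : Fin n → Bool) (T : ℕ) (i : Fin n) : Bool :=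
  if h : (i : ℕ) = 0 then a T
  else Bool.xor (Xstate pd hpd a e (T - 1) (pd i)) (e i)
termination_by (i : ℕ)
decreasing_by exact hpd i h

/-! ### Main theorem -/

/-- if `min(ℓ,r)` does not divide `max(ℓ,r)`, then no boolean function whose
interaction digraph is the double cycle `C_{ℓ,r}` is nilpotent. -/
theorem stmt8 (ℓ r : ℕ) (hℓ : 0 < ℓ) (hr : 0 < r)
    (hdvd : ¬ (min ℓ r ∣ max ℓ r))
    (f : (Fin (ℓ + r - 1) → Bool) → (Fin (ℓ + r - 1) → Bool))
    (hIG : ∀ j i, dependsB f j i ↔ dcArc ℓ r (j : ℕ) (i : ℕ)) :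
    ¬ ∃ (k : ℕ) (c : Fin (ℓ + r - 1) → Bool), f^[k] = Function.const _ c := by
  rintro ⟨k, c, hk⟩
  -- basic arithmetic consequences of the divisibility hypothesis
  have hℓ2 : 2 ≤ ℓ := by
    by_contra h
    exact hdvd (by
      have h1 : min ℓ r = 1 := by omega
      rw [h1]; exact one_dvd _)
  have hr2 : 2 ≤ r := by
    by_contra h
    exact hdvd (by
      have h1 : min ℓ r = 1 := by omega
      rw [h1]; exact one_dvd _)
  have hne : ℓ ≠ r := by
    intro h
    apply hdvd
    have h1 : min ℓ r = max ℓ r := by omega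
    rw [h1]
  have hndlr : ¬ ℓ ∣ r := by
    intro hd
    rcases le_or_gt ℓ r with h | h
    · exact hdvd (by rwa [min_eq_left h, max_eq_right h])
    · have := Nat.le_of_dvd (by omega) hd
      omega
  have hndrl : ¬ r ∣ ℓ := by
    intro hd
    rcases le_or_gt r ℓ with h | h
    · exact hdvd (by rwa [min_eq_right h, max_eq_left h])
    · have := Nat.le_of_dvd (by omega) hd
      omega
  have hn0 : 0 < ℓ + r - 1 := by omega
  -- fixed point of f
  have hfc : f c = c := by
    have e1 : f^[k+1] c = f c := by
      rw [Function.iterate_succ_apply', hk]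
      rfl
    have e2 : f^[k+1] c = c := by
      rw [Function.iterate_succ_apply, hk]
      rfl
    rw [← e1, e2]
  have hfixc : ∀ j, f^[j] c = c := by
    intro j
    induction j with
    | zero => rfl
    | succ j ih => rw [Function.iterate_succ_apply', ih, hfc]
  have hall : ∀ (x : Fin (ℓ + r - 1) → Bool) (t : ℕ), k ≤ t → f^[t] x = c := by
    intro x t ht
    have h1 : t = (t - k) + k := by omega
    rw [h1, Function.iterate_add_apply, hk]
    exact hfixc _
  -- distinguished vertices
  obtain ⟨z, hz⟩ : ∃ z : Fin (ℓ + r - 1), (z : ℕ) = 0 := ⟨⟨0, hn0⟩, rfl⟩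
  obtain ⟨u, hu⟩ : ∃ u : Fin (ℓ + r - 1), (u : ℕ) = ℓ - 1 := ⟨⟨ℓ - 1, by omega⟩, rfl⟩
  obtain ⟨v, hv⟩ : ∃ v : Fin (ℓ + r - 1), (v : ℕ) = ℓ + r - 2 := ⟨⟨ℓ + r - 2, by omega⟩, rfl⟩
  have huv : u ≠ v := by
    intro h
    have := congrArg Fin.val h
    omega
  -- local structure at vertices ≠ 0
  have hpd' : ∀ i : Fin (ℓ + r - 1), (i : ℕ) ≠ 0 →
      ((pdFun ℓ hn0 i : Fin (ℓ + r - 1)) : ℕ) < (i : ℕ) := by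
    intro i hi
    rw [pdFun_val]
    have := i.isLt
    split_ifs <;> omega
  obtain ⟨ee, heedef⟩ : ∃ ee : Fin (ℓ + r - 1) → Bool, ∀ i, ee i = f (fun _ => false) i :=
    ⟨_, fun _ => rfl⟩
  have harc1 : ∀ i : Fin (ℓ + r - 1), (i : ℕ) ≠ 0 →
      ∀ x, f x i = Bool.xor (x (pdFun ℓ hn0 i)) (ee i) := by
    intro i hi0
    have hilt := i.isLt
    have hpv := pdFun_val ℓ hn0 i
    have hdeps : ∀ j, dependsB f j i → j = pdFun ℓ hn0 i := by
      intro j hdj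
      have hj := (hIG j i).mp hdj
      have hjlt := j.isLt
      unfold dcArc at hj
      apply Fin.ext
      rw [hpv]
      split_ifs <;> omega
    have hdep_self : dependsB f (pdFun ℓ hn0 i) i := by
      apply (hIG _ i).mpr
      unfold dcArc
      rw [hpv]
      split_ifs <;> omega
    have hH : ∀ x, f x i =
        f (Function.update (fun _ => false) (pdFun ℓ hn0 i) (x (pdFun ℓ hn0 i))) i := by
      intro x
      apply dep_only' f i
      intro j hdj
      rw [hdeps j hdj, Function.update_self]
    -- the one-variable function is non-constant
    obtain ⟨x0, y0, hoff, hfne⟩ := hdep_self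
    rw [hH x0, hH y0] at hfne
    have hxyne : x0 (pdFun ℓ hn0 i) ≠ y0 (pdFun ℓ hn0 i) := by
      intro h; rw [h] at hfne; exact hfne rfl
    have hnc : f (Function.update (fun _ => false) (pdFun ℓ hn0 i) true) i ≠
        f (Function.update (fun _ => false) (pdFun ℓ hn0 i) false) i := by
      cases hx0 : x0 (pdFun ℓ hn0 i) <;> cases hy0 : y0 (pdFun ℓ hn0 i) <;>
        rw [hx0, hy0] at hfne hxyne
      · exact absurd rfl hxyne
      · exact fun h => hfne h.symm
      · exact hfne
      · exact absurd rfl hxyne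
    have heq_false : f (Function.update (fun _ => false) (pdFun ℓ hn0 i) false) i = ee i := by
      rw [heedef]
      congr 1
      funext j
      by_cases hj : j = pdFun ℓ hn0 i
      · subst hj; rw [Function.update_self]
      · rw [Function.update_of_ne hj]
    have hAval : f (Function.update (fun _ => false) (pdFun ℓ hn0 i) true) i = !(ee i) := by
      rw [heq_false] at hnc
      cases hA : f (Function.update (fun _ => false) (pdFun ℓ hn0 i) true) i <;>
        cases hB : ee i <;> rw [hA, hB] at hnc <;> simp_all
    intro x
    rw [hH x]
    cases hxp : x (pdFun ℓ hn0 i)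
    · rw [Bool.false_xor]
      exact heq_false
    · rw [Bool.true_xor]
      exact hAval
  -- local structure at vertex 0
  obtain ⟨G, hGdef⟩ : ∃ G : Bool → Bool → Bool, ∀ b1 b2,
      G b1 b2 = f (Function.update (Function.update (fun _ => false) u b1) v b2) z :=
    ⟨_, fun _ _ => rfl⟩
  have hdeps0 : ∀ j, dependsB f j z → j = u ∨ j = v := by
    intro j hdj
    have hj := (hIG j z).mp hdj
    have hjlt := j.isLt
    unfold dcArc at hj
    rw [hz] at hj
    have hval : (j : ℕ) = ℓ - 1 ∨ (j : ℕ) = ℓ + r - 2 := by omega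
    rcases hval with h | h
    · exact Or.inl (Fin.ext (by omega))
    · exact Or.inr (Fin.ext (by omega))
  have harc0 : ∀ x, f x z = G (x u) (x v) := by
    intro x
    have hstep : f x z =
        f (Function.update (Function.update (fun _ => false) u (x u)) v (x v)) z := by
      apply dep_only' f z
      intro j hdj
      rcases hdeps0 j hdj with h | h
      · subst h; rw [Function.update_of_ne huv, Function.update_self]
      · subst h; rw [Function.update_self]
    rw [hstep, hGdef]
  have hd1 : ∃ w, G false w ≠ G true w := by
    have hdu : dependsB f u z := by
      apply (hIG u z).mpr
      unfold dcArc
      omega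
    obtain ⟨x0, y0, hoff, hfne⟩ := hdu
    rw [harc0 x0, harc0 y0] at hfne
    have hxv : x0 v = y0 v := hoff v (Ne.symm huv)
    rw [hxv] at hfne
    have hxyne : x0 u ≠ y0 u := by
      intro h; rw [h] at hfne; exact hfne rfl
    cases hx0 : x0 u <;> cases hy0 : y0 u <;> rw [hx0, hy0] at hfne hxyne
    · exact absurd rfl hxyne
    · exact ⟨y0 v, hfne⟩
    · exact ⟨y0 v, Ne.symm hfne⟩
    · exact absurd rfl hxyne
  have hd2 : ∃ w, G w false ≠ G w true := by
    have hdv : dependsB f v z := by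
      apply (hIG v z).mpr
      unfold dcArc
      omega
    obtain ⟨x0, y0, hoff, hfne⟩ := hdv
    rw [harc0 x0, harc0 y0] at hfne
    have hxu : x0 u = y0 u := hoff u huv
    rw [hxu] at hfne
    have hxyne : x0 v ≠ y0 v := by
      intro h; rw [h] at hfne; exact hfne rfl
    cases hx0 : x0 v <;> cases hy0 : y0 v <;> rw [hx0, hy0] at hfne hxyne
    · exact absurd rfl hxyne
    · exact ⟨y0 u, hfne⟩
    · exact ⟨y0 u, Ne.symm hfne⟩
    · exact absurd rfl hxyne
  -- accumulated signs along the cycles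
  have hEE : ∀ i : Fin (ℓ + r - 1), ∃ E : Bool,
      (∀ (a : ℕ → Bool) (T : ℕ), ddFun ℓ i ≤ T →
        Xstate (pdFun ℓ hn0) hpd' a ee T i = Bool.xor (a (T - ddFun ℓ i)) E)
      ∧ c i = Bool.xor (c z) E := by
    suffices H : ∀ m, ∀ i : Fin (ℓ + r - 1), (i : ℕ) = m → ∃ E : Bool,
        (∀ (a : ℕ → Bool) (T : ℕ), ddFun ℓ i ≤ T →
          Xstate (pdFun ℓ hn0) hpd' a ee T i = Bool.xor (a (T - ddFun ℓ i)) E)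
        ∧ c i = Bool.xor (c z) E from fun i => H (i : ℕ) i rfl
    intro m
    induction m using Nat.strong_induction_on with
    | _ m ih =>
      intro i him
      by_cases h0 : (i : ℕ) = 0
      · refine ⟨false, fun a T hT => ?_, ?_⟩
        · have hdd : ddFun ℓ i = 0 := by
            unfold ddFun
            rw [h0, if_pos (by omega)]
          conv_lhs => rw [Xstate]
          rw [dif_pos h0, hdd, Nat.sub_zero, Bool.xor_false]
        · have hiz : i = z := Fin.ext (by omega)
          rw [hiz, Bool.xor_false]
      · have hlt : ((pdFun ℓ hn0 i : Fin (ℓ + r - 1)) : ℕ) < m := him ▸ hpd' i h0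
        obtain ⟨E', hE1, hE2⟩ := ih _ hlt (pdFun ℓ hn0 i) rfl
        have hilt := i.isLt
        have hpv := pdFun_val ℓ hn0 i
        have hddrel : ddFun ℓ (pdFun ℓ hn0 i) + 1 = ddFun ℓ i := by
          unfold ddFun
          rw [hpv]
          split_ifs <;> omega
        refine ⟨Bool.xor E' (ee i), fun a T hT => ?_, ?_⟩
        · conv_lhs => rw [Xstate]
          rw [dif_neg h0, hE1 a (T - 1) (by omega)]
          rw [show T - 1 - ddFun ℓ (pdFun ℓ hn0 i) = T - ddFun ℓ i from by omega]
          exact Bool.xor_assoc _ _ _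
        · calc c i = f c i := (congrFun hfc i).symm
            _ = Bool.xor (c (pdFun ℓ hn0 i)) (ee i) := harc1 i h0 c
            _ = Bool.xor (Bool.xor (c z) E') (ee i) := by rw [hE2]
            _ = Bool.xor (c z) (Bool.xor E' (ee i)) := Bool.xor_assoc _ _ _
  obtain ⟨Eu, hEu, hEuc⟩ := hEE u
  obtain ⟨Ev, hEv, hEvc⟩ := hEE v
  have hddu : ddFun ℓ u = ℓ - 1 := by
    unfold ddFun
    rw [hu, if_pos (by omega)]
  have hddv : ddFun ℓ v = r - 1 := by
    unfold ddFun
    rw [hv, if_neg (by omega)]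
    omega
  -- the trace equation at the fixed point
  have hc0g : c z = G (Bool.xor (c z) Eu) (Bool.xor (c z) Ev) := by
    calc c z = f c z := (congrFun hfc z).symm
      _ = G (c u) (c v) := harc0 c
      _ = G (Bool.xor (c z) Eu) (Bool.xor (c z) Ev) := by rw [hEuc, hEvc]
  -- main trace lemma: any solution of the recurrence is eventually the constant c z
  have MAIN : ∀ a : ℕ → Bool,
      (∀ t, max ℓ r ≤ t →
        a t = G (Bool.xor (a (t - ℓ)) Eu) (Bool.xor (a (t - r)) Ev)) →
      ∀ t, max ℓ r + k ≤ t → a t = c z := by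
    intro a ha
    have hstepX : ∀ T, max ℓ r ≤ T →
        f (Xstate (pdFun ℓ hn0) hpd' a ee T) = Xstate (pdFun ℓ hn0) hpd' a ee (T + 1) := by
      intro T hT
      funext i
      by_cases h0 : (i : ℕ) = 0
      · have hiz : i = z := Fin.ext (by omega)
        rw [hiz, harc0]
        rw [hEu a T (by rw [hddu]; omega), hEv a T (by rw [hddv]; omega), hddu, hddv]
        conv_rhs => rw [Xstate]
        rw [dif_pos hz, ha (T + 1) (by omega)]
        rw [show T + 1 - ℓ = T - (ℓ - 1) from by omega,
          show T + 1 - r = T - (r - 1) from by omega]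
      · rw [harc1 i h0]
        conv_rhs => rw [Xstate]
        rw [dif_neg h0, Nat.add_sub_cancel]
    have hiter : ∀ j, f^[j] (Xstate (pdFun ℓ hn0) hpd' a ee (max ℓ r)) =
        Xstate (pdFun ℓ hn0) hpd' a ee (max ℓ r + j) := by
      intro j
      induction j with
      | zero => rfl
      | succ j ih =>
        rw [Function.iterate_succ_apply', ih, hstepX (max ℓ r + j) (by omega)]
        rfl
    intro t ht
    have h1 := hall (Xstate (pdFun ℓ hn0) hpd' a ee (max ℓ r)) (t - max ℓ r) (by omega)
    rw [hiter (t - max ℓ r), show max ℓ r + (t - max ℓ r) = t from by omega] at h1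
    have h2 : Xstate (pdFun ℓ hn0) hpd' a ee t z = a t := by
      conv_lhs => rw [Xstate]
      rw [dif_pos hz]
    rw [← h2, h1]
  -- case analysis on the local function at 0
  rcases classifyG G hd1 hd2 with hGx | ⟨p, q, s, hGa⟩
  · -- XOR case
    rw [hGx] at hc0g
    have hs' := bool_xor_const _ _ _ _ hc0g
    have ha : ∀ t, max ℓ r ≤ t →
        (fun t => Bool.xor (hseq ℓ r t) (c z)) t =
          G (Bool.xor ((fun t => Bool.xor (hseq ℓ r t) (c z)) (t - ℓ)) Eu)
            (Bool.xor ((fun t => Bool.xor (hseq ℓ r t) (c z)) (t - r)) Ev) := by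
      intro t ht
      simp only []
      rw [hGx, hseq_rec ℓ r (by omega) (by omega) ht, hs']
      exact bool_xor_rec _ _ _ _ _
    obtain ⟨t, ht1, ht2⟩ := hseq_inf ℓ r (by omega) (by omega) hne (max ℓ r + k)
    have h3 : Bool.xor (hseq ℓ r t) (c z) = c z :=
      MAIN (fun t => Bool.xor (hseq ℓ r t) (c z)) ha t ht1
    rw [ht2] at h3
    simp at h3
  · -- AND case
    rw [hGa] at hc0g
    by_cases hpq : Bool.xor Eu p = Bool.xor Ev q
    · -- both signed cycles equal: two constant solutions
      have ha : ∀ t, max ℓ r ≤ t →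
          (fun _ : ℕ => !(c z)) t =
            G (Bool.xor ((fun _ : ℕ => !(c z)) (t - ℓ)) Eu)
              (Bool.xor ((fun _ : ℕ => !(c z)) (t - r)) Ev) := by
        intro t _
        simp only []
        rw [hGa]
        exact bool_and_same (c z) Eu Ev p q s hpq hc0g
      have h3 : (!(c z)) = c z :=
        MAIN (fun _ => !(c z)) ha (max ℓ r + k) le_rfl
      simp at h3
    · -- signed cycles different: use the divisibility hypothesis
      have hc0s : c z = s := bool_and_c0 _ _ _ _ _ _ hpq hc0g
      by_cases hps : Bool.xor (Bool.xor Eu p) s = false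
      · -- indicator of multiples of ℓ
        have ha : ∀ t, max ℓ r ≤ t →
            (fun t => Bool.xor (decide (ℓ ∣ t)) s) t =
              G (Bool.xor ((fun t => Bool.xor (decide (ℓ ∣ t)) s) (t - ℓ)) Eu)
                (Bool.xor ((fun t => Bool.xor (decide (ℓ ∣ t)) s) (t - r)) Ev) := by
          intro t ht
          simp only []
          rw [hGa]
          rw [and_step ℓ r t (le_trans (Nat.le_max_right ℓ r) ht)
            (le_trans (Nat.le_max_left ℓ r) ht) hndlr]
          exact bool_and_recL _ _ _ _ _ _ _ hps hpq
        have ht1 : max ℓ r + k ≤ ℓ * (max ℓ r + k) := by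
          calc max ℓ r + k = 1 * (max ℓ r + k) := (one_mul _).symm
            _ ≤ ℓ * (max ℓ r + k) := Nat.mul_le_mul_right _ (by omega)
        have h3 : Bool.xor (decide (ℓ ∣ ℓ * (max ℓ r + k))) s = c z :=
          MAIN (fun t => Bool.xor (decide (ℓ ∣ t)) s) ha (ℓ * (max ℓ r + k)) ht1
        rw [decide_eq_true (dvd_mul_right ℓ (max ℓ r + k)), hc0s] at h3
        simp at h3
      · -- indicator of multiples of r
        have hps' : Bool.xor (Bool.xor Eu p) s = true := by
          simp only [Bool.not_eq_false] at hps
          exact hps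
        have ha : ∀ t, max ℓ r ≤ t →
            (fun t => Bool.xor (decide (r ∣ t)) s) t =
              G (Bool.xor ((fun t => Bool.xor (decide (r ∣ t)) s) (t - ℓ)) Eu)
                (Bool.xor ((fun t => Bool.xor (decide (r ∣ t)) s) (t - r)) Ev) := by
          intro t ht
          simp only []
          rw [hGa]
          rw [and_step r ℓ t (le_trans (Nat.le_max_left ℓ r) ht)
            (le_trans (Nat.le_max_right ℓ r) ht) hndrl]
          exact bool_and_recR _ _ _ _ _ _ _ hps' hpq
        have ht1 : max ℓ r + k ≤ r * (max ℓ r + k) := by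
          calc max ℓ r + k = 1 * (max ℓ r + k) := (one_mul _).symm
            _ ≤ r * (max ℓ r + k) := Nat.mul_le_mul_right _ (by omega)
        have h3 : Bool.xor (decide (r ∣ r * (max ℓ r + k))) s = c z :=
          MAIN (fun t => Bool.xor (decide (r ∣ t)) s) ha (r * (max ℓ r + k)) ht1
        rw [decide_eq_true (dvd_mul_right r (max ℓ r + k)), hc0s] at h3
        simp at h3
end

section
/- Let G be the double cycle C_{ℓ,r} with vertices 1,…,ℓ on the first cycle and 1, ℓ+1, …, ℓ+r−1 on the second, n = ℓ+r−1, with ℓ dividing r. The boolean function f defined by f₁(x) = x_ℓ ∧ ¬x_n, f₂(x) = f_{ℓ+1}(x) = x₁, and fᵢ(x) = x_{i−1} for all other i, satisfies: f^{2r−1} is the constant 0, and f^{2r−2} is not constant. -/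
/-- on the double cycle `C_{ℓ,r}` with `ℓ ∣ r` (vertices `0,…,ℓ-1` on the first
cycle and `0, ℓ, …, ℓ+r-2` on the second), the boolean function with
`f₀(x) = x_{ℓ-1} ∧ ¬x_{ℓ+r-2}`, `f₁(x) = f_ℓ(x) = x₀` and `fᵢ(x) = x_{i-1}` otherwise,
satisfies `f^{2r-1} = 0` and `f^{2r-2}` is not constant. -/
theorem stmt10 (ℓ r : ℕ) (hℓ : 0 < ℓ) (hr : 0 < r) (hdvd : ℓ ∣ r)
    (f : (Fin (ℓ + r - 1) → Bool) → (Fin (ℓ + r - 1) → Bool))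
    (hf : ∀ x (i : Fin (ℓ + r - 1)), f x i =
      if (i : ℕ) = 0 then
        (x ⟨ℓ - 1, by omega⟩ && !(x ⟨ℓ + r - 2, by omega⟩))
      else if (i : ℕ) = 1 ∨ (i : ℕ) = ℓ then x ⟨0, by omega⟩
      else x ⟨(i : ℕ) - 1, by have := i.isLt; omega⟩) :
    f^[2 * r - 1] = Function.const _ (fun _ => false) ∧
      ¬ ∃ c, f^[2 * r - 2] = Function.const _ c := by
  have hlr : ℓ ≤ r := Nat.le_of_dvd hr hdvd
  have hn : 0 < ℓ + r - 1 := by omega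
  -- specialized forms of hf
  have hf0 : ∀ x, f x ⟨0, hn⟩ = (x ⟨ℓ - 1, by omega⟩ && !(x ⟨ℓ + r - 2, by omega⟩)) := by
    intro x; rw [hf]; rw [if_pos]; rfl
  have hf1 : ∀ x (v : ℕ) (hv : v < ℓ + r - 1), (v = 1 ∨ v = ℓ) →
      f x ⟨v, hv⟩ = x ⟨0, hn⟩ := by
    intro x v hv h
    rw [hf, if_neg, if_pos]
    · exact h
    · show ¬ v = 0; omega
  have hf2 : ∀ x (v : ℕ) (hv : v < ℓ + r - 1), v ≠ 0 → v ≠ 1 → v ≠ ℓ →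
      f x ⟨v, hv⟩ = x ⟨v - 1, by omega⟩ := by
    intro x v hv h0 h1 h2
    rw [hf, if_neg, if_neg]
    · show ¬ (v = 1 ∨ v = ℓ); tauto
    · exact h0
  have hstep : ∀ t (x : Fin (ℓ + r - 1) → Bool), f^[t+1] x = f (f^[t] x) :=
    fun t x => Function.iterate_succ_apply' f t x
  -- propagation along the first cycle
  have cyc1 : ∀ i, i < ℓ → ∀ t (x : Fin (ℓ + r - 1) → Bool) (h : i < ℓ + r - 1),
      f^[t] x ⟨i, h⟩ =
        if i ≤ t then f^[t - i] x ⟨0, hn⟩ else x ⟨i - t, by omega⟩ := by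
    intro i
    induction i with
    | zero =>
      intro _ t x h
      simp
    | succ i ih =>
      intro hi t x h
      cases t with
      | zero =>
        rw [if_neg (by omega)]
        simp
      | succ t =>
        rw [hstep]
        rcases Nat.eq_zero_or_pos i with h0 | h0
        · subst h0
          rw [hf1 _ _ _ (Or.inl rfl), if_pos (by omega)]
          simp
        · rw [hf2 _ _ _ (by omega) (by omega) (by omega)]
          have : i + 1 - 1 = i := by omega
          rw [show ((⟨i + 1 - 1, by omega⟩ : Fin (ℓ + r - 1))) = ⟨i, by omega⟩ by
            simp only [Fin.mk.injEq]; omega]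
          rw [ih (by omega) t x (by omega)]
          by_cases hle : i ≤ t
          · rw [if_pos hle, if_pos (show i + 1 ≤ t + 1 by omega),
              show t + 1 - (i + 1) = t - i by omega]
          · rw [if_neg hle, if_neg (show ¬ (i + 1 ≤ t + 1) by omega)]
            congr 1
            simp only [Fin.mk.injEq]; omega
  -- propagation along the second cycle
  have cyc2 : ∀ j, j < r - 1 → ∀ t (x : Fin (ℓ + r - 1) → Bool) (h : ℓ + j < ℓ + r - 1),
      f^[t] x ⟨ℓ + j, h⟩ =
        if j + 1 ≤ t then f^[t - j - 1] x ⟨0, hn⟩ else x ⟨ℓ + j - t, by omega⟩ := by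
    intro j
    induction j with
    | zero =>
      intro hj t x h
      cases t with
      | zero =>
        rw [if_neg (by omega)]
        simp
      | succ t =>
        rw [hstep, hf1 _ _ _ (by omega), if_pos (by omega),
          show t + 1 - 0 - 1 = t by omega]
    | succ j ih =>
      intro hj t x h
      cases t with
      | zero =>
        rw [if_neg (by omega)]
        simp
      | succ t =>
        rw [hstep, hf2 _ _ _ (by omega) (by omega) (by omega)]
        rw [show ((⟨ℓ + (j + 1) - 1, by omega⟩ : Fin (ℓ + r - 1))) = ⟨ℓ + j, by omega⟩ by
          simp only [Fin.mk.injEq]; omega]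
        rw [ih (by omega) t x (by omega)]
        by_cases hle : j + 1 ≤ t
        · rw [if_pos hle, if_pos (show j + 1 + 1 ≤ t + 1 by omega),
            show t + 1 - (j + 1) - 1 = t - j - 1 by omega]
        · rw [if_neg hle, if_neg (show ¬ (j + 1 + 1 ≤ t + 1) by omega)]
          congr 1
          simp only [Fin.mk.injEq]; omega
  -- the recurrence for the shared vertex, for large times
  have arec : ∀ s (x : Fin (ℓ + r - 1) → Bool),
      f^[s + r] x ⟨0, hn⟩ = (f^[s + r - ℓ] x ⟨0, hn⟩ && !(f^[s] x ⟨0, hn⟩)) := by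
    intro s x
    rw [show s + r = (s + r - 1) + 1 by omega, hstep, hf0,
      show s + r - 1 + 1 - ℓ = s + r - ℓ by omega]
    have e1 : f^[s + r - 1] x ⟨ℓ - 1, by omega⟩ = f^[s + r - ℓ] x ⟨0, hn⟩ := by
      rw [cyc1 (ℓ - 1) (by omega) _ _ _, if_pos (by omega),
        show s + r - 1 - (ℓ - 1) = s + r - ℓ by omega]
    rw [e1]
    rcases Nat.lt_or_ge r 2 with h2 | h2
    · -- r = 1, so ℓ = 1 and the vertex ℓ + r - 2 is vertex 0
      have hr1 : r = 1 := by omega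
      have hℓ1 : ℓ = 1 := by omega
      rw [show ((⟨ℓ + r - 2, by omega⟩ : Fin (ℓ + r - 1))) = ⟨0, hn⟩ by
        simp only [Fin.mk.injEq]; omega]
      rw [show s + r - 1 = s by omega]
    · rw [show ((⟨ℓ + r - 2, by omega⟩ : Fin (ℓ + r - 1))) = ⟨ℓ + (r - 2), by omega⟩ by
        simp only [Fin.mk.injEq]; omega]
      rw [cyc2 (r - 2) (by omega) _ _ _, if_pos (by omega)]
      rw [show s + r - 1 - (r - 2) - 1 = s by omega]
  -- monotone descent by ℓ
  have amono : ∀ t (x : Fin (ℓ + r - 1) → Bool),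
      f^[t + ℓ] x ⟨0, hn⟩ = true → f^[t] x ⟨0, hn⟩ = true := by
    intro t x h
    rw [show t + ℓ = (t + ℓ - 1) + 1 by omega, hstep, hf0] at h
    have := (Bool.and_eq_true _ _).mp h |>.1
    rw [cyc1 (ℓ - 1) (by omega) _ _ _, if_pos (by omega),
      show t + ℓ - 1 - (ℓ - 1) = t by omega] at this
    exact this
  have amono' : ∀ k t (x : Fin (ℓ + r - 1) → Bool),
      f^[t + k * ℓ] x ⟨0, hn⟩ = true → f^[t] x ⟨0, hn⟩ = true := by
    intro k
    induction k with
    | zero => intro t x h; simpa using h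
    | succ k ih =>
      intro t x h
      rw [show t + (k + 1) * ℓ = (t + ℓ) + k * ℓ by ring] at h
      exact amono t x (ih (t + ℓ) x h)
  -- the shared vertex is dead from time r on
  have azero : ∀ t (x : Fin (ℓ + r - 1) → Bool), r ≤ t → f^[t] x ⟨0, hn⟩ = false := by
    intro t x ht
    by_contra hcon
    have htrue : f^[t] x ⟨0, hn⟩ = true := by
      revert hcon; cases f^[t] x ⟨0, hn⟩ <;> simp
    obtain ⟨k, hk⟩ := hdvd
    have hkl : k * ℓ = r := by rw [hk, Nat.mul_comm]
    have h1 : f^[t - r] x ⟨0, hn⟩ = true := by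
      apply amono' k (t - r) x
      rw [show t - r + k * ℓ = t by rw [hkl]; omega]
      exact htrue
    have h2 := arec (t - r) x
    rw [show t - r + r = t by omega, htrue, h1] at h2
    simp at h2
  -- zero is fixed
  have hfix : ∀ t (x : Fin (ℓ + r - 1) → Bool), (∀ i, x i = false) → ∀ i, f^[t] x i = false := by
    intro t
    induction t with
    | zero => intro x h i; exact h i
    | succ t ih =>
      intro x h i
      rw [hstep, hf]
      split_ifs <;> simp [ih x h]
  refine ⟨?_, ?_⟩
  · -- f^[2r-1] is constant 0
    funext x i
    show f^[2 * r - 1] x i = false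
    obtain ⟨v, hv⟩ := i
    rcases Nat.lt_or_ge v ℓ with h1 | h1
    · rcases Nat.eq_zero_or_pos v with h0 | h0
      · subst h0
        exact azero _ x (by omega)
      · rw [cyc1 v h1 _ _ _, if_pos (by omega)]
        exact azero _ x (by omega)
    · rw [show ((⟨v, hv⟩ : Fin (ℓ + r - 1))) = ⟨ℓ + (v - ℓ), by omega⟩ by
        simp only [Fin.mk.injEq]; omega]
      rw [cyc2 (v - ℓ) (by omega) _ _ _, if_pos (by omega)]
      exact azero _ x (by omega)
  · -- f^[2r-2] is not constant
    rintro ⟨c, hc⟩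
    set x₁ : Fin (ℓ + r - 1) → Bool := fun i => decide ((i : ℕ) < ℓ) with hx₁
    -- the shared vertex stays alive up to time r - 1 starting from x₁
    have alive : ∀ t, t ≤ r - 1 → f^[t] x₁ ⟨0, hn⟩ = true := by
      intro t
      induction t using Nat.strong_induction_on with
      | _ t ih =>
        intro ht
        cases t with
        | zero => simp [hx₁, hℓ]
        | succ s =>
          rw [hstep, hf0]
          have hA : f^[s] x₁ ⟨ℓ - 1, by omega⟩ = true := by
            rw [cyc1 (ℓ - 1) (by omega) _ _ _]
            by_cases hle : ℓ - 1 ≤ s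
            · rw [if_pos hle]
              exact ih (s - (ℓ - 1)) (by omega) (by omega)
            · rw [if_neg hle]
              simp only [hx₁]
              simp
              omega
          have hB : f^[s] x₁ ⟨ℓ + r - 2, by omega⟩ = false := by
            have hr2 : 2 ≤ r := by omega
            rw [show ((⟨ℓ + r - 2, by omega⟩ : Fin (ℓ + r - 1))) = ⟨ℓ + (r - 2), by omega⟩ by
              simp only [Fin.mk.injEq]; omega]
            rw [cyc2 (r - 2) (by omega) _ _ _, if_neg (by omega)]
            simp only [hx₁]
            simp
            omega
          rw [hA, hB]
          rfl
    -- evaluate both at the last vertex of the second cycle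
    have hlast : (ℓ + r - 2) < ℓ + r - 1 := by omega
    have h1 : f^[2 * r - 2] x₁ ⟨ℓ + r - 2, hlast⟩ = true := by
      rcases Nat.lt_or_ge r 2 with h2 | h2
      · have : 2 * r - 2 = 0 := by omega
        rw [this]
        simp only [Function.iterate_zero, id_eq, hx₁]
        simp
        omega
      · rw [show ((⟨ℓ + r - 2, hlast⟩ : Fin (ℓ + r - 1))) = ⟨ℓ + (r - 2), by omega⟩ by
          simp only [Fin.mk.injEq]; omega]
        rw [cyc2 (r - 2) (by omega) _ _ _, if_pos (by omega)]
        rw [show 2 * r - 2 - (r - 2) - 1 = r - 1 by omega]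
        exact alive (r - 1) le_rfl
    have h0 : f^[2 * r - 2] (fun _ => false) ⟨ℓ + r - 2, hlast⟩ = false :=
      hfix _ _ (fun _ => rfl) _
    have e1 : f^[2 * r - 2] x₁ ⟨ℓ + r - 2, hlast⟩ = c ⟨ℓ + r - 2, hlast⟩ := by
      rw [hc]; rfl
    have e0 : f^[2 * r - 2] (fun _ => false) ⟨ℓ + r - 2, hlast⟩ = c ⟨ℓ + r - 2, hlast⟩ := by
      rw [hc]; rfl
    rw [h1] at e1
    rw [h0] at e0
    rw [← e1] at e0
    simp at e0
end

section
/- Every arc (v,w) of a strongly connected digraph G with at least two vertices has a good arc: an arc (a,b) with b ≠ w such that (i) for every vertex u ≠ w, G∖(a,b) has a path from u to v, and (ii) for every vertex u, either G∖(a,b) has a path from w to u, or G has a path from w to u containing (a,b) in which every vertex on the subpath from b to u has in-degree one in G. -/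
/-!
Call an arc `(a, b)` safe if `b ≠ w` and every `u ≠ w` still reaches `v` once `(a, b)` is
deleted. Safe arcs exist: with `d` the distance to `v`, an arc `(x, y)` with `y ≠ w` and
`d x ≤ d y` is never used by shortest paths, and if every such arc decreases `d`, then no
shortest path from `u ≠ w` to `v` passes through `w`, so any arc leaving `w` is safe.

Among the safe arcs choose `(a, b)` for which the set `U` of vertices reachable from `w` in
`G ∖ (a, b)` is maximal. If some `x ∉ U` could reach `v` without its arc `(x, y)`, `y ≠ w`,
then `(x, y)` would be safe with a strictly larger reachable set (it gains `b`). Hence on a simple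
path from `b` to `v` avoiding `(a, b)`, every vertex outside `U` is followed by its unique
out-neighbour other than `w`; so every vertex outside `U` lies on that path, right after its
only in-neighbour, and every `u ∉ U` is reached along `w ⋯ a → b ⋯ u` through vertices of
in-degree one.
-/

open Relation

variable {α : Type*}

def deleteArc (r : α → α → Prop) (a b : α) (p q : α) : Prop :=
  r p q ∧ ¬(p = a ∧ q = b)

section deleteArc

variable {r : α → α → Prop} {a b u v w x y : α}

theorem reflTransGen_deleteArc_of_reflTransGen (hx : ReflTransGen (deleteArc r x y) x v)
    (hu : ReflTransGen r u v) : ReflTransGen (deleteArc r x y) u v := by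
  induction hu using ReflTransGen.head_induction_on with
  | refl => exact .refl
  | @head p c hpc _ ih =>
    by_cases h : p = x ∧ c = y
    · exact h.1 ▸ hx
    · exact .head ⟨hpc, h⟩ ih

theorem reflTransGen_deleteArc_to_source (h : ReflTransGen r w a) :
    ReflTransGen (deleteArc r a b) w a := by
  induction h using ReflTransGen.head_induction_on with
  | refl => exact .refl
  | @head p c hpc _ ih =>
    by_cases hp : p = a
    · exact hp ▸ .refl
    · exact .head ⟨hpc, fun h => hp h.1⟩ ih

theorem reflTransGen_deleteArc_of_reflTransGen_target
    (hb : ReflTransGen (deleteArc r a b) w b) (hu : ReflTransGen r w u) :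
    ReflTransGen (deleteArc r a b) w u := by
  induction hu with
  | refl => exact .refl
  | @tail p q _ hpq ih =>
    by_cases h : p = a ∧ q = b
    · exact h.2 ▸ hb
    · exact ih.tail ⟨hpq, h⟩

theorem reflTransGen_deleteArc_of_not_reflTransGen_source
    (hx : ¬ReflTransGen (deleteArc r a b) w x) (hu : ReflTransGen (deleteArc r a b) w u) :
    ReflTransGen (deleteArc r x y) w u := by
  induction hu with
  | refl => exact .refl
  | @tail p q hwp hpq ih =>
    exact ih.tail ⟨hpq.1, by rintro ⟨rfl, -⟩; exact hx hwp⟩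

theorem reflTransGen_outside_of_not_reflTransGen_deleteArc (hu : ReflTransGen r w u)
    (hu' : ¬ReflTransGen (deleteArc r a b) w u) :
    ReflTransGen (fun p q => r p q ∧ ¬ReflTransGen (deleteArc r a b) w p ∧
      ¬ReflTransGen (deleteArc r a b) w q) b u := by
  induction hu with
  | refl => exact absurd .refl hu'
  | @tail p q _ hpq ih =>
    by_cases h : p = a ∧ q = b
    · exact h.2 ▸ .refl
    · have hp : ¬ReflTransGen (deleteArc r a b) w p := fun hp => hu' (hp.tail ⟨hpq, h⟩)
      exact (ih hp).tail ⟨hpq, hp, hu'⟩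

theorem Relation.ReflTransGen.restrict_reachable (h : ReflTransGen r w u) :
    ReflTransGen (fun p q => r p q ∧ ReflTransGen r w q) w u := by
  induction h with
  | refl => exact .refl
  | tail hwp hpq ih => exact ih.tail ⟨hpq, hwp.tail hpq⟩

theorem exists_ne_of_reflTransGen (h : ReflTransGen r w x) (hx : x ≠ w) :
    ∃ y, r w y ∧ y ≠ w := by
  induction h with
  | refl => exact absurd rfl hx
  | @tail p q _ hpq ih =>
    by_cases hp : p = w
    · exact ⟨q, hp ▸ hpq, hx⟩
    · exact ih hp

end deleteArc

namespace List

variable {r : α → α → Prop} {l : List α} {v x y : α}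

theorem IsChain.reflTransGen_of_head?_of_getLast? (hl : l.IsChain r) (hx : l.head? = some x)
    (hy : l.getLast? = some y) : ReflTransGen r x y := by
  cases l with
  | nil => simp at hx
  | cons z t =>
    obtain rfl : z = x := by simpa using hx
    exact relationReflTransGen_of_exists_isChain_cons t hl
      (by simpa [getLast?_eq_some_getLast] using hy)

theorem exists_nodup_isChain_of_reflTransGen (h : ReflTransGen r x y) :
    ∃ l : List α, l.IsChain r ∧ l.Nodup ∧ l.head? = some x ∧ l.getLast? = some y := by
  induction h using ReflTransGen.head_induction_on with
  | refl => exact ⟨[y], .singleton y, nodup_singleton y, rfl, rfl⟩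
  | @head p c hpc _ ih =>
    obtain ⟨l, hl, hnd, hc, hy⟩ := ih
    by_cases hp : p ∈ l
    · obtain ⟨s, t, rfl⟩ := append_of_mem hp
      refine ⟨p :: t, hl.suffix (suffix_append _ _), hnd.sublist (sublist_append_right _ _), rfl,
        ?_⟩
      rwa [getLast?_append_of_ne_nil _ (cons_ne_nil _ _)] at hy
    · cases l with
      | nil => simp at hc
      | cons c' t =>
        obtain rfl : c' = c := by simpa using hc
        exact ⟨p :: c' :: t, hl.cons_cons hpc, nodup_cons.2 ⟨hp, hnd⟩, rfl,
          by rwa [getLast?_cons_cons]⟩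

theorem IsChain.getElem?_succ_eq_of_not_reflTransGen_deleteArc (hl : l.IsChain r)
    (hnd : l.Nodup) (hv : l.getLast? = some v) {i : ℕ} (hi : l[i]? = some x)
    (hxy : ¬ReflTransGen (deleteArc r x y) x v) : l[i + 1]? = some y := by
  induction l generalizing i with
  | nil => simp at hi
  | cons z t ih =>
    cases i with
    | succ i =>
      cases t with
      | nil => simp at hi
      | cons c t =>
        exact ih (isChain_cons_cons.1 hl).2 (nodup_cons.1 hnd).2
          (by rwa [getLast?_cons_cons] at hv) hi
    | zero =>
      obtain rfl : z = x := by simpa using hi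
      cases t with
      | nil => exact absurd (by simpa using hv : z = v) fun h => hxy (h ▸ .refl)
      | cons c t =>
        by_contra hc
        have hcy : c ≠ y := fun h => hc (by simp [h])
        have hz : z ∉ c :: t := (nodup_cons.1 hnd).1
        have htail : (c :: t).IsChain (deleteArc r z y) :=
          (isChain_cons_cons.1 hl).2.imp_of_mem_imp fun p _ hp _ hpq =>
            ⟨hpq, fun h => hz (h.1 ▸ hp)⟩
        exact hxy (.head ⟨(isChain_cons_cons.1 hl).1, fun h => hcy h.2⟩
          (htail.reflTransGen_of_head?_of_getLast? rfl (by rwa [getLast?_cons_cons] at hv)))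

theorem exists_nodup_isChain_through {S : α → Prop} {w a b u : α} (hw : S w)
    (hwa : ReflTransGen (fun p q => r p q ∧ S q) w a) (hab : r a b) (hb : ¬S b)
    (hbu : ReflTransGen (fun p q => r p q ∧ ¬S q) b u) :
    ∃ P : List α, P.IsChain r ∧ P.Nodup ∧ P.head? = some w ∧ P.getLast? = some u ∧
      ∃ k : ℕ, P[k]? = some a ∧ P[k + 1]? = some b ∧
        ∀ m, k + 1 ≤ m → ∀ x, P[m]? = some x → ¬S x := by
  obtain ⟨l₁, hl₁, hnd₁, hh₁, ht₁⟩ := exists_nodup_isChain_of_reflTransGen hwa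
  obtain ⟨l₂, hl₂, hnd₂, hh₂, ht₂⟩ := exists_nodup_isChain_of_reflTransGen hbu
  have hS₁ : ∀ x ∈ l₁, S x := by
    refine hl₁.induction _ _ (fun _ _ h _ => h.2) fun hne => ?_
    rwa [Option.some_inj.1 ((head?_eq_some_head hne).symm.trans hh₁)]
  have hS₂ : ∀ x ∈ l₂, ¬S x := by
    refine hl₂.induction _ _ (fun _ _ h _ => h.2) fun hne => ?_
    rwa [Option.some_inj.1 ((head?_eq_some_head hne).symm.trans hh₂)]
  have hne₁ : l₁ ≠ [] := by rintro rfl; simp at hh₁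
  have hlen : l₁.length - 1 + 1 = l₁.length := Nat.sub_add_cancel (length_pos_iff.2 hne₁)
  refine ⟨l₁ ++ l₂, ?_, ?_, ?_, ?_, l₁.length - 1, ?_, ?_, ?_⟩
  · refine (hl₁.imp fun _ _ h => h.1).append (hl₂.imp fun _ _ h => h.1) fun p hp q hq => ?_
    rw [ht₁, Option.mem_some_iff] at hp
    rw [hh₂, Option.mem_some_iff] at hq
    exact hp ▸ hq ▸ hab
  · exact nodup_append.2 ⟨hnd₁, hnd₂, fun x hx y hy hxy => hS₂ y hy (hxy ▸ hS₁ x hx)⟩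
  · rwa [head?_append_of_ne_nil _ hne₁]
  · rw [getLast?_append, ht₂]; rfl
  · rw [getElem?_append_left (by omega), ← getLast?_eq_getElem?, ht₁]
  · rw [hlen, getElem?_append_right le_rfl, Nat.sub_self, ← head?_eq_getElem?, hh₂]
  · intro m hm x hx
    rw [getElem?_append_right (by omega)] at hx
    exact hS₂ x (mem_of_getElem? hx)

end List

section SafeArc

variable {adj : α → α → Prop} {a b v w x y z : α}

def IsSafeArc (adj : α → α → Prop) (v w a b : α) : Prop :=
  adj a b ∧ b ≠ w ∧ ∀ u, u ≠ w → ReflTransGen (deleteArc adj a b) u v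

theorem exists_descent (h : ∀ u, ReflTransGen adj u v) :
    ∃ d : α → ℕ, ∀ u, u ≠ v → ∃ q, adj u q ∧ d q < d u := by
  classical
  have hex : ∀ u, ∃ k, ∃ l : List α, l.length = k ∧ (u :: l).IsChain adj ∧
      (u :: l).getLast (List.cons_ne_nil _ _) = v := fun u =>
    let ⟨l, hl⟩ := List.exists_isChain_cons_of_relationReflTransGen (h u)
    ⟨_, l, rfl, hl⟩
  refine ⟨fun u => Nat.find (hex u), fun u hu => ?_⟩
  obtain ⟨l, hlen, hl, hlast⟩ := Nat.find_spec (hex u)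
  cases l with
  | nil => exact absurd hlast hu
  | cons q t =>
    refine ⟨q, (List.isChain_cons_cons.1 hl).1, ?_⟩
    have := Nat.find_min' (hex q) ⟨t, rfl, (List.isChain_cons_cons.1 hl).2, hlast⟩
    simp only [List.length_cons] at hlen
    show Nat.find (hex q) < Nat.find (hex u)
    omega

theorem reflTransGen_descending {d : α → ℕ}
    (hd : ∀ u, u ≠ v → ∃ q, adj u q ∧ d q < d u) (u : α) :
    ReflTransGen (fun p q => adj p q ∧ d q < d p ∧ d p ≤ d u) u v := by
  induction hn : d u using Nat.strong_induction_on generalizing u with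
  | _ n ih =>
    by_cases hu : u = v
    · exact hu ▸ .refl
    · obtain ⟨q, hq, hlt⟩ := hd u hu
      exact .head ⟨hq, hlt, hn.le⟩ (ReflTransGen.mono
        (fun _ _ h => ⟨h.1, h.2.1, h.2.2.trans (hlt.trans_eq hn).le⟩) _ _
        (ih (d q) (hn ▸ hlt) q rfl))

theorem exists_isSafeArc [Nontrivial α] (hreach : ∀ u v, ReflTransGen adj u v) (v w : α) :
    ∃ a b, IsSafeArc adj v w a b := by
  obtain ⟨d, hd⟩ := exists_descent fun u => hreach u v
  by_cases h : ∃ x y, adj x y ∧ y ≠ w ∧ d x ≤ d y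
  · obtain ⟨x, y, hxy, hyw, hle⟩ := h
    have hx : ReflTransGen (deleteArc adj x y) x v := ReflTransGen.mono
      (fun _ _ h => ⟨h.1, by rintro ⟨rfl, rfl⟩; omega⟩) _ _ (reflTransGen_descending hd x)
    exact ⟨x, y, hxy, hyw, fun u _ =>
      reflTransGen_deleteArc_of_reflTransGen hx (hreach u v)⟩
  · push Not at h
    have hbelow : ∀ u, ReflTransGen adj w u → u = w ∨ d u < d w := by
      intro u hu
      induction hu with
      | refl => exact .inl rfl
      | @tail p q _ hpq ih =>
        by_cases hq : q = w
        · exact .inl hq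
        · have := h p q hpq hq
          rcases ih with rfl | ih <;> omega
    obtain ⟨x, hx⟩ := exists_ne w
    obtain ⟨y, hwy, hyw⟩ := exists_ne_of_reflTransGen (hreach w x) hx
    refine ⟨w, y, hwy, hyw, fun u hu => ReflTransGen.mono (fun _ _ h => ?_) _ _
      (reflTransGen_descending hd u)⟩
    have := (hbelow u (hreach w u)).resolve_left hu
    exact ⟨h.1, by rintro ⟨rfl, -⟩; omega⟩

variable (adj v w) in
def IsMaximalSafeArc (a b : α) : Prop :=
  MaximalFor (fun e : α × α => IsSafeArc adj v w e.1 e.2)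
    (fun e => {t | ReflTransGen (deleteArc adj e.1 e.2) w t}) (a, b)

theorem exists_isMaximalSafeArc [Finite α] [Nontrivial α] (hreach : ∀ u v, ReflTransGen adj u v)
    (v w : α) : ∃ a b, IsMaximalSafeArc adj v w a b := by
  obtain ⟨a, b, h⟩ := exists_isSafeArc hreach v w
  obtain ⟨⟨a, b⟩, hmax⟩ := Set.Finite.exists_maximalFor
    (fun e : α × α => {t | ReflTransGen (deleteArc adj e.1 e.2) w t})
    {e : α × α | IsSafeArc adj v w e.1 e.2} (Set.toFinite _) ⟨(a, b), h⟩
  exact ⟨a, b, hmax⟩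

theorem IsMaximalSafeArc.not_reflTransGen_deleteArc (hmax : IsMaximalSafeArc adj v w a b)
    (hreach : ∀ u v, ReflTransGen adj u v) (hx : ¬ReflTransGen (deleteArc adj a b) w x)
    (hxy : adj x y) (hyw : y ≠ w) : ¬ReflTransGen (deleteArc adj x y) x v := by
  intro hxv
  have hsafe : IsSafeArc adj v w x y :=
    ⟨hxy, hyw, fun u _ => reflTransGen_deleteArc_of_reflTransGen hxv (hreach u v)⟩
  have hsub : {t | ReflTransGen (deleteArc adj a b) w t} ≤
      {t | ReflTransGen (deleteArc adj x y) w t} :=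
    fun _ ht => reflTransGen_deleteArc_of_not_reflTransGen_source hx ht
  have ha : ReflTransGen (deleteArc adj a b) w a := reflTransGen_deleteArc_to_source (hreach w a)
  have hb : ReflTransGen (deleteArc adj x y) w b :=
    (hsub ha).tail ⟨hmax.1.1, by rintro ⟨rfl, -⟩; exact hx ha⟩
  have hb' : ¬ReflTransGen (deleteArc adj a b) w b :=
    fun h => hx (reflTransGen_deleteArc_of_reflTransGen_target h (hreach w x))
  exact hb' (hmax.2 (j := (x, y)) hsafe hsub hb)

theorem IsMaximalSafeArc.eq_of_adj_of_adj (hmax : IsMaximalSafeArc adj v w a b)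
    (hreach : ∀ u v, ReflTransGen adj u v) (hz : ¬ReflTransGen (deleteArc adj a b) w z)
    {c c' : α} (hc : adj c z) (hc' : adj c' z) : c = c' := by
  obtain ⟨-, hbw, hsafe⟩ := hmax.1
  obtain ⟨P, hP, hnd, hhead, hlast⟩ := List.exists_nodup_isChain_of_reflTransGen (hsafe b hbw)
  have hzw : z ≠ w := fun h => hz (h ▸ .refl)
  have hnext : ∀ i x y, P[i]? = some x → ¬ReflTransGen (deleteArc adj a b) w x → adj x y →
      y ≠ w → P[i + 1]? = some y := fun i x y hi hx hxy hyw =>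
    (hP.imp fun _ _ h => h.1).getElem?_succ_eq_of_not_reflTransGen_deleteArc hnd hlast hi
      (hmax.not_reflTransGen_deleteArc hreach hx hxy hyw)
  have hon : ∀ t, ReflTransGen (fun p q => adj p q ∧ ¬ReflTransGen (deleteArc adj a b) w p ∧
      ¬ReflTransGen (deleteArc adj a b) w q) b t → ∃ i : ℕ, P[i]? = some t := by
    intro t ht
    induction ht with
    | refl => exact ⟨0, by rwa [← List.head?_eq_getElem?]⟩
    | @tail p q _ hpq ih =>
      obtain ⟨i, hi⟩ := ih
      exact ⟨i + 1, hnext i p q hi hpq.2.1 hpq.1 fun h => hpq.2.2 (h ▸ .refl)⟩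
  have hpred : ∀ p, adj p z → (p = a ∧ P[0]? = some z) ∨
      ∃ i : ℕ, P[i]? = some p ∧ P[i + 1]? = some z := by
    intro p hp
    by_cases hpU : ReflTransGen (deleteArc adj a b) w p
    · by_cases h : p = a ∧ z = b
      · exact .inl ⟨h.1, by rwa [h.2, ← List.head?_eq_getElem?]⟩
      · exact absurd (hpU.tail ⟨hp, h⟩) hz
    · obtain ⟨i, hi⟩ :=
        hon p (reflTransGen_outside_of_not_reflTransGen_deleteArc (hreach w p) hpU)
      exact .inr ⟨i, hi, hnext i p z hi hpU hp hzw⟩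
  have hidx : ∀ i j : ℕ, P[i]? = some z → P[j]? = some z → i = j := fun i j hi hj =>
    (List.getElem?_inj (List.getElem?_eq_some_iff.1 hi).1 hnd).1 (hi.trans hj.symm)
  rcases hpred c hc with ⟨rfl, h0⟩ | ⟨i, hci, hzi⟩ <;>
    rcases hpred c' hc' with ⟨rfl, h0'⟩ | ⟨j, hcj, hzj⟩
  · rfl
  · exact absurd (hidx _ _ h0 hzj) (by omega)
  · exact absurd (hidx _ _ h0' hzi) (by omega)
  · obtain rfl : i = j := by have := hidx _ _ hzi hzj; omega
    exact Option.some_inj.1 (hci.symm.trans hcj)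

theorem IsMaximalSafeArc.card_filter_adj_eq_one [Fintype α] [DecidableRel adj]
    (hmax : IsMaximalSafeArc adj v w a b) (hreach : ∀ u v, ReflTransGen adj u v)
    (hz : ¬ReflTransGen (deleteArc adj a b) w z) :
    (Finset.univ.filter (fun j => adj j z)).card = 1 := by
  obtain ⟨c, hc⟩ : ∃ c, adj c z := by
    obtain ⟨c, -, hc⟩ := (hreach w z).cases_tail.resolve_left fun h => hz (h ▸ .refl)
    exact ⟨c, hc⟩
  rw [Finset.card_eq_one_iff_existsUnique]
  exact ⟨c, by simpa using hc, fun c' hc' =>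
    hmax.eq_of_adj_of_adj hreach hz (by simpa using hc') hc⟩

end SafeArc

theorem stmt11_general (n : ℕ) (adj : Fin n → Fin n → Prop) [DecidableRel adj]
    (hn : 2 ≤ n) (hstrong : ∀ u v, Relation.ReflTransGen adj u v)
    (v w : Fin n) :
    ∃ a b, adj a b ∧ b ≠ w ∧
      (∀ u, u ≠ w →
        Relation.ReflTransGen (fun p q => adj p q ∧ ¬(p = a ∧ q = b)) u v) ∧
      (∀ u,
        Relation.ReflTransGen (fun p q => adj p q ∧ ¬(p = a ∧ q = b)) w u ∨
        ∃ P : List (Fin n), P.Chain' adj ∧ P.Nodup ∧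
          P.head? = some w ∧ P.getLast? = some u ∧
          ∃ k : ℕ, P[k]? = some a ∧ P[k + 1]? = some b ∧
            ∀ m, k + 1 ≤ m → ∀ x, P[m]? = some x →
              (Finset.univ.filter (fun j => adj j x)).card = 1) := by
  have : Nontrivial (Fin n) := Fin.nontrivial_iff_two_le.2 hn
  obtain ⟨a, b, hmax⟩ := exists_isMaximalSafeArc hstrong v w
  obtain ⟨hab, hbw, hsafe⟩ := hmax.1
  refine ⟨a, b, hab, hbw, hsafe, fun u => or_iff_not_imp_left.2 fun hu => ?_⟩
  have hb : ¬ReflTransGen (deleteArc adj a b) w b :=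
    fun h => hu (reflTransGen_deleteArc_of_reflTransGen_target h (hstrong w u))
  obtain ⟨P, hP, hnd, hhead, hlast, k, hka, hkb, hin⟩ := List.exists_nodup_isChain_through
    (S := fun t => ReflTransGen (deleteArc adj a b) w t) .refl
    (ReflTransGen.mono (fun _ _ h => ⟨h.1.1, h.2⟩) _ _
      (reflTransGen_deleteArc_to_source (b := b) (hstrong w a)).restrict_reachable) hab hb
    (ReflTransGen.mono (fun _ _ h => ⟨h.1, h.2.2⟩) _ _
      (reflTransGen_outside_of_not_reflTransGen_deleteArc (hstrong w u) hu))
  exact ⟨P, hP, hnd, hhead, hlast, k, hka, hkb, fun m hm x hx =>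
    hmax.card_filter_adj_eq_one hstrong (hin m hm x hx)⟩

/-- every arc `(v,w)` of a strongly connected digraph with at least two vertices
has a good arc `(a,b)`: `b ≠ w`, from every `u ≠ w` one can reach `v` avoiding `(a,b)`, and
every `u` is reachable from `w` either avoiding `(a,b)`, or along a path containing `(a,b)`
all of whose vertices from `b` onward have in-degree one. -/
theorem stmt11 (n : ℕ) (adj : Fin n → Fin n → Prop) [DecidableRel adj]
    (hn : 2 ≤ n) (hstrong : ∀ u v, Relation.ReflTransGen adj u v)
    (v w : Fin n) (hvw : adj v w) :
    ∃ a b, adj a b ∧ b ≠ w ∧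
      (∀ u, u ≠ w →
        Relation.ReflTransGen (fun p q => adj p q ∧ ¬(p = a ∧ q = b)) u v) ∧
      (∀ u,
        Relation.ReflTransGen (fun p q => adj p q ∧ ¬(p = a ∧ q = b)) w u ∨
        ∃ P : List (Fin n), P.Chain' adj ∧ P.Nodup ∧
          P.head? = some w ∧ P.getLast? = some u ∧
          ∃ k : ℕ, P[k]? = some a ∧ P[k + 1]? = some b ∧
            ∀ m, k + 1 ≤ m → ∀ x, P[m]? = some x →
              (Finset.univ.filter (fun j => adj j x)).card = 1) :=
  stmt11_general n adj hn hstrong v w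
end
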